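/- arXiv:math/0509181 — 7 statements merged into one kernel-verified Lean document; each statement's English description precedes it below -/
import Mathlib

section
/- Any restricted real Cauchy matrix is nonsingular. -/
namespace RCM

open Matrix Finset Equiv

/-- The restricted Cauchy matrix. -/
noncomputable def cm {n : ℕ} (a b : Fin n → ℝ) : Matrix (Fin n) (Fin n) ℝ :=
  Matrix.of fun i j => if b j < a i then (a i - b j)⁻¹ else 0

/-- The number of zero entries (as a double sum). -/
noncomputable def zc {n : ℕ} (a b : Fin n → ℝ) : ℕ :=
  ∑ i, ∑ j, if a i < b j then 1 else 0

/-- The middle embedding `Fin k → Fin (k+2)`, `i ↦ i+1`. -/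
def mid {k : ℕ} (i : Fin k) : Fin (k + 2) := i.succ.castSucc

lemma mid_val {k : ℕ} (i : Fin k) : (mid i : ℕ) = i + 1 := rfl

lemma succ_comp_castSucc {k : ℕ} :
    (fun i : Fin k => Fin.succ (Fin.castSucc i)) = mid := by
  funext i; exact Fin.succ_castSucc i

lemma rev_mid {k : ℕ} (i : Fin k) : (mid i).rev = mid i.rev := by
  unfold mid
  rw [Fin.rev_castSucc, Fin.rev_succ, Fin.succ_castSucc]

section Equivs

/-- `Fin m ⊕ Fin 1 ≃ Fin (m+1)` splitting off the last element. -/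
noncomputable def eLast (m : ℕ) : Fin m ⊕ Fin 1 ≃ Fin (m + 1) :=
  Equiv.ofBijective (Sum.elim Fin.castSucc fun _ => Fin.last m) (by
    constructor
    · rintro (i | i) (j | j) h <;> simp only [Sum.elim_inl, Sum.elim_inr] at h
      · exact congrArg Sum.inl (Fin.castSucc_injective _ h)
      · exact absurd h (Fin.castSucc_lt_last i).ne
      · exact absurd h.symm (Fin.castSucc_lt_last j).ne
      · exact congrArg Sum.inr (Subsingleton.elim i j)
    · intro t
      by_cases h : t = Fin.last m
      · exact ⟨Sum.inr 0, h.symm⟩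
      · exact ⟨Sum.inl (t.castPred h), Fin.castSucc_castPred t h⟩)

@[simp] lemma eLast_inl {m : ℕ} (i : Fin m) : eLast m (Sum.inl i) = i.castSucc := rfl
@[simp] lemma eLast_inr {m : ℕ} (x : Fin 1) : eLast m (Sum.inr x) = Fin.last m := rfl

/-- `Fin 1 ⊕ Fin m ≃ Fin (m+1)` splitting off the first element. -/
noncomputable def eFirst (m : ℕ) : Fin 1 ⊕ Fin m ≃ Fin (m + 1) :=
  Equiv.ofBijective (Sum.elim (fun _ => 0) Fin.succ) (by
    constructor
    · rintro (i | i) (j | j) h <;> simp only [Sum.elim_inl, Sum.elim_inr] at h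
      · exact congrArg Sum.inl (Subsingleton.elim i j)
      · exact absurd h.symm (Fin.succ_ne_zero j)
      · exact absurd h (Fin.succ_ne_zero i)
      · exact congrArg Sum.inr (Fin.succ_injective _ h)
    · intro t
      by_cases h : t = 0
      · exact ⟨Sum.inl 0, h.symm⟩
      · exact ⟨Sum.inr (t.pred h), Fin.succ_pred t h⟩)

@[simp] lemma eFirst_inl {m : ℕ} (x : Fin 1) : eFirst m (Sum.inl x) = 0 := rfl
@[simp] lemma eFirst_inr {m : ℕ} (i : Fin m) : eFirst m (Sum.inr i) = i.succ := rfl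

/-- `Fin m ⊕ Fin 1 ≃ Fin (m+1)`, sending `inl i` to `i+1` and `inr` to `0`. -/
noncomputable def eMix (m : ℕ) : Fin m ⊕ Fin 1 ≃ Fin (m + 1) :=
  Equiv.ofBijective (Sum.elim Fin.succ fun _ => 0) (by
    constructor
    · rintro (i | i) (j | j) h <;> simp only [Sum.elim_inl, Sum.elim_inr] at h
      · exact congrArg Sum.inl (Fin.succ_injective _ h)
      · exact absurd h (Fin.succ_ne_zero i)
      · exact absurd h.symm (Fin.succ_ne_zero j)
      · exact congrArg Sum.inr (Subsingleton.elim i j)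
    · intro t
      by_cases h : t = 0
      · exact ⟨Sum.inr 0, h.symm⟩
      · exact ⟨Sum.inl (t.pred h), Fin.succ_pred t h⟩)

@[simp] lemma eMix_inl {m : ℕ} (i : Fin m) : eMix m (Sum.inl i) = i.succ := rfl
@[simp] lemma eMix_inr {m : ℕ} (x : Fin 1) : eMix m (Sum.inr x) = 0 := rfl

/-- corner map for the 2-bordered decomposition -/
def corner {k : ℕ} (r : Fin 2) : Fin (k + 2) := if r = 0 then 0 else Fin.last (k + 1)

/-- `Fin k ⊕ Fin 2 ≃ Fin (k+2)`: middle + two corners. -/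
noncomputable def eCorner (k : ℕ) : Fin k ⊕ Fin 2 ≃ Fin (k + 2) :=
  Equiv.ofBijective (Sum.elim mid corner) (by
    constructor
    · rintro (i | r) (j | s) h <;> simp only [Sum.elim_inl, Sum.elim_inr] at h
      · refine congrArg Sum.inl (Fin.ext ?_)
        have := congrArg Fin.val h
        simpa [mid_val] using this
      · exfalso
        have := congrArg Fin.val h
        fin_cases s <;> simp [corner, mid_val, Fin.last] at this <;> omega
      · exfalso
        have := congrArg Fin.val h
        fin_cases r <;> simp [corner, mid_val, Fin.last] at this <;> omega
      · refine congrArg Sum.inr ?_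
        have := congrArg Fin.val h
        fin_cases r <;> fin_cases s <;> simp [corner, Fin.last] at this ⊢ <;> omega
    · intro t
      by_cases h0 : t = 0
      · exact ⟨Sum.inr 0, by simp [corner, h0.symm]⟩
      · by_cases hl : t = Fin.last (k + 1)
        · exact ⟨Sum.inr 1, by simp [corner, hl.symm]⟩
        · have h1 : (t : ℕ) ≠ 0 := fun h => h0 (Fin.ext h)
          have h2 : (t : ℕ) ≠ k + 1 := fun h => hl (Fin.ext h)
          have h3 : (t : ℕ) - 1 < k := by have := t.isLt; omega
          exact ⟨Sum.inl ⟨(t : ℕ) - 1, h3⟩, by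
            apply Fin.ext; simp only [Sum.elim_inl, mid_val]; omega⟩)

@[simp] lemma eCorner_inl {k : ℕ} (i : Fin k) : eCorner k (Sum.inl i) = mid i := rfl
@[simp] lemma eCorner_inr {k : ℕ} (r : Fin 2) : eCorner k (Sum.inr r) = corner r := rfl

end Equivs

section Border

lemma mul3_apply {ι₁ ι₂ ι₃ : Type*} [Fintype ι₂]
    (C : Matrix ι₁ ι₂ ℝ) (A : Matrix ι₂ ι₂ ℝ) (B : Matrix ι₂ ι₃ ℝ) (r : ι₁) (c : ι₃) :
    (C * A * B) r c = (fun j => C r j) ⬝ᵥ A *ᵥ (fun i => B i c) := by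
  simp only [Matrix.mul_apply, Matrix.mulVec, dotProduct, Finset.sum_mul,
    Finset.mul_sum, mul_assoc]
  exact Finset.sum_comm

lemma dot_inv_transpose {k : ℕ} (A : Matrix (Fin k) (Fin k) ℝ) (x y : Fin k → ℝ) :
    x ⬝ᵥ Aᵀ⁻¹ *ᵥ y = y ⬝ᵥ A⁻¹ *ᵥ x := by
  rw [← Matrix.transpose_nonsing_inv, Matrix.mulVec_transpose, dotProduct_comm,
    Matrix.dotProduct_mulVec]

/-- Determinant by a 1×1 Schur complement at the bottom-right corner. -/
lemma borderLast {m : ℕ} (N : Matrix (Fin (m + 1)) (Fin (m + 1)) ℝ)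
    (hA : (N.submatrix Fin.castSucc Fin.castSucc).det ≠ 0) :
    N.det = (N.submatrix Fin.castSucc Fin.castSucc).det *
      (N (Fin.last m) (Fin.last m) -
        (fun j => N (Fin.last m) j.castSucc) ⬝ᵥ
          (N.submatrix Fin.castSucc Fin.castSucc)⁻¹ *ᵥ fun i => N i.castSucc (Fin.last m)) := by
  set A := N.submatrix Fin.castSucc Fin.castSucc with hAdef
  haveI : Invertible A := A.invertibleOfIsUnitDet (isUnit_iff_ne_zero.mpr hA)
  have he : N.submatrix (eLast m) (eLast m) = Matrix.fromBlocks A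
      (Matrix.of fun i (_ : Fin 1) => N i.castSucc (Fin.last m))
      (Matrix.of fun (_ : Fin 1) j => N (Fin.last m) j.castSucc)
      (Matrix.of fun (_ : Fin 1) (_ : Fin 1) => N (Fin.last m) (Fin.last m)) := by
    ext i j
    rcases i with i | i <;> rcases j with j | j <;> rfl
  have h1 : N.det = (N.submatrix (eLast m) (eLast m)).det :=
    (Matrix.det_submatrix_equiv_self _ _).symm
  rw [h1, he, Matrix.det_fromBlocks₁₁, Matrix.det_fin_one, Matrix.invOf_eq_nonsing_inv]
  congr 1
  rw [Matrix.sub_apply, mul3_apply]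
  rfl

/-- Determinant by a 1×1 Schur complement at the top-left corner. -/
lemma borderFirst {m : ℕ} (N : Matrix (Fin (m + 1)) (Fin (m + 1)) ℝ)
    (hA : (N.submatrix Fin.succ Fin.succ).det ≠ 0) :
    N.det = (N.submatrix Fin.succ Fin.succ).det *
      (N 0 0 -
        (fun j => N 0 j.succ) ⬝ᵥ
          (N.submatrix Fin.succ Fin.succ)⁻¹ *ᵥ fun i => N i.succ 0) := by
  set A := N.submatrix Fin.succ Fin.succ with hAdef
  haveI : Invertible A := A.invertibleOfIsUnitDet (isUnit_iff_ne_zero.mpr hA)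
  have he : N.submatrix (eFirst m) (eFirst m) = Matrix.fromBlocks
      (Matrix.of fun (_ : Fin 1) (_ : Fin 1) => N 0 0)
      (Matrix.of fun (_ : Fin 1) j => N 0 j.succ)
      (Matrix.of fun i (_ : Fin 1) => N i.succ 0)
      A := by
    ext i j
    rcases i with i | i <;> rcases j with j | j <;> rfl
  have h1 : N.det = (N.submatrix (eFirst m) (eFirst m)).det :=
    (Matrix.det_submatrix_equiv_self _ _).symm
  rw [h1, he, Matrix.det_fromBlocks₂₂, Matrix.det_fin_one, Matrix.invOf_eq_nonsing_inv]
  congr 1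
  rw [Matrix.sub_apply, mul3_apply]
  rfl

noncomputable def mixSign (m : ℕ) : ℝ :=
  ((Equiv.Perm.sign ((eMix m).trans (eLast m).symm) : ℤ) : ℝ)

lemma mixSign_sq {m : ℕ} : mixSign m * mixSign m = 1 := by
  unfold mixSign
  rw [← Int.cast_mul, ← Units.val_mul, Int.units_mul_self, Units.val_one, Int.cast_one]

/-- Determinant by a 1×1 Schur complement at the bottom-left corner (with sign). -/
lemma borderMix {m : ℕ} (N : Matrix (Fin (m + 1)) (Fin (m + 1)) ℝ)
    (hA : (N.submatrix Fin.castSucc Fin.succ).det ≠ 0) :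
    N.det = mixSign m * (N.submatrix Fin.castSucc Fin.succ).det *
      (N (Fin.last m) 0 -
        (fun j => N (Fin.last m) j.succ) ⬝ᵥ
          (N.submatrix Fin.castSucc Fin.succ)⁻¹ *ᵥ fun i => N i.castSucc 0) := by
  set A := N.submatrix Fin.castSucc Fin.succ with hAdef
  haveI : Invertible A := A.invertibleOfIsUnitDet (isUnit_iff_ne_zero.mpr hA)
  have he : N.submatrix (eLast m) (eMix m) = Matrix.fromBlocks A
      (Matrix.of fun i (_ : Fin 1) => N i.castSucc 0)
      (Matrix.of fun (_ : Fin 1) j => N (Fin.last m) j.succ)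
      (Matrix.of fun (_ : Fin 1) (_ : Fin 1) => N (Fin.last m) 0) := by
    ext i j
    rcases i with i | i <;> rcases j with j | j <;> rfl
  have hperm : N.submatrix (eLast m) (eMix m) =
      (N.submatrix (eLast m) (eLast m)).submatrix id ((eMix m).trans (eLast m).symm) := by
    ext i j
    simp [Matrix.submatrix_apply]
  have h2 : (N.submatrix (eLast m) (eMix m)).det =
      mixSign m * N.det := by
    rw [hperm, Matrix.det_permute' (((eMix m).trans (eLast m).symm)),
      Matrix.det_submatrix_equiv_self]
    rfl
  have h3 : (N.submatrix (eLast m) (eMix m)).det = A.det *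
      (N (Fin.last m) 0 -
        (fun j => N (Fin.last m) j.succ) ⬝ᵥ A⁻¹ *ᵥ fun i => N i.castSucc 0) := by
    rw [he, Matrix.det_fromBlocks₁₁, Matrix.det_fin_one, Matrix.invOf_eq_nonsing_inv]
    congr 1
    rw [Matrix.sub_apply, mul3_apply]
    rfl
  have h4 := h3.symm.trans h2
  calc N.det = (mixSign m * mixSign m) * N.det := by rw [mixSign_sq, one_mul]
  _ = mixSign m * (mixSign m * N.det) := by ring
  _ = _ := by rw [← h4]; ring

/-- Desnanot–Jacobi identity (case of invertible interior). -/
lemma dj {k : ℕ} (M : Matrix (Fin (k + 2)) (Fin (k + 2)) ℝ)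
    (hA : (M.submatrix mid mid).det ≠ 0) :
    M.det * (M.submatrix mid mid).det =
      (M.submatrix Fin.castSucc Fin.castSucc).det * (M.submatrix Fin.succ Fin.succ).det -
      (M.submatrix Fin.succ Fin.castSucc).det * (M.submatrix Fin.castSucc Fin.succ).det := by
  set A := M.submatrix mid mid with hAdef
  haveI : Invertible A := A.invertibleOfIsUnitDet (isUnit_iff_ne_zero.mpr hA)
  have hcomp : (Fin.succ ∘ Fin.castSucc : Fin k → Fin (k + 2)) = mid :=
    funext fun i => Fin.succ_castSucc i
  set L := Fin.last (k + 1) with hlst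
  set rF : Fin k → ℝ := fun j => M 0 (mid j) with hrF
  set rL : Fin k → ℝ := fun j => M L (mid j) with hrL
  set cF : Fin k → ℝ := fun i => M (mid i) 0 with hcF
  set cL : Fin k → ℝ := fun i => M (mid i) L with hcL
  set T00 : ℝ := M 0 0 - rF ⬝ᵥ A⁻¹ *ᵥ cF with hT00
  set TLL : ℝ := M L L - rL ⬝ᵥ A⁻¹ *ᵥ cL with hTLL
  set T0L : ℝ := M 0 L - rF ⬝ᵥ A⁻¹ *ᵥ cL with hT0L
  set TL0 : ℝ := M L 0 - rL ⬝ᵥ A⁻¹ *ᵥ cF with hTL0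
  -- the (n-1)-minor keeping the first row/column
  have h2 : (M.submatrix Fin.castSucc Fin.castSucc).det = A.det * T00 := by
    have e2 : (M.submatrix Fin.castSucc Fin.castSucc).submatrix Fin.succ Fin.succ = A := rfl
    have h := borderFirst (M.submatrix Fin.castSucc Fin.castSucc) (by rw [e2]; exact hA)
    rw [e2] at h
    exact h
  -- the (n-1)-minor keeping the last row/column
  have h1 : (M.submatrix Fin.succ Fin.succ).det = A.det * TLL := by
    have e1 : (M.submatrix Fin.succ Fin.succ).submatrix Fin.castSucc Fin.castSucc = A := by
      rw [Matrix.submatrix_submatrix, hcomp, hAdef]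
    have h := borderLast (M.submatrix Fin.succ Fin.succ) (by rw [e1]; exact hA)
    rw [e1] at h
    simp only [Matrix.submatrix_apply, Fin.succ_castSucc, Fin.succ_last] at h
    exact h
  -- the (n-1)-minor keeping the last row and first column
  have h3 : (M.submatrix Fin.succ Fin.castSucc).det = mixSign k * A.det * TL0 := by
    have e3 : (M.submatrix Fin.succ Fin.castSucc).submatrix Fin.castSucc Fin.succ = A := by
      rw [Matrix.submatrix_submatrix, hcomp, hAdef]
      rfl
    have h := borderMix (M.submatrix Fin.succ Fin.castSucc) (by rw [e3]; exact hA)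
    rw [e3] at h
    simp only [Matrix.submatrix_apply, Fin.succ_castSucc, Fin.succ_last,
      Fin.castSucc_zero] at h
    exact h
  -- the (n-1)-minor keeping the first row and last column, via the transpose
  have h4 : (M.submatrix Fin.castSucc Fin.succ).det = mixSign k * A.det * T0L := by
    have hT : (M.submatrix Fin.castSucc Fin.succ).det =
        (Mᵀ.submatrix Fin.succ Fin.castSucc).det := by
      rw [← Matrix.det_transpose (M.submatrix Fin.castSucc Fin.succ),
        Matrix.transpose_submatrix]
    have e4 : (Mᵀ.submatrix Fin.succ Fin.castSucc).submatrix Fin.castSucc Fin.succ = Aᵀ := by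
      rw [Matrix.submatrix_submatrix, hcomp, ← Matrix.transpose_submatrix, hAdef]
      rfl
    have h := borderMix (Mᵀ.submatrix Fin.succ Fin.castSucc)
      (by rw [e4, Matrix.det_transpose]; exact hA)
    rw [e4] at h
    simp only [Matrix.submatrix_apply, Fin.succ_castSucc, Fin.succ_last,
      Fin.castSucc_zero, Matrix.transpose_apply] at h
    rw [hT, h, Matrix.det_transpose, dot_inv_transpose]
    rfl
  -- the master 2×2-bordered formula
  have he5 : M.submatrix (eCorner k) (eCorner k) = Matrix.fromBlocks A
      (Matrix.of fun i r => M (mid i) (corner r))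
      (Matrix.of fun r j => M (corner r) (mid j))
      (Matrix.of fun r s => M (corner r) (corner s)) := by
    ext i j; rcases i with i | r <;> rcases j with j | s <;> rfl
  have h5 : M.det = A.det * (T00 * TLL - T0L * TL0) := by
    rw [← Matrix.det_submatrix_equiv_self (eCorner k) M, he5, Matrix.det_fromBlocks₁₁,
      Matrix.invOf_eq_nonsing_inv, Matrix.det_fin_two]
    congr 1
    rw [Matrix.sub_apply, Matrix.sub_apply, Matrix.sub_apply, Matrix.sub_apply,
      mul3_apply, mul3_apply, mul3_apply, mul3_apply]
    have c0 : (corner 0 : Fin (k + 2)) = 0 := rfl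
    have c1 : (corner 1 : Fin (k + 2)) = L := rfl
    simp only [Matrix.of_apply, c0, c1]
    rfl
  rw [h5, h2, h1, h3, h4]
  have hms := mixSign_sq (m := k)
  linear_combination (A.det * A.det * T0L * TL0) * hms

end Border

section Count

lemma zc_C0 {m : ℕ} (a b : Fin (m + 1) → ℝ) (h0 : ∀ j, ¬ a 0 < b j)
    (h0' : ∀ i, ¬ a i < b 0) :
    zc a b = zc (a ∘ Fin.succ) (b ∘ Fin.succ) := by
  unfold zc
  rw [Fin.sum_univ_succ]
  have hz : (∑ j, if a 0 < b j then (1 : ℕ) else 0) = 0 :=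
    Finset.sum_eq_zero fun j _ => if_neg (h0 j)
  rw [hz, zero_add]
  refine Finset.sum_congr rfl fun i _ => ?_
  rw [Fin.sum_univ_succ, if_neg (h0' _), zero_add]
  rfl

lemma zc_C2 {m : ℕ} (a b : Fin (m + 1) → ℝ) (h0' : ∀ i, ¬ a i < b 0) :
    zc a b = (∑ j, if a (Fin.last m) < b j then 1 else 0) +
      zc (a ∘ Fin.castSucc) (b ∘ Fin.succ) := by
  unfold zc
  rw [Fin.sum_univ_castSucc (f := fun i => ∑ j, if a i < b j then (1 : ℕ) else 0)]
  rw [add_comm]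
  congr 1
  refine Finset.sum_congr rfl fun i _ => ?_
  rw [Fin.sum_univ_succ, if_neg (h0' _), zero_add]
  rfl

end Count

/-- If the staircase condition fails somewhere, the matrix is singular. -/
lemma det_zero_of_bad {n : ℕ} (a b : Fin n → ℝ) (ha : Antitone a) (hb : Monotone b)
    (i0 : Fin n) (hbad : a i0 < b i0.rev) : (cm a b).det = 0 := by
  rw [Matrix.det_apply]
  refine Finset.sum_eq_zero fun sigma _ => ?_
  have hex : ∃ c, i0.rev ≤ c ∧ i0 ≤ sigma c := by
    by_contra hno
    push_neg at hno
    have hmaps : ∀ c ∈ Finset.Ici i0.rev, sigma c ∈ Finset.Iio i0 := by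
      intro c hc
      rw [Finset.mem_Iio]
      exact hno c (Finset.mem_Ici.mp hc)
    have hinj : Set.InjOn sigma (Finset.Ici i0.rev) := fun x _ y _ h => sigma.injective h
    have hcard := Finset.card_le_card_of_injOn sigma hmaps hinj
    rw [Fin.card_Ici, Fin.card_Iio] at hcard
    have h1 : (i0.rev : ℕ) = n - 1 - i0 := by rw [Fin.val_rev]; omega
    have h2 := i0.isLt
    omega
  obtain ⟨c, hc1, hc2⟩ := hex
  have hzero : cm a b (sigma c) c = 0 := by
    have : a (sigma c) < b c :=
      lt_of_le_of_lt (ha hc2) (lt_of_lt_of_le hbad (hb hc1))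
    exact if_neg (not_lt.mpr this.le)
  have := Finset.prod_eq_zero (f := fun i => cm a b (sigma i) i) (Finset.mem_univ c) hzero
  rw [this, smul_zero]

/-- Positivity of the full Cauchy determinant. -/
lemma full_pos {n : ℕ} (a b : Fin n → ℝ) (ha : StrictAnti a) (hb : StrictMono b)
    (hf : ∀ i j, b j < a i) : 0 < (cm a b).det := by
  induction n with
  | zero => simp [cm]
  | succ m ih =>
    set N := cm a b with hN
    set A := N.submatrix Fin.castSucc Fin.castSucc with hA
    set B : Matrix (Fin m) (Fin 1) ℝ := Matrix.of fun i (_ : Fin 1) => N i.castSucc (Fin.last m)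
      with hB
    set C : Matrix (Fin 1) (Fin m) ℝ := Matrix.of fun (_ : Fin 1) j => N (Fin.last m) j.castSucc
      with hC
    set D : Matrix (Fin 1) (Fin 1) ℝ := Matrix.of fun (_ : Fin 1) (_ : Fin 1) =>
      N (Fin.last m) (Fin.last m) with hD
    have he : N.submatrix (eLast m) (eLast m) = Matrix.fromBlocks A B C D := by
      ext i j; rcases i with i | i <;> rcases j with j | j <;> rfl
    have hdlast : N (Fin.last m) (Fin.last m) = (a (Fin.last m) - b (Fin.last m))⁻¹ :=
      if_pos (hf _ _)
    have hdpos : 0 < (a (Fin.last m) - b (Fin.last m))⁻¹ :=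
      inv_pos.mpr (sub_pos.mpr (hf _ _))
    have hdetD : D.det = (a (Fin.last m) - b (Fin.last m))⁻¹ := by
      rw [Matrix.det_fin_one]; exact hdlast
    haveI : Invertible D := D.invertibleOfIsUnitDet
      (by rw [hdetD]; exact isUnit_iff_ne_zero.mpr (ne_of_gt hdpos))
    have hDinv : ⅟D = Matrix.of fun (_ : Fin 1) (_ : Fin 1) =>
        (a (Fin.last m) - b (Fin.last m)) := by
      rw [Matrix.invOf_eq_nonsing_inv, Matrix.inv_def, Matrix.adjugate_fin_one, hdetD]
      ext i j
      rw [Subsingleton.elim j i]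
      simp [Matrix.smul_apply, Matrix.one_apply_eq, inv_inv]
    set u : Fin m → ℝ := fun i =>
      (a (Fin.last m) - a i.castSucc) / (a i.castSucc - b (Fin.last m)) with hu
    set v : Fin m → ℝ := fun j =>
      (b j.castSucc - b (Fin.last m)) / (a (Fin.last m) - b j.castSucc) with hv
    set K := cm (a ∘ Fin.castSucc) (b ∘ Fin.castSucc) with hK
    have hSchur : A - B * ⅟D * C =
        Matrix.of fun i j => u i * (Matrix.of (fun i j => v j * K i j) i j) := by
      ext i j
      simp only [Matrix.sub_apply, Matrix.mul_apply, Fin.sum_univ_one, hDinv, Matrix.of_apply,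
        hA, hB, hC, hK, Matrix.submatrix_apply]
      have e1 : N i.castSucc j.castSucc = (a i.castSucc - b j.castSucc)⁻¹ := if_pos (hf _ _)
      have e2 : N i.castSucc (Fin.last m) = (a i.castSucc - b (Fin.last m))⁻¹ := if_pos (hf _ _)
      have e3 : N (Fin.last m) j.castSucc = (a (Fin.last m) - b j.castSucc)⁻¹ := if_pos (hf _ _)
      have e4 : (cm (a ∘ Fin.castSucc) (b ∘ Fin.castSucc)) i j =
          (a i.castSucc - b j.castSucc)⁻¹ := if_pos (hf _ _)
      rw [e1, e2, e3, e4, hu, hv]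
      have d1 : a i.castSucc - b j.castSucc ≠ 0 := ne_of_gt (sub_pos.mpr (hf _ _))
      have d2 : a i.castSucc - b (Fin.last m) ≠ 0 := ne_of_gt (sub_pos.mpr (hf _ _))
      have d3 : a (Fin.last m) - b j.castSucc ≠ 0 := ne_of_gt (sub_pos.mpr (hf _ _))
      field_simp
      ring
    have hdet : N.det = D.det * ((∏ i, u i) * ((∏ i, v i) * K.det)) := by
      rw [← Matrix.det_submatrix_equiv_self (eLast m) N, he, Matrix.det_fromBlocks₂₂, hSchur,
        Matrix.det_mul_column u, Matrix.det_mul_row v]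
    rw [hdet]
    have hKpos : 0 < K.det :=
      ih (a ∘ Fin.castSucc) (b ∘ Fin.castSucc)
        (ha.comp_strictMono Fin.strictMono_castSucc)
        (hb.comp Fin.strictMono_castSucc) (fun i j => hf _ _)
    have huv : ∀ i : Fin m, 0 < u i * v i := by
      intro i
      have hu1 : u i < 0 := div_neg_of_neg_of_pos
        (sub_neg.mpr (ha (Fin.castSucc_lt_last i)))
        (sub_pos.mpr (hf _ _))
      have hv1 : v i < 0 := div_neg_of_neg_of_pos
        (sub_neg.mpr (hb (Fin.castSucc_lt_last i)))
        (sub_pos.mpr (hf _ _))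
      exact mul_pos_of_neg_of_neg hu1 hv1
    have hprod : (∏ i, u i) * ((∏ i, v i) * K.det) = (∏ i, u i * v i) * K.det := by
      rw [Finset.prod_mul_distrib]; ring
    rw [hprod]
    have hppos : 0 < ∏ i, u i * v i := Finset.prod_pos fun i _ => huv i
    rw [hdetD]
    positivity

theorem main (n : ℕ) : ∀ a b : Fin n → ℝ, StrictAnti a → StrictMono b →
    (∀ i j, a i ≠ b j) → (∀ i : Fin n, b i.rev < a i) →
    0 < (-1 : ℝ) ^ (zc a b) * (cm a b).det := by
  induction n using Nat.strong_induction_on with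
  | _ n IH =>
    rcases n with _ | m
    · intro a b _ _ _ _
      simp [zc, cm]
    · intro a b ha hb hne hab
      have hr0 : ∀ j, ¬ a 0 < b j := by
        intro j
        have h1 : b j ≤ b (Fin.last m) := hb.monotone (Fin.le_last j)
        have h2 : b (Fin.last m) < a 0 := by
          have := hab 0
          rwa [Fin.rev_zero] at this
        exact not_lt.mpr (le_of_lt (lt_of_le_of_lt h1 h2))
      have hc0 : ∀ i, ¬ a i < b 0 := by
        intro i
        have h1 : b 0 ≤ b i.rev := hb.monotone (Fin.zero_le _)
        exact not_lt.mpr (le_of_lt (lt_of_le_of_lt h1 (hab i)))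
      by_cases hfull : b (Fin.last m) < a (Fin.last m)
      · have hf : ∀ i j, b j < a i := fun i j =>
          lt_of_le_of_lt (hb.monotone (Fin.le_last j))
            (lt_of_lt_of_le hfull (ha.antitone (Fin.le_last i)))
        have hz : zc a b = 0 := by
          unfold zc
          refine Finset.sum_eq_zero fun i _ => Finset.sum_eq_zero fun j _ => if_neg ?_
          exact not_lt.mpr (le_of_lt (hf i j))
        rw [hz, pow_zero, one_mul]
        exact full_pos a b ha hb hf
      · have hlast : a (Fin.last m) < b (Fin.last m) :=
          lt_of_le_of_ne (not_lt.mp hfull) (hne _ _)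
        rcases m with _ | k
        · exact absurd (by simpa using hab 0) hfull
        -- n = k + 2 : the truncated case, via Desnanot–Jacobi
        · have haS : StrictAnti (a ∘ Fin.succ) := ha.comp_strictMono Fin.strictMono_succ
          have haC : StrictAnti (a ∘ Fin.castSucc) :=
            ha.comp_strictMono Fin.strictMono_castSucc
          have hbS : StrictMono (b ∘ Fin.succ) := hb.comp Fin.strictMono_succ
          have hbC : StrictMono (b ∘ Fin.castSucc) := hb.comp Fin.strictMono_castSucc
          have hmidmono : StrictMono (mid : Fin k → Fin (k + 2)) :=
            Fin.strictMono_castSucc.comp Fin.strictMono_succ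
          have hamid : StrictAnti (a ∘ mid) := ha.comp_strictMono hmidmono
          have hbmid : StrictMono (b ∘ mid) := hb.comp hmidmono
          have hab_nn : ∀ i : Fin (k + 1), (b ∘ Fin.castSucc) i.rev < (a ∘ Fin.castSucc) i := by
            intro i
            have h := hab i.castSucc
            rw [Fin.rev_castSucc] at h
            exact lt_trans (hb ((Fin.castSucc_lt_succ (i := i.rev)))) h
          have hab_1n : ∀ i : Fin (k + 1), (b ∘ Fin.castSucc) i.rev < (a ∘ Fin.succ) i := by
            intro i
            have h := hab i.succ
            rwa [Fin.rev_succ] at h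
          have hab_n1 : ∀ i : Fin (k + 1), (b ∘ Fin.succ) i.rev < (a ∘ Fin.castSucc) i := by
            intro i
            have h := hab i.castSucc
            rwa [Fin.rev_castSucc] at h
          have hab_mid : ∀ i : Fin k, (b ∘ mid) i.rev < (a ∘ mid) i := by
            intro i
            have h := hab (mid i)
            rwa [rev_mid] at h
          -- zero-count bookkeeping
          have e_z11 : zc a b = zc (a ∘ Fin.succ) (b ∘ Fin.succ) := zc_C0 a b hr0 hc0
          have e_znn : zc (a ∘ Fin.castSucc) (b ∘ Fin.castSucc) = zc (a ∘ mid) (b ∘ mid) :=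
            zc_C0 (a ∘ Fin.castSucc) (b ∘ Fin.castSucc)
              (fun j => by simpa using hr0 j.castSucc)
              (fun i => by simpa using hc0 i.castSucc)
          have h1 := zc_C2 a b hc0
          simp only [Fin.sum_univ_castSucc] at h1
          rw [if_pos hlast] at h1
          have h2 := zc_C2 (a ∘ Fin.succ) (b ∘ Fin.castSucc)
            (fun i => by simpa using hc0 i.succ)
          have hfun : (a ∘ Fin.succ) ∘ Fin.castSucc = a ∘ mid :=
            funext fun i => congrArg a (Fin.succ_castSucc i)
          have hfun2 : (b ∘ Fin.castSucc) ∘ Fin.succ = b ∘ mid := rfl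
          rw [hfun, hfun2] at h2
          simp only [Function.comp_apply, Fin.succ_last, Fin.sum_univ_castSucc, Nat.succ_eq_add_one] at h2
          have key : zc a b + zc (a ∘ mid) (b ∘ mid) =
              zc (a ∘ Fin.succ) (b ∘ Fin.castSucc) +
                zc (a ∘ Fin.castSucc) (b ∘ Fin.succ) + 1 := by omega
          -- induction hypotheses
          have hInner := IH k (by omega) (a ∘ mid) (b ∘ mid) hamid hbmid
            (fun i j => hne _ _) hab_mid
          have hNN := IH (k + 1) (by omega) (a ∘ Fin.castSucc) (b ∘ Fin.castSucc) haC hbC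
            (fun i j => hne _ _) hab_nn
          rw [e_znn] at hNN
          have hM1n := IH (k + 1) (by omega) (a ∘ Fin.succ) (b ∘ Fin.castSucc) haS hbC
            (fun i j => hne _ _) hab_1n
          have hMn1 := IH (k + 1) (by omega) (a ∘ Fin.castSucc) (b ∘ Fin.succ) haC hbS
            (fun i j => hne _ _) hab_n1
          have hM11 : 0 ≤ (-1 : ℝ) ^ (zc a b) * (cm (a ∘ Fin.succ) (b ∘ Fin.succ)).det := by
            by_cases hst : ∀ i : Fin (k + 1), (b ∘ Fin.succ) i.rev < (a ∘ Fin.succ) i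
            · have h := IH (k + 1) (by omega) (a ∘ Fin.succ) (b ∘ Fin.succ) haS hbS
                (fun i j => hne _ _) hst
              rw [e_z11]
              exact le_of_lt h
            · push_neg at hst
              obtain ⟨i0, hi0⟩ := hst
              have hbad : (a ∘ Fin.succ) i0 < (b ∘ Fin.succ) i0.rev :=
                lt_of_le_of_ne hi0 (hne _ _)
              rw [det_zero_of_bad _ _ haS.antitone hbS.monotone i0 hbad, mul_zero]
          -- determinant identities
          have hsub_mid : (cm a b).submatrix mid mid = cm (a ∘ mid) (b ∘ mid) := rfl
          have hdetA_ne : (cm (a ∘ mid) (b ∘ mid)).det ≠ 0 := by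
            intro h
            rw [h, mul_zero] at hInner
            exact lt_irrefl 0 hInner
          have hD := dj (cm a b) (by rw [hsub_mid]; exact hdetA_ne)
          rw [hsub_mid] at hD
          have hs1 : (cm a b).submatrix Fin.castSucc Fin.castSucc =
              cm (a ∘ Fin.castSucc) (b ∘ Fin.castSucc) := rfl
          have hs2 : (cm a b).submatrix Fin.succ Fin.succ =
              cm (a ∘ Fin.succ) (b ∘ Fin.succ) := rfl
          have hs3 : (cm a b).submatrix Fin.succ Fin.castSucc =
              cm (a ∘ Fin.succ) (b ∘ Fin.castSucc) := rfl
          have hs4 : (cm a b).submatrix Fin.castSucc Fin.succ =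
              cm (a ∘ Fin.castSucc) (b ∘ Fin.succ) := rfl
          rw [hs1, hs2, hs3, hs4] at hD
          -- sign bookkeeping and conclusion
          set dM := (cm a b).det with hdM
          set dA := (cm (a ∘ mid) (b ∘ mid)).det with hdA
          set dNN := (cm (a ∘ Fin.castSucc) (b ∘ Fin.castSucc)).det with hdNN
          set d11 := (cm (a ∘ Fin.succ) (b ∘ Fin.succ)).det with hd11
          set d1n := (cm (a ∘ Fin.succ) (b ∘ Fin.castSucc)).det with hd1n
          set dn1 := (cm (a ∘ Fin.castSucc) (b ∘ Fin.succ)).det with hdn1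
          set z0 := zc a b with hz0
          set zA := zc (a ∘ mid) (b ∘ mid) with hzA
          set z1n := zc (a ∘ Fin.succ) (b ∘ Fin.castSucc) with hz1n
          set zn1 := zc (a ∘ Fin.castSucc) (b ∘ Fin.succ) with hzn1
          have hpow : (-1 : ℝ) ^ z0 * (-1) ^ zA = -((-1 : ℝ) ^ z1n * (-1) ^ zn1) := by
            rw [← pow_add, ← pow_add, key, pow_succ]
            ring
          have expand : ((-1 : ℝ) ^ z0 * dM) * ((-1) ^ zA * dA)
              = ((-1) ^ zA * dNN) * ((-1) ^ z0 * d11)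
                + ((-1) ^ z1n * d1n) * ((-1) ^ zn1 * dn1) := by
            linear_combination ((-1 : ℝ) ^ z0 * (-1) ^ zA) * hD + (-(d1n * dn1)) * hpow
          have hgoalmul : 0 < ((-1 : ℝ) ^ z0 * dM) * ((-1) ^ zA * dA) := by
            rw [expand]
            have t1 : 0 ≤ ((-1 : ℝ) ^ zA * dNN) * ((-1) ^ z0 * d11) :=
              mul_nonneg (le_of_lt hNN) hM11
            have t2 : 0 < ((-1 : ℝ) ^ z1n * d1n) * ((-1) ^ zn1 * dn1) := mul_pos hM1n hMn1
            linarith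
          by_contra hcon
          push_neg at hcon
          nlinarith [hInner, hgoalmul]

end RCM

/-- Any restricted real Cauchy matrix is nonsingular. -/
theorem stmt0 (n : ℕ) (a b : Fin n → ℝ)
    (ha : StrictAnti a) (hb : StrictMono b)
    (hab : ∀ i : Fin n, b i.rev < a i)
    (hne : ∀ i j : Fin n, a i ≠ b j) :
    (Matrix.of fun i j : Fin n => if b j < a i then (a i - b j)⁻¹ else 0).det ≠ 0 := by
  have h := RCM.main n a b ha hb hne hab
  intro hdet
  have : (RCM.cm a b).det = 0 := hdet
  rw [this, mul_zero] at h
  exact lt_irrefl 0 h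
end

section
/- The determinant of a restricted real Cauchy matrix M has sign (-1)^{ω(M)}, where ω(M) is the number of zero entries of M: det(M) > 0 if ω(M) is even, and det(M) < 0 if ω(M) is odd. -/
open Matrix Finset

/-- restricted Cauchy matrix -/
private noncomputable def RC (n : ℕ) (a b : Fin n → ℝ) : Matrix (Fin n) (Fin n) ℝ :=
  Matrix.of fun i j => if b j < a i then (a i - b j)⁻¹ else 0

private noncomputable def ZS (n : ℕ) (a b : Fin n → ℝ) : Finset (Fin n × Fin n) :=
  Finset.univ.filter fun p => a p.1 < b p.2

/-- A matrix with a large enough zero block is singular. -/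
private lemma det_zero_of_block {N : ℕ} (M : Matrix (Fin N) (Fin N) ℝ) (S T : Finset (Fin N))
    (hz : ∀ i ∈ S, ∀ j ∈ T, M i j = 0) (hc : N < S.card + T.card) : M.det = 0 := by
  classical
  rw [← Matrix.exists_mulVec_eq_zero_iff]
  set Sc : Finset (Fin N) := Sᶜ with hSc
  have hcard : Fintype.card {j // j ∈ T} > Fintype.card {i // i ∈ Sc} := by
    simp only [Fintype.card_coe]
    have h1 : Sc.card = N - S.card := by
      rw [hSc, Finset.card_compl, Fintype.card_fin]
    have h2 : S.card ≤ N := by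
      simpa using Finset.card_le_card (Finset.subset_univ S)
    omega
  set x : {j // j ∈ T} → ({i // i ∈ Sc} → ℝ) := fun j i => M i.1 j.1 with hx
  have hnli : ¬ LinearIndependent ℝ x := by
    intro h
    have := h.fintype_card_le_finrank
    rw [Module.finrank_pi] at this
    omega
  obtain ⟨g, hg0, j₀, hj₀⟩ := Fintype.not_linearIndependent_iff.mp hnli
  set v : Fin N → ℝ := fun j => if h : j ∈ T then g ⟨j, h⟩ else 0 with hv
  refine ⟨v, ?_, ?_⟩
  · intro hv0
    apply hj₀
    have := congrFun hv0 j₀.1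
    simpa [hv, j₀.2] using this
  · funext i
    have key : (M *ᵥ v) i = ∑ j ∈ T, M i j * v j := by
      simp only [Matrix.mulVec, dotProduct]
      refine (Finset.sum_subset (Finset.subset_univ T) ?_).symm
      intro j _ hj
      simp [hv, hj]
    by_cases hi : i ∈ S
    · rw [key]
      refine Finset.sum_eq_zero fun j hj => by rw [hz i hi j hj, zero_mul]
    · have hi' : i ∈ Sc := by simp [hSc, hi]
      have h0 := congrFun hg0 ⟨i, hi'⟩
      simp only [Finset.sum_apply, Pi.smul_apply, smul_eq_mul, Pi.zero_apply, hx] at h0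
      rw [Pi.zero_apply, key, ← Finset.sum_attach T (fun j => M i j * v j), ← h0,
        Finset.attach_eq_univ]
      refine Finset.sum_congr rfl fun j _ => ?_
      simp [hv, j.2, mul_comm]

private lemma cauchy_det_ne_zero {N : ℕ} (a b : Fin N → ℝ) (ha : Function.Injective a)
    (hb : Function.Injective b) (hne : ∀ i j, a i ≠ b j) :
    (Matrix.of fun i j : Fin N => (a i - b j)⁻¹).det ≠ 0 := by
  classical
  rcases Nat.eq_zero_or_pos N with h0 | hN
  · subst h0; simp [Matrix.det_fin_zero]
  intro hdet
  obtain ⟨v, hv, hmul⟩ := (Matrix.exists_mulVec_eq_zero_iff).mpr hdet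
  set Q : Polynomial ℝ :=
    ∑ j : Fin N, Polynomial.C (v j) * ∏ k ∈ Finset.univ.erase j,
      (Polynomial.X - Polynomial.C (b k)) with hQ
  have hdeg : Q.natDegree < N := by
    have h1 : Q.natDegree ≤ N - 1 := by
      apply Polynomial.natDegree_sum_le_of_forall_le
      intro j _
      refine le_trans (Polynomial.natDegree_mul_le) ?_
      rw [Polynomial.natDegree_C, zero_add]
      refine le_trans (Polynomial.natDegree_prod_le _ _) ?_
      simp [Polynomial.natDegree_X_sub_C, Finset.card_erase_of_mem]
    omega
  have hevala : ∀ i, Q.eval (a i) = 0 := by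
    intro i
    have hP : ∀ j : Fin N, (∏ k ∈ Finset.univ.erase j, (a i - b k))
        = (a i - b j)⁻¹ * ∏ k, (a i - b k) := by
      intro j
      rw [← Finset.mul_prod_erase Finset.univ _ (Finset.mem_univ j),
        inv_mul_cancel_left₀ (sub_ne_zero.mpr (hne i j))]
    have h2 : Q.eval (a i) = ∑ j, v j * ∏ k ∈ Finset.univ.erase j, (a i - b k) := by
      simp [hQ, Polynomial.eval_finset_sum, Polynomial.eval_prod]
    rw [h2]
    have h3 : ∀ j : Fin N, v j * ∏ k ∈ Finset.univ.erase j, (a i - b k)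
        = ((a i - b j)⁻¹ * v j) * ∏ k, (a i - b k) := by
      intro j; rw [hP j]; ring
    rw [Finset.sum_congr rfl fun j _ => h3 j, ← Finset.sum_mul]
    have h4 : ∑ j, (a i - b j)⁻¹ * v j = 0 := by
      have := congrFun hmul i
      simpa [Matrix.mulVec, dotProduct] using this
    rw [h4, zero_mul]
  have hQ0 : Q = 0 :=
    Polynomial.eq_zero_of_natDegree_lt_card_of_eval_eq_zero Q ha hevala
      (by rwa [Fintype.card_fin])
  apply hv
  funext j
  have h5 : Q.eval (b j) = 0 := by rw [hQ0]; simp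
  have h6 : Q.eval (b j) = v j * ∏ k ∈ Finset.univ.erase j, (b j - b k) := by
    have h2 : Q.eval (b j) = ∑ j' , v j' * ∏ k ∈ Finset.univ.erase j', (b j - b k) := by
      simp [hQ, Polynomial.eval_finset_sum, Polynomial.eval_prod]
    rw [h2]
    refine Finset.sum_eq_single j (fun j' _ hj' => ?_) (by simp)
    have : (∏ k ∈ Finset.univ.erase j', (b j - b k)) = 0 :=
      Finset.prod_eq_zero (Finset.mem_erase.mpr ⟨Ne.symm hj', Finset.mem_univ j⟩) (sub_self _)
    rw [this, mul_zero]
  have h7 : (∏ k ∈ Finset.univ.erase j, (b j - b k)) ≠ 0 := by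
    rw [Finset.prod_ne_zero_iff]
    intro k hk
    exact sub_ne_zero.mpr fun h => (Finset.mem_erase.mp hk).1 (hb h.symm)
  have := h5 ▸ h6
  exact (mul_eq_zero.mp this.symm).resolve_right h7

private lemma cauchy_pos : ∀ (N : ℕ) (a b : Fin N → ℝ), StrictAnti a → StrictMono b →
    (∀ i j, b j < a i) → 0 < (Matrix.of fun i j : Fin N => (a i - b j)⁻¹).det := by
  intro N
  induction N with
  | zero => intro a b _ _ _; simp [Matrix.det_fin_zero]
  | succ m IH =>
    intro a b ha hb hba
    classical
    set l : Fin (m + 1) := Fin.last m with hl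
    set β : ℝ := b l with hβ
    set al : ℝ := a l with hal
    have hβal : β < al := hba l l
    set A : ℝ → Fin (m + 1) → ℝ := fun t i => if i = l then t else a i with hA
    set F : ℝ → Matrix (Fin (m + 1)) (Fin (m + 1)) ℝ :=
      fun t => Matrix.of fun i j => (A t i - b j)⁻¹ with hF
    set g : ℝ → ℝ := fun t => (F t).det with hg
    -- basic facts about A t for t ∈ Ioc β al
    have hAlt : ∀ t ∈ Set.Ioc β al, ∀ i j, b j < A t i := by
      intro t ht i j
      by_cases hi : i = l
      · rw [hA]; simp only [hi, if_pos rfl]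
        exact lt_of_le_of_lt (hb.monotone (Fin.le_last j)) ht.1
      · rw [hA]; simp only [if_neg hi]; exact hba i j
    have hAanti : ∀ t ∈ Set.Ioc β al, StrictAnti (A t) := by
      intro t ht i j hij
      by_cases hj : j = l
      · subst hj
        have hil : i ≠ l := ne_of_lt hij
        rw [hA]; simp only [if_neg hil, if_pos rfl]
        exact lt_of_le_of_lt ht.2 (ha hij)
      · have hil : i ≠ l := by
          intro h; subst h; exact hj (Fin.last_le_iff.mp hij.le)
        rw [hA]; simp only [if_neg hil, if_neg hj]
        exact ha hij
    have hgne : ∀ t ∈ Set.Ioc β al, g t ≠ 0 := by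
      intro t ht
      exact cauchy_det_ne_zero (A t) b (hAanti t ht).injective hb.injective
        (fun i j => (hAlt t ht i j).ne')
    -- continuity of g on [t₀, al] for t₀ > β
    have hcont : ∀ t₀, β < t₀ → ContinuousOn g (Set.Icc t₀ al) := by
      intro t₀ ht₀
      have hFc : ContinuousOn F (Set.Icc t₀ al) := by
        apply continuousOn_pi.mpr; intro i
        apply continuousOn_pi.mpr; intro j
        by_cases hi : i = l
        · have : (fun t => F t i j) = fun t => (t - b j)⁻¹ := by
            funext t; rw [hF, hA]; simp [hi]
          rw [this]
          apply ContinuousOn.inv₀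
          · exact (continuousOn_id.sub continuousOn_const)
          · intro t ht
            have : b j ≤ β := hb.monotone (Fin.le_last j)
            have : b j < t := lt_of_le_of_lt this (lt_of_lt_of_le ht₀ ht.1)
            exact sub_ne_zero.mpr this.ne'
        · have : (fun t => F t i j) = fun t => (a i - b j)⁻¹ := by
            funext t; rw [hF, hA]; simp [hi]
          rw [this]; exact continuousOn_const
      exact (continuous_id.matrix_det).comp_continuousOn hFc
    -- the auxiliary matrix H
    set H : ℝ → Matrix (Fin (m + 1)) (Fin (m + 1)) ℝ := fun t =>
      Matrix.of fun i j => if i = l then (if j = l then (1 : ℝ) else (t - b j)⁻¹ * (t - β))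
        else (a i - b j)⁻¹ with hH
    have hAl : ∀ t, A t l = t := by intro t; rw [hA]; simp
    have hAnl : ∀ t i, i ≠ l → A t i = a i := by intro t i hi; rw [hA]; simp [hi]
    have hHg : ∀ t, β < t → (H t).det = (t - β) * g t := by
      intro t ht
      have heq : H t = Matrix.updateRow (F t) l ((t - β) • (F t l)) := by
        ext i j
        rw [Matrix.updateRow_apply]
        by_cases hi : i = l
        · rw [if_pos hi, hi]
          by_cases hj : j = l
          · rw [hj]
            have e1 : H t l l = 1 := by rw [hH]; simp
            rw [e1, Pi.smul_apply, smul_eq_mul, hF]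
            simp only [Matrix.of_apply, hAl]
            rw [← hβ, mul_inv_cancel₀ (sub_ne_zero.mpr ht.ne')]
          · have e1 : H t l j = (t - b j)⁻¹ * (t - β) := by rw [hH]; simp [hj]
            rw [e1, Pi.smul_apply, smul_eq_mul, hF]
            simp only [Matrix.of_apply, hAl]
            ring
        · rw [if_neg hi]
          have e1 : H t i j = (a i - b j)⁻¹ := by rw [hH]; simp [hi]
          rw [e1, hF]
          simp only [Matrix.of_apply, hAnl t i hi]
      rw [heq, Matrix.det_updateRow_smul, Matrix.updateRow_eq_self]
    -- H is continuous at β with positive value there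
    have hHb : (H β).det = (Matrix.of fun i j : Fin m =>
        (a (Fin.castSucc i) - b (Fin.castSucc j))⁻¹).det := by
      rw [Matrix.det_succ_row (H β) l]
      rw [Finset.sum_eq_single l]
      · have h1 : H β l l = 1 := by rw [hH]; simp
        have h2 : ((-1 : ℝ)) ^ ((l : ℕ) + (l : ℕ)) = 1 := Even.neg_one_pow ⟨(l : ℕ), rfl⟩
        rw [h1, h2, one_mul, one_mul]
        congr 1
        ext i j
        have hi : (l.succAbove i) ≠ l := by
          rw [hl, Fin.succAbove_last]
          exact (Fin.castSucc_lt_last i).ne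
        rw [Matrix.submatrix_apply, hH]
        simp only [Matrix.of_apply, if_neg hi]
        rw [hl, Fin.succAbove_last]
      · intro j _ hj
        have h0 : H β l j = 0 := by
          rw [hH]
          simp only [Matrix.of_apply, if_pos rfl, if_neg hj, ← hβ, sub_self, mul_zero, if_true,
            eq_self_iff_true]
        rw [h0]; ring
      · simp
    have hcof : 0 < (H β).det := by
      rw [hHb]
      exact IH _ _ (fun i j hij => ha (Fin.castSucc_lt_castSucc_iff.mpr hij))
        (fun i j hij => hb (Fin.castSucc_lt_castSucc_iff.mpr hij))
        (fun i j => hba _ _)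
    have hHcont : ContinuousAt (fun t => (H t).det) β := by
      apply ContinuousAt.comp (Continuous.continuousAt (continuous_id.matrix_det))
      apply continuousAt_pi.mpr; intro i
      apply continuousAt_pi.mpr; intro j
      by_cases hi : i = l
      · by_cases hj : j = l
        · have : (fun t => H t i j) = fun _ => (1 : ℝ) := by
            funext t; rw [hH]; simp [hi, hj]
          rw [this]; exact continuousAt_const
        · have : (fun t => H t i j) = fun t => (t - b j)⁻¹ * (t - β) := by
            funext t; rw [hH]; simp [hi, hj]
          rw [this]
          apply ContinuousAt.mul
          · apply ContinuousAt.inv₀ (by fun_prop)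
            have hjl : j < l := lt_of_le_of_ne (Fin.le_last j) hj
            exact sub_ne_zero.mpr (hb hjl).ne'
          · fun_prop
      · have : (fun t => H t i j) = fun _ => (a i - b j)⁻¹ := by
          funext t; rw [hH]; simp [hi]
        rw [this]; exact continuousAt_const
    -- choose t₀
    have hev : ∀ᶠ t in nhdsWithin β (Set.Ioi β), 0 < (H t).det ∧ t ∈ Set.Ioc β al := by
      apply Filter.Eventually.and
      · exact Filter.Eventually.filter_mono nhdsWithin_le_nhds
          (hHcont.eventually (eventually_gt_nhds hcof))
      · exact Ioc_mem_nhdsGT hβal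
    obtain ⟨t₀, hHt₀, ht₀⟩ := hev.exists
    have hgt₀ : 0 < g t₀ := by
      have h1 : 0 < (t₀ - β) * g t₀ := by rw [← hHg t₀ ht₀.1]; exact hHt₀
      by_contra hle
      have : (t₀ - β) * g t₀ ≤ 0 :=
        mul_nonpos_of_nonneg_of_nonpos (sub_pos.mpr ht₀.1).le (not_lt.mp hle)
      linarith
    -- conclude by IVT
    have hgoal : g al = (Matrix.of fun i j : Fin (m+1) => (a i - b j)⁻¹).det := by
      have : A al = a := by
        funext i; rw [hA]; by_cases hi : i = l
        · subst hi; simp [hal]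
        · simp [hi]
      simp only [hg, hF]
      rw [this]
    rw [← hgoal]
    have hgalne : g al ≠ 0 := hgne al ⟨hβal, le_refl _⟩
    by_contra hle
    have hlt : g al < 0 := (not_lt.mp hle).lt_of_ne hgalne
    have hsub : Set.Icc (g al) (g t₀) ⊆ g '' Set.Icc t₀ al :=
      intermediate_value_Icc' ht₀.2 ((hcont t₀ ht₀.1).mono (by exact fun x hx => hx))
    obtain ⟨c, hc, hgc⟩ := hsub ⟨hlt.le, hgt₀.le⟩
    exact hgne c ⟨lt_of_lt_of_le ht₀.1 hc.1, hc.2⟩ hgc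

private lemma card_ZS_comp {k N : ℕ} (a b : Fin N → ℝ) (f g : Fin k → Fin N)
    (hf : Function.Injective f) (hg : Function.Injective g) :
    (ZS k (a ∘ f) (b ∘ g)).card =
      ((ZS N a b).filter fun p => (∃ i, f i = p.1) ∧ (∃ j, g j = p.2)).card := by
  classical
  apply Finset.card_bij (fun p _ => (f p.1, g p.2))
  · intro p hp
    simp only [ZS, Finset.mem_filter, Finset.mem_univ, true_and, Function.comp_apply] at hp ⊢
    exact ⟨hp, ⟨p.1, rfl⟩, ⟨p.2, rfl⟩⟩
  · intro p hp q hq hpq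
    have h1 := congrArg Prod.fst hpq
    have h2 := congrArg Prod.snd hpq
    simp only at h1 h2
    exact Prod.ext (hf h1) (hg h2)
  · intro p hp
    simp only [ZS, Finset.mem_filter, Finset.mem_univ, true_and] at hp
    obtain ⟨hz, ⟨i, hi⟩, ⟨j, hj⟩⟩ := hp
    refine ⟨(i, j), ?_, ?_⟩
    · simp only [ZS, Finset.mem_filter, Finset.mem_univ, true_and, Function.comp_apply]
      rw [hi, hj]; exact hz
    · rw [Prod.ext_iff]; exact ⟨hi, hj⟩

/-- If the "reverse diagonal" condition fails somewhere, the restricted Cauchy matrix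
is singular. -/
private lemma RC_det_zero_of_inadmissible {N : ℕ} (a b : Fin N → ℝ) (ha : StrictAnti a)
    (hb : StrictMono b) (i₀ : Fin N) (hbad : a i₀ < b i₀.rev) : (RC N a b).det = 0 := by
  classical
  apply det_zero_of_block (RC N a b) (Finset.Ici i₀) (Finset.Ici i₀.rev)
  · intro i hi j hj
    rw [Finset.mem_Ici] at hi hj
    have h1 : a i ≤ a i₀ := ha.antitone hi
    have h2 : b i₀.rev ≤ b j := hb.monotone hj
    rw [RC]
    simp only [Matrix.of_apply]
    rw [if_neg (not_lt.mpr (le_of_lt (lt_of_le_of_lt h1 (lt_of_lt_of_le hbad h2))))]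
  · rw [Fin.card_Ici, Fin.card_Ici, Fin.val_rev]
    have := i₀.isLt
    omega



private lemma RC_sign : ∀ N : ℕ, ∀ a b : Fin N → ℝ, StrictAnti a → StrictMono b →
    (∀ i j, a i ≠ b j) → (∀ i : Fin N, b i.rev < a i) →
    0 < (-1 : ℝ) ^ (ZS N a b).card * (RC N a b).det := by
  intro N
  induction N using Nat.strong_induction_on with
  | _ N IH =>
    cases N with
    | zero =>
      intro a b _ _ _ _
      have h1 : (ZS 0 a b).card = 0 := by simp [ZS]
      have h2 : (RC 0 a b).det = 1 := Matrix.det_fin_zero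
      rw [h1, h2]; norm_num
    | succ m =>
      intro a b ha hb hne hab
      by_cases hc : b (Fin.last m) < a (Fin.last m)
      · have hball : ∀ i j, b j < a i := fun i j =>
          lt_of_le_of_lt (hb.monotone (Fin.le_last j))
            (lt_of_lt_of_le hc (ha.antitone (Fin.le_last i)))
        have hZ : (ZS (m+1) a b).card = 0 := by
          rw [Finset.card_eq_zero, ZS, Finset.filter_eq_empty_iff]
          intro p _; exact not_lt.mpr (hball p.1 p.2).le
        have hfull : RC (m+1) a b = Matrix.of fun i j => (a i - b j)⁻¹ := by
          ext i j
          rw [RC]; simp only [Matrix.of_apply]; rw [if_pos (hball i j)]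
        rw [hZ, hfull, pow_zero, one_mul]
        exact cauchy_pos (m+1) a b ha hb hball
      · cases m with
        | zero =>
          exact absurd (by simpa using hab 0) (by simpa using hc)
        | succ m =>
          classical
          set l2 : Fin (m+2) := Fin.last (m+1) with hl2
          have hc' : a l2 < b l2 := (not_lt.mp hc).lt_of_ne (hne l2 l2)
          set mid : Fin m → Fin (m+2) := fun k => Fin.castSucc (Fin.succ k) with hmid
          have hmidmono : StrictMono mid := fun i j h =>
            Fin.castSucc_lt_castSucc_iff.mpr (Fin.succ_lt_succ_iff.mpr h)
          have habW : ∀ k : Fin m, (b ∘ mid) k.rev < (a ∘ mid) k := by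
            intro k
            have h1 : Fin.rev (mid k) = mid k.rev := by
              rw [hmid]
              simp only [Fin.rev_castSucc, Fin.rev_succ, Fin.succ_castSucc]
            have h2 := hab (mid k)
            rw [h1] at h2
            exact h2
          have habaa : ∀ i : Fin (m+1), (b ∘ Fin.castSucc) i.rev < (a ∘ Fin.castSucc) i := by
            intro i
            have h1 : b (Fin.castSucc i.rev) < b (Fin.rev (Fin.castSucc i)) := by
              rw [Fin.rev_castSucc]
              exact hb ((Fin.castSucc_lt_succ (i := i.rev)))
            exact lt_trans h1 (hab (Fin.castSucc i))
          have habab : ∀ i : Fin (m+1), (b ∘ Fin.succ) i.rev < (a ∘ Fin.castSucc) i := by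
            intro i
            have h2 := hab (Fin.castSucc i)
            rwa [Fin.rev_castSucc] at h2
          have habba : ∀ i : Fin (m+1), (b ∘ Fin.castSucc) i.rev < (a ∘ Fin.succ) i := by
            intro i
            have h2 := hab (Fin.succ i)
            rwa [Fin.rev_succ] at h2
          have haA : StrictAnti (a ∘ Fin.castSucc) := fun i j h =>
            ha (Fin.castSucc_lt_castSucc_iff.mpr h)
          have haS : StrictAnti (a ∘ Fin.succ) := fun i j h => ha (Fin.succ_lt_succ_iff.mpr h)
          have hbA : StrictMono (b ∘ Fin.castSucc) := fun i j h =>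
            hb (Fin.castSucc_lt_castSucc_iff.mpr h)
          have hbS : StrictMono (b ∘ Fin.succ) := fun i j h => hb (Fin.succ_lt_succ_iff.mpr h)
          have haM : StrictAnti (a ∘ mid) := fun i j h => ha (hmidmono h)
          have hbM : StrictMono (b ∘ mid) := fun i j h => hb (hmidmono h)
          set W := RC m (a ∘ mid) (b ∘ mid) with hWdef
          set Maa := RC (m+1) (a ∘ Fin.castSucc) (b ∘ Fin.castSucc) with hMaadef
          set Mbb := RC (m+1) (a ∘ Fin.succ) (b ∘ Fin.succ) with hMbbdef
          set Mab := RC (m+1) (a ∘ Fin.castSucc) (b ∘ Fin.succ) with hMabdef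
          set Mba := RC (m+1) (a ∘ Fin.succ) (b ∘ Fin.castSucc) with hMbadef
          set Z := ZS (m+2) a b with hZdef
          set ω := Z.card with hω
          set cA := (Z.filter fun p => p.1 ≠ l2).card with hcA
          set cB := (Z.filter fun p => p.2 ≠ l2).card with hcB
          set cC := (Z.filter fun p => p.1 ≠ l2 ∧ p.2 ≠ l2).card with hcC
          have hz10 : ∀ p ∈ Z, p.1 ≠ 0 ∧ p.2 ≠ 0 := by
            intro p hp
            rw [hZdef, ZS, Finset.mem_filter] at hp
            have hp2 := hp.2
            constructor
            · intro h0
              have h1 : b p.2 ≤ b l2 := hb.monotone (Fin.le_last p.2)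
              have h2 := hab 0
              have h3 : Fin.rev (0 : Fin (m+2)) = l2 := by rw [hl2]; exact Fin.rev_zero _
              rw [h3] at h2
              rw [h0] at hp2
              linarith
            · intro h0
              have h2 := hab l2
              have h3 : Fin.rev l2 = 0 := by rw [hl2]; exact Fin.rev_last _
              rw [h3] at h2
              have h1 : a l2 ≤ a p.1 := ha.antitone (Fin.le_last p.1)
              rw [h0] at hp2
              linarith
          have hrC : ∀ x : Fin (m+2), (∃ y : Fin (m+1), Fin.castSucc y = x) ↔ x ≠ l2 := by
            intro x
            constructor
            · rintro ⟨y, rfl⟩; rw [hl2]; exact (Fin.castSucc_lt_last y).ne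
            · intro h; exact Fin.exists_castSucc_eq.mpr (by rwa [← hl2])
          have hrS : ∀ x : Fin (m+2), (∃ y : Fin (m+1), Fin.succ y = x) ↔ x ≠ 0 :=
            fun x => Fin.exists_succ_eq
          have hrM : ∀ x : Fin (m+2), (∃ k : Fin m, mid k = x) ↔ (x ≠ 0 ∧ x ≠ l2) := by
            intro x
            constructor
            · rintro ⟨k, rfl⟩
              constructor
              · rw [hmid]
                intro h
                exact (Fin.succ_ne_zero k) (Fin.castSucc_eq_zero_iff.mp h)
              · rw [hmid, hl2]; exact (Fin.castSucc_lt_last _).ne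
            · rintro ⟨h0, hl⟩
              obtain ⟨y, rfl⟩ := Fin.exists_castSucc_eq.mpr
                (show x ≠ Fin.last (m+1) by rwa [← hl2])
              have hy0 : y ≠ 0 := fun h => h0 (by rw [h, Fin.castSucc_zero])
              obtain ⟨k, rfl⟩ := Fin.exists_succ_eq.mpr hy0
              exact ⟨k, by rw [hmid]⟩
          have hωaa : (ZS (m+1) (a ∘ Fin.castSucc) (b ∘ Fin.castSucc)).card = cC := by
            rw [card_ZS_comp a b Fin.castSucc Fin.castSucc
              (Fin.castSucc_injective _) (Fin.castSucc_injective _), hcC]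
            apply congrArg Finset.card
            apply Finset.filter_congr
            intro p hp
            constructor
            · rintro ⟨h1, h2⟩; exact ⟨(hrC p.1).mp h1, (hrC p.2).mp h2⟩
            · rintro ⟨h1, h2⟩; exact ⟨(hrC p.1).mpr h1, (hrC p.2).mpr h2⟩
          have hωab : (ZS (m+1) (a ∘ Fin.castSucc) (b ∘ Fin.succ)).card = cA := by
            rw [card_ZS_comp a b Fin.castSucc Fin.succ
              (Fin.castSucc_injective _) (Fin.succ_injective _), hcA]
            apply congrArg Finset.card
            apply Finset.filter_congr
            intro p hp
            constructor
            · rintro ⟨h1, _⟩; exact (hrC p.1).mp h1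
            · intro h1; exact ⟨(hrC p.1).mpr h1, (hrS p.2).mpr (hz10 p hp).2⟩
          have hωba : (ZS (m+1) (a ∘ Fin.succ) (b ∘ Fin.castSucc)).card = cB := by
            rw [card_ZS_comp a b Fin.succ Fin.castSucc
              (Fin.succ_injective _) (Fin.castSucc_injective _), hcB]
            apply congrArg Finset.card
            apply Finset.filter_congr
            intro p hp
            constructor
            · rintro ⟨_, h2⟩; exact (hrC p.2).mp h2
            · intro h2; exact ⟨(hrS p.1).mpr (hz10 p hp).1, (hrC p.2).mpr h2⟩
          have hωbb : (ZS (m+1) (a ∘ Fin.succ) (b ∘ Fin.succ)).card = ω := by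
            rw [card_ZS_comp a b Fin.succ Fin.succ
              (Fin.succ_injective _) (Fin.succ_injective _), hω]
            apply congrArg Finset.card
            apply Finset.filter_true_of_mem
            intro p hp
            exact ⟨(hrS p.1).mpr (hz10 p hp).1, (hrS p.2).mpr (hz10 p hp).2⟩
          have hωc : (ZS m (a ∘ mid) (b ∘ mid)).card = cC := by
            rw [card_ZS_comp a b mid mid hmidmono.injective hmidmono.injective, hcC]
            apply congrArg Finset.card
            apply Finset.filter_congr
            intro p hp
            constructor
            · rintro ⟨h1, h2⟩; exact ⟨((hrM p.1).mp h1).2, ((hrM p.2).mp h2).2⟩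
            · rintro ⟨h1, h2⟩
              exact ⟨(hrM p.1).mpr ⟨(hz10 p hp).1, h1⟩, (hrM p.2).mpr ⟨(hz10 p hp).2, h2⟩⟩
          have hpar : cA + cB + 1 = ω + cC := by
            have s1 : cA + (Z.filter fun p => ¬ p.1 ≠ l2).card = ω := by
              rw [hcA, hω]
              exact Finset.card_filter_add_card_filter_not _
            have s2 : cB + (Z.filter fun p => ¬ p.2 ≠ l2).card = ω := by
              rw [hcB, hω]
              exact Finset.card_filter_add_card_filter_not _
            have s3 : cC + (Z.filter fun p => (p.1 ≠ l2) ∧ ¬ p.2 ≠ l2).card = cA := by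
              rw [hcA, hcC, ← Finset.filter_filter, ← Finset.filter_filter]
              exact Finset.card_filter_add_card_filter_not _
            have s4 : (Z.filter fun p => (¬ p.2 ≠ l2) ∧ p.1 ≠ l2).card +
                (Z.filter fun p => (¬ p.2 ≠ l2) ∧ ¬ p.1 ≠ l2).card
                = (Z.filter fun p => ¬ p.2 ≠ l2).card := by
              rw [← Finset.filter_filter, ← Finset.filter_filter]
              exact Finset.card_filter_add_card_filter_not _
            have s5 : (Z.filter fun p => (¬ p.2 ≠ l2) ∧ p.1 ≠ l2)
                = (Z.filter fun p => (p.1 ≠ l2) ∧ ¬ p.2 ≠ l2) :=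
              Finset.filter_congr fun p _ => and_comm
            have s6 : (Z.filter fun p => (¬ p.2 ≠ l2) ∧ ¬ p.1 ≠ l2) = {(l2, l2)} := by
              apply Finset.eq_singleton_iff_unique_mem.mpr
              have hmem : (l2, l2) ∈ Z := by
                rw [hZdef, ZS, Finset.mem_filter]
                exact ⟨Finset.mem_univ _, hc'⟩
              constructor
              · rw [Finset.mem_filter]
                exact ⟨hmem, by simp⟩
              · intro p hp
                rw [Finset.mem_filter] at hp
                obtain ⟨-, h2, h1⟩ := hp
                rw [not_not] at h1 h2
                exact Prod.ext h1 h2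
            rw [s5] at s4
            rw [s6, Finset.card_singleton] at s4
            omega
          have hWpos : 0 < (-1 : ℝ) ^ cC * W.det := by
            have h2 := IH m (by omega) (a ∘ mid) (b ∘ mid) haM hbM (fun i j => hne _ _) habW
            rwa [hωc] at h2
          have hMaapos : 0 < (-1 : ℝ) ^ cC * Maa.det := by
            have h2 := IH (m+1) (by omega) _ _ haA hbA (fun i j => hne _ _) habaa
            rwa [hωaa] at h2
          have hMabpos : 0 < (-1 : ℝ) ^ cA * Mab.det := by
            have h2 := IH (m+1) (by omega) _ _ haA hbS (fun i j => hne _ _) habab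
            rwa [hωab] at h2
          have hMbapos : 0 < (-1 : ℝ) ^ cB * Mba.det := by
            have h2 := IH (m+1) (by omega) _ _ haS hbA (fun i j => hne _ _) habba
            rwa [hωba] at h2
          have hMbbcase : Mbb.det = 0 ∨ 0 < (-1 : ℝ) ^ ω * Mbb.det := by
            by_cases hadm : ∀ i : Fin (m+1), (b ∘ Fin.succ) i.rev < (a ∘ Fin.succ) i
            · right
              have h2 := IH (m+1) (by omega) _ _ haS hbS (fun i j => hne _ _) hadm
              rwa [hωbb] at h2
            · left
              push_neg at hadm
              obtain ⟨i₀, hi₀⟩ := hadm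
              exact RC_det_zero_of_inadmissible _ _ haS hbS i₀
                (hi₀.lt_of_ne (hne _ _))
          have hWne : W.det ≠ 0 := by
            intro h
            rw [h, mul_zero] at hWpos
            exact lt_irrefl 0 hWpos
          haveI : Invertible W := W.invertibleOfIsUnitDet (isUnit_iff_ne_zero.mpr hWne)
          -- the equivalences used for block decompositions
          set ed : Fin 2 → Fin (m+2) := ![0, l2] with hed
          have hed0 : ed 0 = 0 := rfl
          have hed1 : ed 1 = l2 := rfl
          have hl2ne0 : l2 ≠ 0 := by
            rw [hl2]; intro h; simpa using congrArg Fin.val h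
          have he2inj : Function.Injective (Sum.elim mid ed) := by
            intro x y hxy
            rcases x with k | p <;> rcases y with k' | q
            · simp only [Sum.elim_inl] at hxy
              exact congrArg Sum.inl (hmidmono.injective hxy)
            · exfalso
              simp only [Sum.elim_inl, Sum.elim_inr] at hxy
              have h2 := (hrM (mid k)).mp ⟨k, rfl⟩
              fin_cases q
              · exact h2.1 (by simpa [hed] using hxy)
              · exact h2.2 (by simpa [hed] using hxy)
            · exfalso
              simp only [Sum.elim_inl, Sum.elim_inr] at hxy
              have h2 := (hrM (mid k')).mp ⟨k', rfl⟩
              fin_cases p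
              · exact h2.1 (by simpa [hed] using hxy.symm)
              · exact h2.2 (by simpa [hed] using hxy.symm)
            · simp only [Sum.elim_inr] at hxy
              congr 1
              fin_cases p <;> fin_cases q
              · rfl
              · exact absurd (by simpa [hed] using hxy) (Ne.symm hl2ne0)
              · exact absurd (by simpa [hed] using hxy) hl2ne0
              · rfl
          set E2 : (Fin m ⊕ Fin 2) ≃ Fin (m+2) :=
            Equiv.ofBijective _
              ((Fintype.bijective_iff_injective_and_card (Sum.elim mid ed)).mpr
                ⟨he2inj, by simp⟩) with hE2
          have heSinj : Function.Injective
              (Sum.elim Fin.succ (fun _ : Fin 1 => (0 : Fin (m+1)))) := by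
            intro x y hxy
            rcases x with k | p <;> rcases y with k' | q
            · simp only [Sum.elim_inl] at hxy
              exact congrArg Sum.inl (Fin.succ_injective _ hxy)
            · exact absurd hxy (Fin.succ_ne_zero k)
            · exact absurd hxy.symm (Fin.succ_ne_zero k')
            · exact congrArg Sum.inr (Subsingleton.elim p q)
          set ES : (Fin m ⊕ Fin 1) ≃ Fin (m+1) :=
            Equiv.ofBijective _
              ((Fintype.bijective_iff_injective_and_card
                (Sum.elim Fin.succ (fun _ : Fin 1 => (0 : Fin (m+1))))).mpr
                ⟨heSinj, by simp⟩) with hES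
          have heCinj : Function.Injective
              (Sum.elim Fin.castSucc (fun _ : Fin 1 => Fin.last m)) := by
            intro x y hxy
            rcases x with k | p <;> rcases y with k' | q
            · simp only [Sum.elim_inl] at hxy
              exact congrArg Sum.inl (Fin.castSucc_injective _ hxy)
            · exact absurd hxy (Fin.castSucc_lt_last k).ne
            · exact absurd hxy.symm (Fin.castSucc_lt_last k').ne
            · exact congrArg Sum.inr (Subsingleton.elim p q)
          set EC : (Fin m ⊕ Fin 1) ≃ Fin (m+1) :=
            Equiv.ofBijective _
              ((Fintype.bijective_iff_injective_and_card
                (Sum.elim Fin.castSucc (fun _ : Fin 1 => Fin.last m))).mpr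
                ⟨heCinj, by simp⟩) with hEC
          -- blocks
          set Xb : Matrix (Fin m) (Fin 2) ℝ :=
            Matrix.of fun k p => RC (m+2) a b (mid k) (ed p) with hXb
          set Yb : Matrix (Fin 2) (Fin m) ℝ :=
            Matrix.of fun p k => RC (m+2) a b (ed p) (mid k) with hYb
          set Zb : Matrix (Fin 2) (Fin 2) ℝ :=
            Matrix.of fun p q => RC (m+2) a b (ed p) (ed q) with hZb
          set Sm : Matrix (Fin 2) (Fin 2) ℝ := Zb - Yb * ⅟W * Xb with hSm
          have hsub2 : (RC (m+2) a b).submatrix E2 E2 = Matrix.fromBlocks W Xb Yb Zb := by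
            ext x y
            rcases x with k | p <;> rcases y with k' | q <;> rfl
          have hdetM : (RC (m+2) a b).det = W.det * Sm.det := by
            rw [← Matrix.det_submatrix_equiv_self E2 (RC (m+2) a b), hsub2,
              Matrix.det_fromBlocks₁₁]
          have hmul_entry : ∀ p q : Fin 2,
              ((Matrix.of fun (_ : Fin 1) k => Yb p k) * ⅟W *
                (Matrix.of fun k (_ : Fin 1) => Xb k q)) 0 0 = (Yb * ⅟W * Xb) p q := by
            intro p q
            simp [Matrix.mul_apply]
          have hdaa : Maa.det = W.det * Sm 0 0 := by
            have hsubaa : Maa.submatrix ES ES = Matrix.fromBlocks W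
                (Matrix.of fun k (_ : Fin 1) => Xb k 0)
                (Matrix.of fun (_ : Fin 1) k => Yb 0 k)
                (Matrix.of fun (_ : Fin 1) (_ : Fin 1) => Zb 0 0) := by
              ext x y
              rcases x with k | p <;> rcases y with k' | q <;> rfl
            rw [← Matrix.det_submatrix_equiv_self ES Maa, hsubaa, Matrix.det_fromBlocks₁₁,
              Matrix.det_fin_one]
            congr 1
          have hdbb : Mbb.det = W.det * Sm 1 1 := by
            have hsubbb : Mbb.submatrix EC EC = Matrix.fromBlocks W
                (Matrix.of fun k (_ : Fin 1) => Xb k 1)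
                (Matrix.of fun (_ : Fin 1) k => Yb 1 k)
                (Matrix.of fun (_ : Fin 1) (_ : Fin 1) => Zb 1 1) := by
              ext x y
              rcases x with k | p <;> rcases y with k' | q <;> rfl
            rw [← Matrix.det_submatrix_equiv_self EC Mbb, hsubbb, Matrix.det_fromBlocks₁₁,
              Matrix.det_fin_one]
            congr 1
          have hdab : (Mab.submatrix ES EC).det = W.det * Sm 0 1 := by
            have hsubab : Mab.submatrix ES EC = Matrix.fromBlocks W
                (Matrix.of fun k (_ : Fin 1) => Xb k 1)
                (Matrix.of fun (_ : Fin 1) k => Yb 0 k)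
                (Matrix.of fun (_ : Fin 1) (_ : Fin 1) => Zb 0 1) := by
              ext x y
              rcases x with k | p <;> rcases y with k' | q <;> rfl
            rw [hsubab, Matrix.det_fromBlocks₁₁, Matrix.det_fin_one]
            congr 1
          have hdba : (Mba.submatrix EC ES).det = W.det * Sm 1 0 := by
            have hsubba : Mba.submatrix EC ES = Matrix.fromBlocks W
                (Matrix.of fun k (_ : Fin 1) => Xb k 0)
                (Matrix.of fun (_ : Fin 1) k => Yb 1 k)
                (Matrix.of fun (_ : Fin 1) (_ : Fin 1) => Zb 1 0) := by
              ext x y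
              rcases x with k | p <;> rcases y with k' | q <;> rfl
            rw [hsubba, Matrix.det_fromBlocks₁₁, Matrix.det_fin_one]
            congr 1
          have hprodab : Mab.det * Mba.det = (W.det * Sm 0 1) * (W.det * Sm 1 0) := by
            have h4 : (Mab.submatrix ⇑ES ⇑EC) * (Mba.submatrix ⇑EC ⇑ES)
                = (Mab * Mba).submatrix ⇑ES ⇑ES :=
              Matrix.submatrix_mul_equiv Mab Mba ⇑ES EC ⇑ES
            have h5 : (Mab.submatrix ⇑ES ⇑EC).det * (Mba.submatrix ⇑EC ⇑ES).det
                = Mab.det * Mba.det := by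
              rw [← Matrix.det_mul, h4, Matrix.det_submatrix_equiv_self ES, Matrix.det_mul]
            rw [← hdab, ← hdba]
            exact h5.symm
          have hDJ : (RC (m+2) a b).det * W.det = Maa.det * Mbb.det - Mab.det * Mba.det := by
            rw [hdetM, hdaa, hdbb, hprodab, Matrix.det_fin_two Sm]
            ring
          -- final arithmetic
          have ht2 : 0 < ((-1:ℝ) ^ cA * Mab.det) * ((-1:ℝ) ^ cB * Mba.det) :=
            mul_pos hMabpos hMbapos
          have ht1 : 0 ≤ ((-1:ℝ) ^ cC * Maa.det) * ((-1:ℝ) ^ ω * Mbb.det) := by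
            rcases hMbbcase with h0 | hpos
            · rw [h0]; simp
            · exact le_of_lt (mul_pos hMaapos hpos)
          have key : (-1:ℝ) ^ (ω + cC) * ((RC (m+2) a b).det * W.det) =
              ((-1:ℝ) ^ cC * Maa.det) * ((-1:ℝ) ^ ω * Mbb.det) +
              ((-1:ℝ) ^ cA * Mab.det) * ((-1:ℝ) ^ cB * Mba.det) := by
            have hsA : (-1:ℝ)^(ω+cC) = (-1:ℝ)^ω * (-1:ℝ)^cC := pow_add _ _ _
            have hsB : (-1:ℝ)^(ω+cC) = -((-1:ℝ)^cA * (-1:ℝ)^cB) := by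
              rw [← hpar, pow_succ, pow_add]; ring
            rw [hDJ]
            linear_combination (Maa.det * Mbb.det) * hsA - (Mab.det * Mba.det) * hsB
          have hkeypos : 0 < (-1:ℝ) ^ (ω + cC) * ((RC (m+2) a b).det * W.det) := by
            rw [key]; exact add_pos_of_nonneg_of_pos ht1 ht2
          have hsq : ((-1:ℝ) ^ cC) * ((-1:ℝ) ^ cC) = 1 := by
            rw [← pow_add]
            exact Even.neg_one_pow ⟨cC, rfl⟩
          have h3 := mul_pos hkeypos hWpos
          have h4 : ((-1:ℝ) ^ (ω + cC) * ((RC (m+2) a b).det * W.det)) * ((-1:ℝ) ^ cC * W.det)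
              = ((-1:ℝ) ^ ω * (RC (m+2) a b).det) * (W.det * W.det) := by
            rw [pow_add]
            linear_combination ((-1:ℝ) ^ ω * (RC (m+2) a b).det * (W.det * W.det)) * hsq
          rw [h4] at h3
          have hww : 0 < W.det * W.det := mul_self_pos.mpr hWne
          by_contra hcon
          have h5 : ((-1:ℝ) ^ ω * (RC (m+2) a b).det) * (W.det * W.det) ≤ 0 :=
            mul_nonpos_of_nonpos_of_nonneg (not_lt.mp hcon) hww.le
          linarith

/-- The determinant of a restricted real Cauchy matrix has sign `(-1)^ω`,
where `ω` is the number of zero entries. -/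
theorem stmt1 (n : ℕ) (a b : Fin n → ℝ)
    (ha : StrictAnti a) (hb : StrictMono b)
    (hab : ∀ i : Fin n, b i.rev < a i)
    (hne : ∀ i j : Fin n, a i ≠ b j) :
    (Even (Finset.univ.filter fun p : Fin n × Fin n => a p.1 < b p.2).card →
      0 < (Matrix.of fun i j : Fin n => if b j < a i then (a i - b j)⁻¹ else 0).det) ∧
    (Odd (Finset.univ.filter fun p : Fin n × Fin n => a p.1 < b p.2).card →
      (Matrix.of fun i j : Fin n => if b j < a i then (a i - b j)⁻¹ else 0).det < 0) := by
  have h : 0 < (-1 : ℝ) ^ (Finset.univ.filter fun p : Fin n × Fin n => a p.1 < b p.2).card *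
      (Matrix.of fun i j : Fin n => if b j < a i then (a i - b j)⁻¹ else 0).det :=
    RC_sign n a b ha hb hne hab
  constructor
  · intro heven
    rw [Even.neg_one_pow heven, one_mul] at h
    exact h
  · intro hodd
    rw [Odd.neg_one_pow hodd] at h
    linarith
end

section
/- If M = C(A,B) is an irreducible restricted Cauchy matrix (i.e., a_i > b_{n+2-i} for i = 2,...,n), then every (i,j)-minor M_{ij} (the matrix obtained by deleting row i and column j) is again a restricted Cauchy matrix, namely C(A',B') where A' deletes a_i from A and B' deletes b_j from B. -/
/-!
Only the support condition of the minor needs an argument. The entries `a (i.succAbove k)` and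
`b (j.succAbove k.rev)` sit at positions `p ≤ k + 1` and `q ≤ n - k`, so `p + q ≤ n + 1`.
Antidiagonal positions `p + q = n + 1` are covered by irreducibility; positions above the
antidiagonal satisfy `q ≤ p.rev`, hence `b q ≤ b p.rev < a p`.
-/

lemma Fin.val_succAbove_le_succ {n : ℕ} (p : Fin (n + 1)) (k : Fin n) :
    (p.succAbove k : ℕ) ≤ k + 1 := by
  unfold Fin.succAbove
  split <;> simp

lemma lt_of_val_add_val_le {α : Type*} [Preorder α] {n : ℕ} {a b : Fin (n + 1) → α}
    (hb : Monotone b) (hab : ∀ i : Fin (n + 1), b i.rev < a i)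
    (hirr : ∀ i j : Fin (n + 1), (i : ℕ) + (j : ℕ) = n + 1 → b j < a i)
    {p q : Fin (n + 1)} (hpq : (p : ℕ) + q ≤ n + 1) : b q < a p := by
  rcases hpq.lt_or_eq with hlt | heq
  · calc b q ≤ b p.rev := hb (by rw [Fin.le_def, Fin.val_rev]; omega)
      _ < a p := hab p
  · exact hirr p q heq

theorem stmt2_general (n : ℕ) (a b : Fin (n + 1) → ℝ)
    (ha : StrictAnti a) (hb : StrictMono b)
    (hab : ∀ i : Fin (n + 1), b i.rev < a i)
    (hirr : ∀ i j : Fin (n + 1), (i : ℕ) + (j : ℕ) = n + 1 → b j < a i)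
    (i j : Fin (n + 1)) :
    ((Matrix.of fun i j : Fin (n + 1) => if b j < a i then (a i - b j)⁻¹ else 0).submatrix
        i.succAbove j.succAbove =
      Matrix.of fun k l : Fin n =>
        if b (j.succAbove l) < a (i.succAbove k) then
          (a (i.succAbove k) - b (j.succAbove l))⁻¹ else 0) ∧
    StrictAnti (a ∘ i.succAbove) ∧ StrictMono (b ∘ j.succAbove) ∧
    (∀ k : Fin n, b (j.succAbove k.rev) < a (i.succAbove k)) := by
  refine ⟨rfl, ha.comp_strictMono (Fin.strictMono_succAbove i),
    hb.comp (Fin.strictMono_succAbove j), fun k => lt_of_val_add_val_le hb.monotone hab hirr ?_⟩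
  have hp := i.val_succAbove_le_succ k
  have hq := j.val_succAbove_le_succ k.rev
  have hrev := Fin.val_rev k
  omega

/-- Every minor of an irreducible restricted Cauchy matrix is again a
restricted Cauchy matrix `C(A', B')`, where `A'` deletes `a i` and `B'` deletes `b j`. -/
theorem stmt2 (n : ℕ) (a b : Fin (n + 1) → ℝ)
    (ha : StrictAnti a) (hb : StrictMono b)
    (hab : ∀ i : Fin (n + 1), b i.rev < a i)
    (hne : ∀ i j : Fin (n + 1), a i ≠ b j)
    (hirr : ∀ i j : Fin (n + 1), (i : ℕ) + (j : ℕ) = n + 1 → b j < a i)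
    (i j : Fin (n + 1)) :
    ((Matrix.of fun i j : Fin (n + 1) => if b j < a i then (a i - b j)⁻¹ else 0).submatrix
        i.succAbove j.succAbove =
      Matrix.of fun k l : Fin n =>
        if b (j.succAbove l) < a (i.succAbove k) then
          (a (i.succAbove k) - b (j.succAbove l))⁻¹ else 0) ∧
    StrictAnti (a ∘ i.succAbove) ∧ StrictMono (b ∘ j.succAbove) ∧
    (∀ k : Fin n, b (j.succAbove k.rev) < a (i.succAbove k)) :=
  stmt2_general n a b ha hb hab hirr i j
end

section
/- If A is strictly decreasing, B is strictly increasing, and a_i > b_j for all i,j, then the Cauchy determinant det(1/(a_i - b_j))_{i,j=1}^n equals ∏_{i<j}(a_i - a_j) · ∏_{i<j}(b_j - b_i) · ∏_{i,j} 1/(a_i - b_j), and in particular is strictly positive. -/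
/-!
Let `C` be the matrix whose `j`-th column holds the coefficients of `∏ k ≠ j, (X - b k)`.
Multiplying by a Vandermonde matrix evaluates these polynomials, so `V(b) * C` is diagonal with
entries `∏ k ≠ j, (b j - b k)`, while `V(a) * C = diag(∏ k, (a i - b k)) * (1 / (a i - b j))`.
Taking determinants and using the Vandermonde formula twice gives the Cauchy determinant; its
sign is then read off factor by factor.
-/

open Finset Polynomial Lagrange

section Triangle

variable {ι M : Type*} [Fintype ι] [LinearOrder ι] [LocallyFiniteOrderTop ι] [CommMonoid M]

theorem Finset.prod_filter_fst_lt_snd (g : ι → ι → M) :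
    ∏ p ∈ univ.filter (fun p : ι × ι => p.1 < p.2), g p.1 p.2 = ∏ i, ∏ j ∈ Ioi i, g i j := by
  rw [prod_filter, Fintype.prod_prod_type]
  refine prod_congr rfl fun i _ => ?_
  rw [← prod_filter, filter_lt_eq_Ioi]

theorem Finset.prod_prod_erase_eq_prod_prod_Ioi_mul [LocallyFiniteOrderBot ι] (g : ι → ι → M) :
    ∏ i, ∏ j ∈ univ.erase i, g i j = ∏ i, ∏ j ∈ Ioi i, (g i j * g j i) := by
  calc ∏ i, ∏ j ∈ univ.erase i, g i j
      = ∏ i, ((∏ j ∈ Ioi i, g i j) * ∏ j ∈ Iio i, g i j) := by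
        refine prod_congr rfl fun i _ => ?_
        rw [← compl_singleton, ← Ioi_disjUnion_Iio, prod_disjUnion]
    _ = (∏ i, ∏ j ∈ Ioi i, g i j) * ∏ i, ∏ j ∈ Ioi i, g j i := by
        rw [prod_mul_distrib]
        congr 1
        exact prod_comm' (by simp)
    _ = ∏ i, ∏ j ∈ Ioi i, (g i j * g j i) := by simp only [← prod_mul_distrib]

end Triangle

theorem Lagrange.natDegree_nodal_erase_lt {R : Type*} [CommRing R] [Nontrivial R] {n : ℕ}
    (b : Fin n → R) (j : Fin n) : (nodal (univ.erase j) b).natDegree < n := by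
  rw [natDegree_nodal, card_erase_of_mem (mem_univ j), card_univ, Fintype.card_fin]
  exact Nat.sub_lt j.pos one_pos

namespace Matrix

section Nodal

variable {R : Type*} [CommRing R] {n : ℕ}

theorem of_eval_eq_vandermonde_mul_of_natDegree_lt (v : Fin n → R) (p : Fin n → R[X])
    (hp : ∀ j, (p j).natDegree < n) :
    of (fun i j => (p j).eval (v i)) = vandermonde v * of (fun (i j : Fin n) => (p j).coeff i) := by
  ext i j
  rw [of_apply, mul_apply, eval_eq_sum_range' (hp j), ← Fin.sum_univ_eq_sum_range]
  simp only [vandermonde_apply, of_apply, mul_comm]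

noncomputable def nodalCoeffs (b : Fin n → R) : Matrix (Fin n) (Fin n) R :=
  of fun k j => (nodal (univ.erase j) b).coeff k

theorem vandermonde_mul_nodalCoeffs [Nontrivial R] (v b : Fin n → R) :
    vandermonde v * nodalCoeffs b = of fun i j => ∏ k ∈ univ.erase j, (v i - b k) := by
  rw [nodalCoeffs, ← of_eval_eq_vandermonde_mul_of_natDegree_lt _ _ (natDegree_nodal_erase_lt b)]
  simp only [eval_nodal]

theorem vandermonde_self_mul_nodalCoeffs [Nontrivial R] (b : Fin n → R) :
    vandermonde b * nodalCoeffs b = diagonal fun j => ∏ k ∈ univ.erase j, (b j - b k) := by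
  ext i j
  rw [vandermonde_mul_nodalCoeffs, of_apply]
  obtain rfl | hij := eq_or_ne i j
  · rw [diagonal_apply_eq]
  · rw [diagonal_apply_ne _ hij]
    exact prod_eq_zero (mem_erase.2 ⟨hij, mem_univ i⟩) (sub_self _)

theorem det_nodalCoeffs [IsDomain R] {b : Fin n → R} (hb : Function.Injective b) :
    (nodalCoeffs b).det = ∏ i, ∏ j ∈ Ioi i, (b i - b j) := by
  refine mul_left_cancel₀ (det_vandermonde_ne_zero_iff.2 hb) ?_
  rw [← det_mul, vandermonde_self_mul_nodalCoeffs, det_diagonal,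
    prod_prod_erase_eq_prod_prod_Ioi_mul, det_vandermonde, ← prod_mul_distrib]
  refine prod_congr rfl fun i _ => ?_
  rw [← prod_mul_distrib]
  exact prod_congr rfl fun j _ => mul_comm _ _

end Nodal

section Cauchy

variable {K : Type*} [Field K] {n : ℕ}

theorem vandermonde_mul_nodalCoeffs_eq_diagonal_mul_cauchy {a b : Fin n → K}
    (hab : ∀ i j, a i ≠ b j) :
    vandermonde a * nodalCoeffs b =
      diagonal (fun i => ∏ k, (a i - b k)) * of fun i j => (a i - b j)⁻¹ := by
  ext i j
  rw [vandermonde_mul_nodalCoeffs, of_apply, diagonal_mul, of_apply,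
    ← mul_prod_erase univ (fun k => a i - b k) (mem_univ j),
    mul_comm (a i - b j), mul_assoc, mul_inv_cancel₀ (sub_ne_zero.2 (hab i j)), mul_one]

theorem det_cauchy {a b : Fin n → K} (hab : ∀ i j, a i ≠ b j) :
    (of fun i j => (a i - b j)⁻¹).det =
      (∏ i, ∏ j ∈ Ioi i, (a i - a j)) * (∏ i, ∏ j ∈ Ioi i, (b j - b i)) *
        ∏ i, ∏ j, (a i - b j)⁻¹ := by
  by_cases hb : Function.Injective b
  · have hd : ∏ i, ∏ k, (a i - b k) ≠ 0 :=
      prod_ne_zero_iff.2 fun i _ => prod_ne_zero_iff.2 fun k _ => sub_ne_zero.2 (hab i k)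
    have key : (∏ i, ∏ k, (a i - b k)) * (of fun i j => (a i - b j)⁻¹).det =
        (vandermonde a).det * (nodalCoeffs b).det := by
      rw [← det_diagonal, ← det_mul, ← vandermonde_mul_nodalCoeffs_eq_diagonal_mul_cauchy hab,
        det_mul]
    rw [(eq_inv_mul_iff_mul_eq₀ hd).2 key, det_vandermonde, det_nodalCoeffs hb, mul_comm]
    simp only [← prod_inv_distrib, ← prod_mul_distrib]
    congr! 3
    ring
  · obtain ⟨i, j, hbij, hij⟩ : ∃ i j, b i = b j ∧ i ≠ j := by
      simpa [Function.Injective, not_forall] using hb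
    rw [← det_vandermonde b, det_zero_of_column_eq hij fun k => by rw [of_apply, of_apply, hbij],
      det_vandermonde_eq_zero_iff.2 ⟨i, j, hbij, hij⟩, mul_zero, zero_mul]

theorem det_cauchy_pos [LinearOrder K] [IsStrictOrderedRing K] {a b : Fin n → K}
    (ha : StrictAnti a) (hb : StrictMono b) (hab : ∀ i j, b j < a i) :
    0 < (of fun i j => (a i - b j)⁻¹).det := by
  rw [det_cauchy fun i j => (hab i j).ne']
  refine mul_pos (mul_pos ?_ ?_) ?_
  · exact prod_pos fun i _ => prod_pos fun j hj => sub_pos.2 (ha (mem_Ioi.1 hj))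
  · exact prod_pos fun i _ => prod_pos fun j hj => sub_pos.2 (hb (mem_Ioi.1 hj))
  · exact prod_pos fun i _ => prod_pos fun j _ => inv_pos.2 (sub_pos.2 (hab i j))

end Cauchy

end Matrix

/-- The Cauchy determinant formula, and its positivity for `A` strictly decreasing,
`B` strictly increasing with `a i > b j` for all `i, j`. -/
theorem stmt3 (n : ℕ) (a b : Fin n → ℝ)
    (ha : StrictAnti a) (hb : StrictMono b)
    (hab : ∀ i j : Fin n, b j < a i) :
    (Matrix.of fun i j : Fin n => (a i - b j)⁻¹).det =
      (∏ p ∈ Finset.univ.filter (fun p : Fin n × Fin n => p.1 < p.2), (a p.1 - a p.2)) *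
      (∏ p ∈ Finset.univ.filter (fun p : Fin n × Fin n => p.1 < p.2), (b p.2 - b p.1)) *
      ∏ i : Fin n, ∏ j : Fin n, (a i - b j)⁻¹ ∧
    0 < (Matrix.of fun i j : Fin n => (a i - b j)⁻¹).det := by
  rw [prod_filter_fst_lt_snd fun i j => a i - a j, prod_filter_fst_lt_snd fun i j => b j - b i]
  exact ⟨Matrix.det_cauchy fun i j => (hab i j).ne', Matrix.det_cauchy_pos ha hb hab⟩
end

section
/- If a restricted Cauchy matrix M = C(A,B) is reducible, i.e., there exists k ≥ 2 with a_k < b_{n+2-k}, then M has a block decomposition with blocks M_1 (size (k-1)×(n-k+1)), M_2 = C((a_1,...,a_{k-1}),(b_{n-k+2},...,b_n)) (size (k-1)×(k-1)), M_3 = C((a_k,...,a_n),(b_1,...,b_{n-k+1})) (size (n-k+1)×(n-k+1)), and a zero block M_4 of size (n-k+1)×(k-1), and det(M) = (-1)^{(n-k+1)(k-1)} det(M_2) det(M_3). -/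
open Fin.NatCast

lemma pow_finRotate_apply (n : ℕ) [NeZero n] (s : ℕ) (i : Fin n) :
    ((finRotate n) ^ s) i = i + (s : Fin n) := by
  obtain ⟨m, rfl⟩ := Nat.exists_eq_succ_of_ne_zero (NeZero.ne n)
  induction s with
  | zero => simp
  | succ k ih =>
    rw [pow_succ', Equiv.Perm.mul_apply, ih, finRotate_succ_apply]
    push_cast
    rw [add_assoc]

lemma sign_pow_finRotate (n : ℕ) [NeZero n] (s : ℕ) :
    Equiv.Perm.sign ((finRotate n) ^ s) = (-1) ^ ((n - 1) * s) := by
  obtain ⟨m, rfl⟩ := Nat.exists_eq_succ_of_ne_zero (NeZero.ne n)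
  rw [map_pow, sign_finRotate, ← pow_mul]

/-- Block decomposition of a reducible restricted Cauchy matrix (with `r = k - 1`,
`s = n - k + 1`): `det M = (-1)^(s·r) det M₂ det M₃`. -/
theorem stmt7 (r s : ℕ) (hr : 0 < r) (hs : 0 < s) (a b : Fin (r + s) → ℝ)
    (ha : StrictAnti a) (hb : StrictMono b)
    (hab : ∀ i : Fin (r + s), b i.rev < a i)
    (hne : ∀ i j : Fin (r + s), a i ≠ b j)
    (hred : a ⟨r, by omega⟩ < b ⟨s, by omega⟩) :
    (Matrix.of fun i j : Fin (r + s) => if b j < a i then (a i - b j)⁻¹ else 0).det =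
      (-1 : ℝ) ^ (s * r) *
      (Matrix.of fun i j : Fin r =>
        if b ⟨s + (j : ℕ), by omega⟩ < a ⟨(i : ℕ), by omega⟩ then
          (a ⟨(i : ℕ), by omega⟩ - b ⟨s + (j : ℕ), by omega⟩)⁻¹ else 0).det *
      (Matrix.of fun i j : Fin s =>
        if b ⟨(j : ℕ), by omega⟩ < a ⟨r + (i : ℕ), by omega⟩ then
          (a ⟨r + (i : ℕ), by omega⟩ - b ⟨(j : ℕ), by omega⟩)⁻¹ else 0).det := by
  haveI : NeZero (r + s) := ⟨by omega⟩
  set M : Matrix (Fin (r + s)) (Fin (r + s)) ℝ :=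
    Matrix.of fun i j : Fin (r + s) => if b j < a i then (a i - b j)⁻¹ else 0 with hM
  set M₂ : Matrix (Fin r) (Fin r) ℝ :=
    Matrix.of fun i j : Fin r =>
      if b ⟨s + (j : ℕ), by omega⟩ < a ⟨(i : ℕ), by omega⟩ then
        (a ⟨(i : ℕ), by omega⟩ - b ⟨s + (j : ℕ), by omega⟩)⁻¹ else 0 with hM2
  set M₃ : Matrix (Fin s) (Fin s) ℝ :=
    Matrix.of fun i j : Fin s =>
      if b ⟨(j : ℕ), by omega⟩ < a ⟨r + (i : ℕ), by omega⟩ then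
        (a ⟨r + (i : ℕ), by omega⟩ - b ⟨(j : ℕ), by omega⟩)⁻¹ else 0 with hM3
  set σ : Equiv.Perm (Fin (r + s)) := (finRotate (r + s)) ^ s with hσ
  have hσval : ∀ j : Fin (r + s), ((σ j : Fin (r + s)) : ℕ) =
      if (j : ℕ) + s < r + s then (j : ℕ) + s else (j : ℕ) + s - (r + s) := by
    intro j
    have hj := j.isLt
    rw [hσ, pow_finRotate_apply]
    show ((j : ℕ) + ((s : Fin (r + s)) : ℕ)) % (r + s) = _
    rw [Fin.val_natCast, Nat.mod_eq_of_lt (show s < r + s by omega)]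
    split_ifs with h
    · exact Nat.mod_eq_of_lt h
    · rw [Nat.mod_eq_sub_mod (by omega), Nat.mod_eq_of_lt (by omega)]
  -- The zero block
  have hzero : ∀ i j : ℕ, r ≤ i → (hi : i < r + s) → s ≤ j → (hj : j < r + s) →
      ¬ b ⟨j, hj⟩ < a ⟨i, hi⟩ := by
    intro i j hri hi hsj hj
    have h1 : a ⟨i, hi⟩ ≤ a ⟨r, by omega⟩ := ha.antitone (by simp [Fin.le_def]; omega)
    have h2 : b ⟨s, by omega⟩ ≤ b ⟨j, hj⟩ := hb.monotone (by simp [Fin.le_def]; omega)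
    have := h1.trans_lt (hred.trans_le h2)
    linarith
  -- block identity
  have key : (M.submatrix id σ).submatrix finSumFinEquiv finSumFinEquiv =
      Matrix.fromBlocks M₂ (Matrix.of fun (i : Fin r) (j : Fin s) =>
        M ⟨(i : ℕ), by omega⟩ ⟨(j : ℕ), by omega⟩) 0 M₃ := by
    ext i j
    rcases i with i | i <;> rcases j with j | j <;>
      simp only [Matrix.submatrix_apply, Matrix.fromBlocks_apply₁₁,
        Matrix.fromBlocks_apply₁₂, Matrix.fromBlocks_apply₂₁, Matrix.fromBlocks_apply₂₂,
        finSumFinEquiv_apply_left, finSumFinEquiv_apply_right, id_eq, Matrix.zero_apply,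
        Matrix.of_apply, hM, hM2, hM3]
    · -- inl inl : M i (σ j) = M₂ i j
      have h1 : (Fin.castAdd s i) = (⟨(i : ℕ), by omega⟩ : Fin (r + s)) := by
        ext; simp
      have h2 : σ (Fin.castAdd s j) = (⟨s + (j : ℕ), by omega⟩ : Fin (r + s)) := by
        ext; rw [hσval]; simp only [Fin.coe_castAdd, Fin.coe_natAdd]; split <;> omega
      rw [h1, h2]
    · -- inl inr
      have h1 : (Fin.castAdd s i) = (⟨(i : ℕ), by omega⟩ : Fin (r + s)) := by
        ext; simp
      have h2 : σ (Fin.natAdd r j) = (⟨(j : ℕ), by omega⟩ : Fin (r + s)) := by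
        ext; rw [hσval]; simp only [Fin.coe_castAdd, Fin.coe_natAdd]; split <;> omega
      rw [h1, h2]
    · -- inr inl : zero block
      have h2 : σ (Fin.castAdd s j) = (⟨s + (j : ℕ), by omega⟩ : Fin (r + s)) := by
        ext; rw [hσval]; simp only [Fin.coe_castAdd, Fin.coe_natAdd]; split <;> omega
      rw [h2]
      exact if_neg (hzero (r + i) (s + j) (by omega) (by omega) (by omega) (by omega))
    · -- inr inr
      have h1 : (Fin.natAdd r i) = (⟨r + (i : ℕ), by omega⟩ : Fin (r + s)) := rfl
      have h2 : σ (Fin.natAdd r j) = (⟨(j : ℕ), by omega⟩ : Fin (r + s)) := by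
        ext; rw [hσval]; simp only [Fin.coe_castAdd, Fin.coe_natAdd]; split <;> omega
      rw [h1, h2]
  have hdet1 : (M.submatrix id σ).det = M₂.det * M₃.det := by
    rw [← Matrix.det_submatrix_equiv_self finSumFinEquiv (M.submatrix id σ), key,
      Matrix.det_fromBlocks_zero₂₁]
  have hdet2 : (M.submatrix id σ).det = ((-1 : ℝ) ^ ((r + s - 1) * s)) * M.det := by
    rw [Matrix.det_permute' σ M, hσ, sign_pow_finRotate]
    push_cast
    ring
  have hsign : ((-1 : ℝ) ^ ((r + s - 1) * s)) = (-1 : ℝ) ^ (s * r) := by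
    have h1 : (r + s - 1) * s = s * r + (s - 1) * s := by
      have : r + s - 1 = r + (s - 1) := by omega
      rw [this]; ring
    have h2 : Even ((s - 1) * s) := by
      have := Nat.even_mul_succ_self (s - 1)
      rwa [show s - 1 + 1 = s by omega] at this
    rw [h1, pow_add, h2.neg_one_pow, mul_one]
  have hpm : ((-1 : ℝ) ^ (s * r)) * ((-1 : ℝ) ^ (s * r)) = 1 := by
    rw [← pow_add, ← two_mul, pow_mul]; norm_num
  have := hdet1.symm.trans hdet2
  rw [hsign] at this
  calc M.det = ((-1 : ℝ) ^ (s * r)) * (((-1 : ℝ) ^ (s * r)) * M.det) := by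
        rw [← mul_assoc, hpm, one_mul]
    _ = ((-1 : ℝ) ^ (s * r)) * (M₂.det * M₃.det) := by rw [← this]
    _ = _ := by ring
end

section
/- If a_i > b_j - 1 for all i,j (so that the factorial Cauchy matrix F(A,B) has no zero entries), then det(F(A,B)) = Δ(X) · S_λ(X,Y) / ∏_{k=1}^n (a_k)_{b_n}, where λ_j = b_n - b_j + j - n, x_i = a_i - b_n + 1, y_j = -j + 1, Δ(X) is the Vandermonde determinant ∏_{i<j}(x_i - x_j), and S_λ(X,Y) is the double Schur function. In particular, det(F(A,B)) > 0. -/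
/-- The falling factorial `(x)_k = x (x-1) ⋯ (x-k+1)` of a real number. -/
noncomputable def ffact (x : ℝ) (k : ℕ) : ℝ := ∏ i ∈ Finset.range k, (x - (i : ℝ))

/-- The Vandermonde product `Δ(X) = ∏_{i<j} (x_i - x_j)`. -/
noncomputable def vand {n : ℕ} (X : Fin n → ℝ) : ℝ :=
  ∏ p ∈ Finset.univ.filter (fun p : Fin n × Fin n => p.1 < p.2), (X p.1 - X p.2)

/-- `(x | Y)_k = ∏_{j=1}^k (x - y_j)`. -/
noncomputable def pochY (x : ℝ) (Y : ℕ → ℝ) (k : ℕ) : ℝ :=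
  ∏ m ∈ Finset.range k, (x - Y (m + 1))

open Finset Matrix Polynomial

/-- Descartes-type root bound: a nonzero combination of `card s` monomials cannot have
`card s` distinct positive roots. -/
lemma descartes : ∀ (N : ℕ) (s : Finset ℕ) (c : ℕ → ℝ), s.card = N → (∃ e ∈ s, c e ≠ 0) →
    ∀ (r : Fin N → ℝ), StrictMono r → (∀ i, 0 < r i) →
    (∀ i, ∑ e ∈ s, c e * r i ^ e = 0) → False := by
  intro N
  induction N with
  | zero =>
    intro s c hcard hex r _ _ _
    rw [Finset.card_eq_zero] at hcard
    subst hcard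
    obtain ⟨e, he, _⟩ := hex
    exact absurd he (Finset.notMem_empty e)
  | succ N ih =>
    intro s c hcard hex r hr hrpos hroot
    have hne : s.Nonempty := Finset.card_pos.mp (by omega)
    set e₀ := s.min' hne with he₀
    have he₀s : e₀ ∈ s := s.min'_mem hne
    have he₀le : ∀ e ∈ s, e₀ ≤ e := fun e he => s.min'_le e he
    -- the reduced function g
    set g : ℝ → ℝ := fun x => ∑ e ∈ s, c e * x ^ (e - e₀) with hg
    have hgroot : ∀ i, g (r i) = 0 := by
      intro i
      have h1 : (r i) ^ e₀ * g (r i) = ∑ e ∈ s, c e * r i ^ e := by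
        rw [hg, Finset.mul_sum]
        refine Finset.sum_congr rfl fun e he => ?_
        rw [mul_left_comm, ← pow_add, Nat.add_sub_cancel' (he₀le e he)]
      have h2 := hroot i
      have h3 : (r i) ^ e₀ ≠ 0 := pow_ne_zero _ (ne_of_gt (hrpos i))
      rw [h2] at h1
      exact (mul_eq_zero.mp h1).resolve_left h3
    by_cases hcase : ∃ e ∈ s.erase e₀, c e ≠ 0
    · -- Rolle step
      obtain ⟨eb, hebs, hebc⟩ := hcase
      set s'' : Finset ℕ := (s.erase e₀).image (fun e => e - e₀ - 1) with hs''
      set c'' : ℕ → ℝ := fun d => c (d + 1 + e₀) * ((d + 1 + e₀ : ℕ) - e₀ : ℕ) with hc''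
      have hinj : Set.InjOn (fun e => e - e₀ - 1) (s.erase e₀) := by
        intro x hx y hy hxy
        have hx' : e₀ < x := lt_of_le_of_ne (he₀le x (Finset.mem_of_mem_erase hx))
          (Ne.symm (Finset.ne_of_mem_erase hx))
        have hy' : e₀ < y := lt_of_le_of_ne (he₀le y (Finset.mem_of_mem_erase hy))
          (Ne.symm (Finset.ne_of_mem_erase hy))
        simp only at hxy
        omega
      have hcard'' : s''.card = N := by
        rw [hs'', Finset.card_image_of_injOn hinj, Finset.card_erase_of_mem he₀s, hcard]
        omega
      -- derivative formula : g has derivative g1 x at x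
      set g1 : ℝ → ℝ := fun x => ∑ d ∈ s'', c'' d * x ^ d with hg1
      have hg1eq : ∀ x : ℝ, g1 x = ∑ e ∈ s.erase e₀, c e * ((e - e₀ : ℕ) * x ^ (e - e₀ - 1)) := by
        intro x
        show ∑ d ∈ s'', c'' d * x ^ d = _
        rw [hs'', Finset.sum_image (fun a ha b hb hab => hinj ha hb hab)]
        refine Finset.sum_congr rfl fun e he => ?_
        have hx' : e₀ < e := lt_of_le_of_ne (he₀le e (Finset.mem_of_mem_erase he))
          (Ne.symm (Finset.ne_of_mem_erase he))
        have h1 : e - e₀ - 1 + 1 + e₀ = e := by omega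
        simp only [hc'', h1]
        ring
      have hderiv : ∀ x : ℝ, HasDerivAt g (g1 x) x := by
        intro x
        rw [hg1eq]
        have : ∀ e ∈ s, HasDerivAt (fun y : ℝ => c e * y ^ (e - e₀))
            (c e * ((e - e₀ : ℕ) * x ^ (e - e₀ - 1))) x := by
          intro e _
          exact (hasDerivAt_pow (e - e₀) x).const_mul (c e)
        have h := HasDerivAt.fun_sum (fun e he => this e he)
        have heq : ∑ e ∈ s, c e * ((e - e₀ : ℕ) * x ^ (e - e₀ - 1))
            = ∑ e ∈ s.erase e₀, c e * ((e - e₀ : ℕ) * x ^ (e - e₀ - 1)) := by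
          rw [← Finset.sum_erase_add s _ he₀s]
          simp
        rw [← heq]
        exact h
      -- Rolle points
      have hrolle : ∀ i : Fin N, ∃ ξ ∈ Set.Ioo (r i.castSucc) (r i.succ), g1 ξ = 0 := by
        intro i
        refine exists_hasDerivAt_eq_zero (hr (Fin.castSucc_lt_succ : i.castSucc < i.succ)) ?_ ?_ (fun x _ => hderiv x)
        · exact HasDerivAt.continuousOn (f' := g1) (fun x _ => hderiv x)
        · rw [hgroot, hgroot]
      choose ξ hξmem hξzero using hrolle
      have hξmono : StrictMono ξ := by
        intro i j hij
        have h1 : ξ i < r i.succ := (hξmem i).2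
        have h2 : r j.castSucc < ξ j := (hξmem j).1
        have h3 : r i.succ ≤ r j.castSucc := by
          apply hr.monotone
          rw [Fin.le_def]
          rw [Fin.lt_def] at hij
          simp only [Fin.val_succ, Fin.coe_castSucc]
          omega
        linarith
      have hξpos : ∀ i, 0 < ξ i := fun i => lt_trans (hrpos i.castSucc) (hξmem i).1
      refine ih s'' c'' hcard'' ⟨eb - e₀ - 1, ?_, ?_⟩ ξ hξmono hξpos (fun i => hξzero i)
      · exact Finset.mem_image_of_mem _ hebs
      · have heb' : e₀ < eb := lt_of_le_of_ne (he₀le eb (Finset.mem_of_mem_erase hebs))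
          (Ne.symm (Finset.ne_of_mem_erase hebs))
        have h1 : eb - e₀ - 1 + 1 + e₀ = eb := by omega
        simp only [hc'', h1]
        apply mul_ne_zero hebc
        have : (0:ℕ) < eb - e₀ := by omega
        positivity
    · -- all non-minimal coefficients vanish
      push_neg at hcase
      have hc₀ : c e₀ ≠ 0 := by
        obtain ⟨e, he, hce⟩ := hex
        rcases eq_or_ne e e₀ with h | h
        · rwa [h] at hce
        · exact absurd (hcase e (Finset.mem_erase.mpr ⟨h, he⟩)) hce
      have := hroot 0
      rw [← Finset.sum_erase_add s _ he₀s] at this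
      have hz : ∑ e ∈ s.erase e₀, c e * r 0 ^ e = 0 := by
        apply Finset.sum_eq_zero
        intro e he
        rw [hcase e he]
        ring
      rw [hz, zero_add] at this
      exact absurd this (mul_ne_zero hc₀ (pow_ne_zero _ (ne_of_gt (hrpos 0))))

/-- Fin-indexed version of Descartes. -/
lemma descartes_fin (n : ℕ) (e : Fin n → ℕ) (he : StrictMono e) (c : Fin n → ℝ) (hc : c ≠ 0)
    (r : Fin n → ℝ) (hr : StrictMono r) (hpos : ∀ i, 0 < r i)
    (hroot : ∀ i, ∑ j, c j * r i ^ e j = 0) : False := by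
  set s : Finset ℕ := Finset.univ.image e with hs
  have hcard : s.card = n := by
    rw [hs, Finset.card_image_of_injective _ he.injective, Finset.card_univ, Fintype.card_fin]
  set cb : ℕ → ℝ := fun d => ∑ j ∈ Finset.univ.filter (fun j => e j = d), c j with hcb
  have hsum : ∀ x : ℝ, ∑ d ∈ s, cb d * x ^ d = ∑ j, c j * x ^ e j := by
    intro x
    rw [hs]
    rw [Finset.sum_image' (fun j => c j * x ^ e j)]
    intro j _
    simp only [hcb]
    rw [Finset.sum_mul]
    refine Finset.sum_congr rfl fun i hi => ?_
    rw [Finset.mem_filter] at hi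
    rw [hi.2]
  obtain ⟨j₀, hj₀⟩ : ∃ j, c j ≠ 0 := Function.ne_iff.mp hc
  refine descartes n s cb hcard ⟨e j₀, Finset.mem_image_of_mem _ (Finset.mem_univ _), ?_⟩
    r hr hpos (fun i => by rw [hsum]; exact hroot i)
  show (∑ j ∈ Finset.univ.filter (fun j => e j = e j₀), c j) ≠ 0
  rw [Finset.sum_eq_single j₀]
  · exact hj₀
  · intro j hj hne
    rw [Finset.mem_filter] at hj
    exact absurd (he.injective hj.2) hne
  · intro h
    exact absurd (Finset.mem_filter.mpr ⟨Finset.mem_univ j₀, (rfl : e j₀ = e j₀)⟩ :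
      j₀ ∈ Finset.univ.filter (fun j => e j = e j₀)) h

lemma gv_nonzero {n : ℕ} (x : Fin n → ℝ) (e : Fin n → ℕ) (hx : StrictMono x)
    (hpos : ∀ i, 0 < x i) (he : StrictMono e) :
    (Matrix.of fun i j => x i ^ e j).det ≠ 0 := by
  intro h
  obtain ⟨v, hv, hmul⟩ := Matrix.exists_mulVec_eq_zero_iff.mpr h
  apply descartes_fin n e he v hv x hx hpos
  intro i
  have := congrFun hmul i
  simpa [Matrix.mulVec, dotProduct, mul_comm] using this

private lemma tendsto_pow_mul_inv_pow {p q : ℕ} (h : p < q) :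
    Filter.Tendsto (fun t : ℝ => t ^ p * (t ^ q)⁻¹) Filter.atTop (nhds 0) := by
  have h1 : Filter.Tendsto (fun t : ℝ => t ^ (q - p)) Filter.atTop Filter.atTop :=
    Filter.tendsto_pow_atTop (by omega)
  refine h1.inv_tendsto_atTop.congr' ?_
  filter_upwards [Filter.eventually_ge_atTop (1:ℝ)] with t ht
  have ht0 : t ≠ 0 := by linarith
  have hq : t ^ q = t ^ p * t ^ (q - p) := by rw [← pow_add]; congr 1; omega
  rw [Pi.inv_apply, hq, mul_inv]
  field_simp

lemma gv_pos : ∀ (n : ℕ) (x : Fin n → ℝ) (e : Fin n → ℕ), StrictMono x → (∀ i, 0 < x i) →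
    StrictMono e → 0 < (Matrix.of fun i j => x i ^ e j).det := by
  intro n
  induction n with
  | zero =>
    intro x e _ _ _
    simp [Matrix.det_isEmpty]
  | succ n ih =>
    intro x e hx hpos he
    set xt : ℝ → Fin (n+1) → ℝ := fun t => Function.update x (Fin.last n) t with hxt
    set f : ℝ → ℝ := fun t => (Matrix.of fun i j => xt t i ^ e j).det with hf
    have hxt_apply : ∀ t i, xt t i = if i = Fin.last n then t else x i := by
      intro t i; rw [hxt]; simp [Function.update_apply]
    have hxt_last : ∀ t, xt t (Fin.last n) = t := by intro t; rw [hxt_apply]; simp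
    have hxt_cast : ∀ t (i : Fin n), xt t (Fin.castSucc i) = x (Fin.castSucc i) := by
      intro t i; rw [hxt_apply, if_neg (Fin.castSucc_lt_last i).ne]
    have hxtmono : ∀ t, x (Fin.last n) ≤ t → StrictMono (xt t) := by
      intro t ht i j hij
      have hi : i ≠ Fin.last n := by
        intro hiL; rw [hiL] at hij
        exact absurd (hij.trans_le (Fin.le_last j)) (lt_irrefl _)
      rw [hxt_apply, hxt_apply, if_neg hi]
      by_cases hj : j = Fin.last n
      · rw [if_pos hj]
        have : x i < x (Fin.last n) := hx (hj ▸ hij)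
        linarith
      · rw [if_neg hj]; exact hx hij
    have hxtpos : ∀ t, x (Fin.last n) ≤ t → ∀ i, 0 < xt t i := by
      intro t ht i
      rw [hxt_apply]
      by_cases hi : i = Fin.last n
      · rw [if_pos hi]; exact lt_of_lt_of_le (hpos (Fin.last n)) ht
      · rw [if_neg hi]; exact hpos i
    have hne : ∀ t, x (Fin.last n) ≤ t → f t ≠ 0 :=
      fun t ht => gv_nonzero (xt t) e (hxtmono t ht) (hxtpos t ht) he
    set minor : Fin (n+1) → ℝ :=
      fun j => (Matrix.of fun (i' : Fin n) (j' : Fin n) =>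
        x (Fin.castSucc i') ^ e (j.succAbove j')).det with hminor
    have hexp : ∀ t, f t = ∑ j : Fin (n+1), (-1:ℝ) ^ (n + (j:ℕ)) * t ^ e j * minor j := by
      intro t
      rw [hf]
      show (Matrix.of fun i j => xt t i ^ e j).det = _
      rw [Matrix.det_succ_row _ (Fin.last n)]
      refine Finset.sum_congr rfl fun j _ => ?_
      simp only [Fin.val_last, Matrix.of_apply]
      congr 1
      · rw [hxt_last]
      · rw [hminor]
        show ((Matrix.of fun i j => xt t i ^ e j).submatrix (Fin.last n).succAbove
          j.succAbove).det = _
        rw [Fin.succAbove_last]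
        congr 1
        funext i' j'
        simp only [Matrix.submatrix_apply, Matrix.of_apply]
        rw [hxt_cast]
    have hminor_last_pos : 0 < minor (Fin.last n) := by
      rw [hminor]
      show 0 < (Matrix.of fun (i' : Fin n) (j' : Fin n) =>
        x (Fin.castSucc i') ^ e ((Fin.last n).succAbove j')).det
      rw [Fin.succAbove_last]
      exact ih (fun i => x (Fin.castSucc i)) (fun j => e (Fin.castSucc j))
        (fun i j hij => hx (by simpa using hij)) (fun i => hpos _)
        (fun i j hij => he (by simpa using hij))
    have htend : Filter.Tendsto (fun t => f t * (t ^ e (Fin.last n))⁻¹) Filter.atTop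
        (nhds (minor (Fin.last n))) := by
      have hterm : ∀ j : Fin (n+1), Filter.Tendsto
          (fun t => (-1:ℝ) ^ (n + (j:ℕ)) * t ^ e j * minor j * (t ^ e (Fin.last n))⁻¹)
          Filter.atTop (nhds (if j = Fin.last n then minor (Fin.last n) else 0)) := by
        intro j
        by_cases hj : j = Fin.last n
        · subst hj
          rw [if_pos rfl]
          have heven : (-1:ℝ) ^ (n + ((Fin.last n : Fin (n+1)):ℕ)) = 1 := by
            simp only [Fin.val_last]
            exact Even.neg_one_pow ⟨n, by ring⟩
          refine (Filter.Tendsto.congr' ?_ tendsto_const_nhds)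
          filter_upwards [Filter.eventually_ge_atTop (1:ℝ)] with t ht
          have ht0 : t ^ e (Fin.last n) ≠ 0 := pow_ne_zero _ (by linarith)
          rw [heven]
          field_simp
        · rw [if_neg hj]
          have hjL : j < Fin.last n := lt_of_le_of_ne (Fin.le_last j) hj
          have hlt : e j < e (Fin.last n) := he hjL
          have h0 := (tendsto_pow_mul_inv_pow hlt).const_mul
            ((-1:ℝ) ^ (n + (j:ℕ)) * minor j)
          rw [mul_zero] at h0
          refine h0.congr fun t => ?_
          ring
      have hsum := tendsto_finset_sum Finset.univ (fun j (_ : j ∈ Finset.univ) => hterm j)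
      have hcollapse : (∑ j : Fin (n+1), if j = Fin.last n then minor (Fin.last n) else 0)
          = minor (Fin.last n) := by simp
      rw [hcollapse] at hsum
      refine hsum.congr fun t => ?_
      rw [hexp, Finset.sum_mul]
    -- find T with f T > 0
    have hTex : ∃ T, max (x (Fin.last n)) 1 ≤ T ∧ 0 < f T * (T ^ e (Fin.last n))⁻¹ := by
      have h1 := htend.eventually (lt_mem_nhds hminor_last_pos)
      have h2 := Filter.eventually_ge_atTop (max (x (Fin.last n)) 1)
      obtain ⟨T, hT1, hT2⟩ := (h2.and h1).exists
      exact ⟨T, hT1, hT2⟩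
    obtain ⟨T, hT1, hT2⟩ := hTex
    have hTpos : (0:ℝ) < T := lt_of_lt_of_le (by norm_num) (le_trans (le_max_right _ _) hT1)
    have hfT : 0 < f T := by
      have hpow : (0:ℝ) < T ^ e (Fin.last n) := pow_pos hTpos _
      have := mul_pos hT2 hpow
      rwa [mul_assoc, inv_mul_cancel₀ (ne_of_gt hpow), mul_one] at this
    -- continuity
    have hcont : Continuous f := by
      rw [hf]
      apply Continuous.matrix_det
      apply continuous_matrix
      intro i j
      simp only [Matrix.of_apply]
      have : (fun t => xt t i ^ e j) = fun t => (if i = Fin.last n then t else x i) ^ e j := by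
        funext t; rw [hxt_apply]
      rw [this]
      by_cases hi : i = Fin.last n
      · simp only [if_pos hi]; exact (continuous_id.pow _)
      · simp only [if_neg hi]; exact continuous_const
    -- IVT
    have hfx : 0 < f (x (Fin.last n)) := by
      rcases lt_trichotomy (f (x (Fin.last n))) 0 with hlt | heq | hgt
      · exfalso
        have hle : x (Fin.last n) ≤ T := le_trans (le_max_left _ _) hT1
        have := intermediate_value_Icc hle hcont.continuousOn
        have h0mem : (0:ℝ) ∈ Set.Icc (f (x (Fin.last n))) (f T) := ⟨le_of_lt hlt, le_of_lt hfT⟩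
        obtain ⟨ξ, hξmem, hξ0⟩ := this h0mem
        exact hne ξ hξmem.1 hξ0
      · exact absurd heq (hne _ (le_refl _))
      · exact hgt
    have : f (x (Fin.last n)) = (Matrix.of fun i j => x i ^ e j).det := by
      rw [hf]
      show (Matrix.of fun i j => xt (x (Fin.last n)) i ^ e j).det = _
      congr 1
      funext i j
      simp only [Matrix.of_apply]
      show Function.update x (Fin.last n) (x (Fin.last n)) i ^ e j = _
      rw [Function.update_eq_self]
    rwa [this] at hfx

theorem cauchy_binet {n N : ℕ} (A : Matrix (Fin n) (Fin N) ℝ) (B : Matrix (Fin N) (Fin n) ℝ) :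
    (A * B).det = ∑ f ∈ Finset.univ.filter (fun f : Fin n → Fin N => StrictMono f),
      (A.submatrix id f).det * (B.submatrix f id).det := by
  classical
  set g : (Fin n → Fin N) → ℝ :=
    fun φ => (∏ i, A i (φ i)) * (B.submatrix φ id).det with hg
  have step1 : (A * B).det = ∑ φ : Fin n → Fin N, g φ := by
    have h1 : (A * B) = Matrix.of fun i => ∑ t : Fin N, A i t • B t := by
      ext i j
      simp [Matrix.mul_apply, Finset.sum_apply]
    rw [h1]
    have h2 : (Matrix.of fun i => ∑ t : Fin N, A i t • B t).det
        = Matrix.detRowAlternating (fun i => ∑ t : Fin N, A i t • B t) := rfl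
    rw [h2]
    have h3 := (Matrix.detRowAlternating (R := ℝ) (n := Fin n)).toMultilinearMap.map_sum
      (fun (i : Fin n) (t : Fin N) => A i t • B t)
    simp only [AlternatingMap.coe_multilinearMap] at h3
    rw [h3]
    refine Finset.sum_congr rfl fun φ _ => ?_
    have h4 := (Matrix.detRowAlternating (R := ℝ) (n := Fin n)).toMultilinearMap.map_smul_univ
      (fun i => A i (φ i)) (fun i => B (φ i))
    simp only [AlternatingMap.coe_multilinearMap] at h4
    rw [h4, hg]
    rw [smul_eq_mul]
    rfl
  rw [step1]
  have step2 : ∑ φ : Fin n → Fin N, g φ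
      = ∑ φ ∈ Finset.univ.filter (fun φ : Fin n → Fin N => Function.Injective φ), g φ := by
    symm
    apply Finset.sum_subset (Finset.filter_subset _ _)
    intro φ _ hφ
    simp only [Finset.mem_filter, Finset.mem_univ, true_and] at hφ
    rw [Function.not_injective_iff] at hφ
    obtain ⟨i, j, hij, hne⟩ := hφ
    have : (B.submatrix φ id).det = 0 := by
      have : (B.submatrix φ id).det = Matrix.detRowAlternating (fun i => B (φ i)) := rfl
      rw [this]
      exact AlternatingMap.map_eq_zero_of_eq _ _ (by rw [hij]) hne
    show (∏ i, A i (φ i)) * (B.submatrix φ id).det = 0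
    rw [this, mul_zero]
  rw [step2]
  -- reindex by (strictly monotone map, permutation)
  have step3 : ∑ φ ∈ Finset.univ.filter (fun φ : Fin n → Fin N => Function.Injective φ), g φ
      = ∑ p ∈ (Finset.univ.filter (fun f : Fin n → Fin N => StrictMono f)) ×ˢ
          (Finset.univ : Finset (Equiv.Perm (Fin n))), g (p.1 ∘ p.2) := by
    symm
    refine Finset.sum_bij (fun p _ => p.1 ∘ p.2) ?_ ?_ ?_ ?_
    · rintro ⟨f, σ⟩ hp
      simp only [Finset.mem_product, Finset.mem_filter, Finset.mem_univ, true_and,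
        and_true] at hp
      simp only [Finset.mem_filter, Finset.mem_univ, true_and]
      exact hp.injective.comp σ.injective
    · rintro ⟨f₁, σ₁⟩ hp₁ ⟨f₂, σ₂⟩ hp₂ heq
      simp only [Finset.mem_product, Finset.mem_filter, Finset.mem_univ, true_and,
        and_true] at hp₁ hp₂
      simp only at heq
      have himg : Finset.univ.image f₁ = Finset.univ.image f₂ := by
        have h1 : Finset.univ.image (f₁ ∘ σ₁) = Finset.univ.image f₁ := by
          rw [← Finset.image_image]
          congr 1
          exact Finset.image_univ_equiv σ₁
        have h2 : Finset.univ.image (f₂ ∘ σ₂) = Finset.univ.image f₂ := by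
          rw [← Finset.image_image]
          congr 1
          exact Finset.image_univ_equiv σ₂
        rw [← h1, ← h2, heq]
      have hcard₁ : (Finset.univ.image f₁).card = n := by
        rw [Finset.card_image_of_injective _ hp₁.injective, Finset.card_univ, Fintype.card_fin]
      have hf12 : f₁ = f₂ := by
        have e1 := Finset.orderEmbOfFin_unique hcard₁ (f := f₁)
          (fun x => Finset.mem_image_of_mem _ (Finset.mem_univ x)) hp₁
        have e2 := Finset.orderEmbOfFin_unique (s := Finset.univ.image f₁) hcard₁ (f := f₂)
          (fun x => by rw [himg]; exact Finset.mem_image_of_mem _ (Finset.mem_univ x)) hp₂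
        rw [e1, e2]
      have hσ : σ₁ = σ₂ := by
        apply Equiv.ext
        intro i
        apply hp₁.injective
        have := congrFun heq i
        simp only [Function.comp_apply] at this
        rw [this, hf12]
      rw [Prod.mk.injEq]
      exact ⟨hf12, hσ⟩
    · intro φ hφ
      simp only [Finset.mem_filter, Finset.mem_univ, true_and] at hφ
      set s₀ := Finset.univ.image φ with hs₀
      have hcard : s₀.card = n := by
        rw [hs₀, Finset.card_image_of_injective _ hφ, Finset.card_univ, Fintype.card_fin]
      set f : Fin n → Fin N := fun i => s₀.orderEmbOfFin hcard i with hfdef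
      have hmem : ∀ i, φ i ∈ s₀ := fun i => Finset.mem_image_of_mem _ (Finset.mem_univ i)
      set σ0 : Fin n → Fin n := fun i => (s₀.orderIsoOfFin hcard).symm ⟨φ i, hmem i⟩ with hσ0
      have hσ0inj : Function.Injective σ0 := by
        intro i j hij
        apply hφ
        rw [hσ0] at hij
        have := (s₀.orderIsoOfFin hcard).symm.injective hij
        exact congrArg Subtype.val this
      have hσ0bij : Function.Bijective σ0 := (Finite.injective_iff_bijective).mp hσ0inj
      refine ⟨(f, Equiv.ofBijective σ0 hσ0bij), ?_, ?_⟩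
      · simp only [Finset.mem_product, Finset.mem_filter, Finset.mem_univ, true_and]
        exact ⟨(s₀.orderEmbOfFin hcard).strictMono, trivial⟩
      · funext i
        show (s₀.orderEmbOfFin hcard) ((s₀.orderIsoOfFin hcard).symm ⟨φ i, hmem i⟩) = φ i
        have : (s₀.orderEmbOfFin hcard) ((s₀.orderIsoOfFin hcard).symm ⟨φ i, hmem i⟩)
            = ((s₀.orderIsoOfFin hcard) ((s₀.orderIsoOfFin hcard).symm ⟨φ i, hmem i⟩) : Fin N) := by
          rw [Finset.coe_orderIsoOfFin_apply]
        rw [this, OrderIso.apply_symm_apply]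
    · intro p _
      rfl
  rw [step3, Finset.sum_product]
  refine Finset.sum_congr rfl fun f hf => ?_
  simp only [Finset.mem_filter, Finset.mem_univ, true_and] at hf
  have hBsub : ∀ σ : Equiv.Perm (Fin n), B.submatrix (f ∘ σ) id
      = (B.submatrix f id).submatrix σ id := by
    intro σ
    rw [Matrix.submatrix_submatrix]
    rfl
  have hinner : ∀ σ : Equiv.Perm (Fin n),
      g (f ∘ σ) = (↑↑(Equiv.Perm.sign σ) * ∏ i, A i (f (σ i))) * (B.submatrix f id).det := by
    intro σ
    show (∏ i, A i ((f ∘ σ) i)) * (B.submatrix (f ∘ σ) id).det = _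
    rw [hBsub σ, Matrix.det_permute]
    simp only [Function.comp_apply]
    ring
  calc ∑ σ : Equiv.Perm (Fin n), g (f ∘ σ)
      = (∑ σ : Equiv.Perm (Fin n), ↑↑(Equiv.Perm.sign σ) * ∏ i, A i (f (σ i)))
        * (B.submatrix f id).det := by
        rw [Finset.sum_mul]
        exact Finset.sum_congr rfl fun σ _ => hinner σ
    _ = (A.submatrix id f).det * (B.submatrix f id).det := by
        congr 1
        rw [← Matrix.det_transpose (A.submatrix id f), Matrix.det_apply']
        rfl

/-- coefficients of `∏_{i<k} (X + a i)` -/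
noncomputable def tri (a : ℕ → ℝ) (k m : ℕ) : ℝ :=
  (∏ i ∈ Finset.range k, (Polynomial.X + Polynomial.C (a i))).coeff m

lemma tri_monic (a : ℕ → ℝ) (k : ℕ) :
    (∏ i ∈ Finset.range k, (Polynomial.X + Polynomial.C (a i))).Monic :=
  monic_prod_of_monic _ _ (fun i _ => monic_X_add_C (a i))

lemma tri_natDegree (a : ℕ → ℝ) (k : ℕ) :
    (∏ i ∈ Finset.range k, (Polynomial.X + Polynomial.C (a i))).natDegree = k := by
  rw [natDegree_prod_of_monic _ _ (fun i _ => monic_X_add_C (a i))]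
  simp [natDegree_X_add_C]

lemma tri_diag (a : ℕ → ℝ) (k : ℕ) : tri a k k = 1 := by
  have := (tri_monic a k).coeff_natDegree
  rwa [tri_natDegree] at this

lemma tri_eq_zero (a : ℕ → ℝ) {k m : ℕ} (h : k < m) : tri a k m = 0 := by
  apply coeff_eq_zero_of_natDegree_lt
  rwa [tri_natDegree]

lemma tri_zero (a : ℕ → ℝ) (m : ℕ) : tri a 0 m = if m = 0 then 1 else 0 := by
  unfold tri
  rw [Finset.range_zero, Finset.prod_empty]
  rcases eq_or_ne m 0 with h | h
  · simp [h]
  · simp [h, coeff_one, Ne.symm h]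

lemma tri_succ_left (a : ℕ → ℝ) (k m : ℕ) :
    tri a (k+1) m = (if m = 0 then 0 else tri (fun i => a (i+1)) k (m-1))
      + a 0 * tri (fun i => a (i+1)) k m := by
  unfold tri
  rw [Finset.prod_range_succ']
  set p := ∏ i ∈ Finset.range k, (Polynomial.X + Polynomial.C (a (i+1))) with hp
  have hsplit : p * (Polynomial.X + Polynomial.C (a 0))
      = p * Polynomial.X + p * Polynomial.C (a 0) := by ring
  rw [hsplit, Polynomial.coeff_add, Polynomial.coeff_mul_C]
  rcases m with _ | m
  · simp [mul_comm]
  · rw [Polynomial.coeff_mul_X]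
    simp [mul_comm]

lemma tri_nonneg (a : ℕ → ℝ) (ha : ∀ i, 0 ≤ a i) : ∀ k m, 0 ≤ tri a k m := by
  intro k
  induction k generalizing a ha with
  | zero => intro m; rw [tri_zero]; split <;> norm_num
  | succ k ih =>
    intro m
    rw [tri_succ_left]
    have h1 : ∀ m, 0 ≤ tri (fun i => a (i+1)) k m := ih (fun i => a (i+1)) (fun i => ha _)
    have h2 : 0 ≤ a 0 := ha 0
    split
    · rw [zero_add]; exact mul_nonneg h2 (h1 m)
    · exact add_nonneg (h1 (m-1)) (mul_nonneg h2 (h1 m))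

private lemma strictmono_gap {n : ℕ} {u : Fin (n+1) → ℕ} (hu : StrictMono u)
    (i j : Fin (n+1)) (hij : (i:ℕ) + 2 ≤ (j:ℕ)) : u i + 2 ≤ u j := by
  have hjn : (i:ℕ) + 1 < n + 1 := by omega
  have h1 : i < (⟨(i:ℕ)+1, hjn⟩ : Fin (n+1)) := by rw [Fin.lt_def]; simp
  have h2 : (⟨(i:ℕ)+1, hjn⟩ : Fin (n+1)) < j := by rw [Fin.lt_def]; simp; omega
  have := hu h1
  have := hu h2
  omega

/-- minors of a lower bidiagonal matrix with nonnegative entries are nonnegative -/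
lemma bidiag_det_nonneg : ∀ (n : ℕ) (a0 : ℝ), 0 ≤ a0 → ∀ (f g : Fin n → ℕ),
    StrictMono f → StrictMono g →
    0 ≤ (Matrix.of fun l m => (if f l = g m + 1 then (1:ℝ) else 0)
      + (if f l = g m then a0 else 0)).det := by
  intro n
  induction n with
  | zero => intro a0 _ f g _ _; simp [Matrix.det_isEmpty]
  | succ n ih =>
    intro a0 ha0 f g hf hg
    set M := Matrix.of fun (l m : Fin (n+1)) => (if f l = g m + 1 then (1:ℝ) else 0)
      + (if f l = g m then a0 else 0) with hM
    have hMapp : ∀ l m, M l m = (if f l = g m + 1 then (1:ℝ) else 0)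
      + (if f l = g m then a0 else 0) := fun l m => rfl
    have hminor0 : 0 ≤ (M.submatrix (Fin.succAbove 0) Fin.succ).det := by
      have : M.submatrix (Fin.succAbove 0) Fin.succ
          = Matrix.of fun l m => (if f (Fin.succ l) = g (Fin.succ m) + 1 then (1:ℝ) else 0)
            + (if f (Fin.succ l) = g (Fin.succ m) then a0 else 0) := by
        funext l m
        simp only [Matrix.submatrix_apply, Fin.succAbove_zero]
        rfl
      rw [this]
      exact ih a0 ha0 (fun l => f (Fin.succ l)) (fun m => g (Fin.succ m))
        (fun i j hij => hf (by simpa using hij)) (fun i j hij => hg (by simpa using hij))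
    rcases lt_trichotomy (f 0) (g 0) with hlt | heq | hgt
    · -- row 0 is zero
      have : M.det = 0 := by
        apply Matrix.det_eq_zero_of_row_eq_zero 0
        intro m
        rw [hMapp]
        have hgm : g 0 ≤ g m := hg.monotone (Fin.zero_le m)
        rw [if_neg (by omega), if_neg (by omega), add_zero]
      rw [this]
    · -- f 0 = g 0 : expand along column 0
      rw [Matrix.det_succ_column_zero]
      rw [Finset.sum_eq_single 0]
      · simp only [Fin.val_zero, pow_zero, one_mul]
        rw [hMapp]
        rw [if_neg (by omega), if_pos (by omega), zero_add]
        exact mul_nonneg ha0 hminor0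
      · intro l _ hl0
        rcases Nat.lt_or_ge (l:ℕ) 2 with hl2 | hl2
        · -- (l:ℕ) = 1 : the minor has a zero row
          have hl1 : (l:ℕ) = 1 := by
            have := Fin.pos_iff_ne_zero.mpr hl0
            rw [Fin.lt_def] at this
            omega
          have hn1 : 0 < n := by have := l.isLt; omega
          have hrow : ∀ m : Fin n, (M.submatrix l.succAbove Fin.succ) ⟨0, hn1⟩ m = 0 := by
            intro m
            have hsa : l.succAbove ⟨0, hn1⟩ = 0 := by
              have h := Fin.succAbove_of_castSucc_lt (p := l) (i := ⟨0, hn1⟩)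
                (by rw [Fin.lt_def]; simp [hl1])
              rw [h]
              ext
              simp
            simp only [Matrix.submatrix_apply, hsa]
            rw [hMapp]
            have hgm : g 0 < g (Fin.succ m) := hg (Fin.succ_pos m)
            rw [if_neg (by omega), if_neg (by omega), add_zero]
          rw [Matrix.det_eq_zero_of_row_eq_zero ⟨0, hn1⟩ hrow]
          ring
        · -- (l:ℕ) ≥ 2 : the entry is zero
          have : f 0 + 2 ≤ f l := strictmono_gap hf 0 l (by simpa using hl2)
          rw [hMapp]
          rw [if_neg (by omega), if_neg (by omega)]
          ring
      · intro h
        exact absurd (Finset.mem_univ 0) h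
    · rcases Nat.lt_or_ge (g 0 + 1) (f 0) with hgt2 | hle
      · -- column 0 is zero
        have : M.det = 0 := by
          apply Matrix.det_eq_zero_of_column_eq_zero 0
          intro l
          rw [hMapp]
          have hfl : f 0 ≤ f l := hf.monotone (Fin.zero_le l)
          rw [if_neg (by omega), if_neg (by omega), add_zero]
        rw [this]
      · -- f 0 = g 0 + 1
        have heq1 : f 0 = g 0 + 1 := by omega
        rw [Matrix.det_succ_column_zero]
        rw [Finset.sum_eq_single 0]
        · simp only [Fin.val_zero, pow_zero, one_mul]
          rw [hMapp]
          rw [if_pos (by omega), if_neg (by omega), add_zero, one_mul]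
          exact hminor0
        · intro l _ hl0
          have hfl : f 0 < f l := hf (Fin.pos_iff_ne_zero.mpr hl0)
          rw [hMapp]
          rw [if_neg (by omega), if_neg (by omega)]
          ring
        · intro h
          exact absurd (Finset.mem_univ 0) h

lemma tri_det_nonneg_aux : ∀ (meas : ℕ) (n : ℕ) (a : ℕ → ℝ), (∀ i, 0 ≤ a i) →
    ∀ (k f : Fin n → ℕ), StrictMono k → StrictMono f → n + (∑ j, k j) ≤ meas →
    0 ≤ (Matrix.of fun j l => tri a (k j) (f l)).det := by
  intro meas
  induction meas using Nat.strong_induction_on with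
  | _ meas IH =>
    intro n a ha k f hk hf hmeas
    match n with
    | 0 => simp [Matrix.det_isEmpty]
    | (n' + 1) =>
      rcases Nat.eq_zero_or_pos (k 0) with hk0 | hk0
      · rcases Nat.eq_zero_or_pos (f 0) with hf0 | hf0
        · -- k 0 = 0, f 0 = 0 : expand along row 0
          rw [Matrix.det_succ_row_zero]
          rw [Finset.sum_eq_single 0]
          · simp only [Fin.val_zero, pow_zero, one_mul, Matrix.of_apply]
            rw [hk0, hf0, tri_zero, if_pos rfl, one_mul]
            have hsub : ((Matrix.of fun j l => tri a (k j) (f l)).submatrix Fin.succ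
                (Fin.succAbove 0)) = Matrix.of fun (j l : Fin n') =>
                tri a (k (Fin.succ j)) (f (Fin.succ l)) := by
              funext j l
              simp only [Matrix.submatrix_apply, Fin.succAbove_zero, Matrix.of_apply]
            rw [hsub]
            refine IH (n' + ∑ j : Fin n', k (Fin.succ j)) ?_ n' a ha _ _
              (fun i j hij => hk (by simpa using hij))
              (fun i j hij => hf (by simpa using hij)) (le_refl _)
            have hsum : ∑ j : Fin (n'+1), k j = k 0 + ∑ j : Fin n', k (Fin.succ j) :=
              Fin.sum_univ_succ k
            omega
          · intro l _ hl0
            have hfl : f 0 < f l := hf (Fin.pos_iff_ne_zero.mpr hl0)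
            simp only [Matrix.of_apply]
            rw [hk0, tri_zero, if_neg (by omega)]
            ring
          · intro h
            exact absurd (Finset.mem_univ 0) h
        · -- k 0 = 0, f 0 > 0 : row 0 is zero
          rw [Matrix.det_eq_zero_of_row_eq_zero 0]
          intro l
          simp only [Matrix.of_apply]
          have hfl : f 0 ≤ f l := hf.monotone (Fin.zero_le l)
          rw [hk0, tri_zero, if_neg (by omega)]
      · -- k 0 ≥ 1 : factor out (X + a 0)
        have hk1 : ∀ j, 1 ≤ k j := fun j => le_trans hk0 (hk.monotone (Fin.zero_le j))
        set K := f (Fin.last n') + 1 with hK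
        have hfK : ∀ l, f l < K := fun l =>
          lt_of_le_of_lt (hf.monotone (Fin.le_last l)) (by omega)
        set a' : ℕ → ℝ := fun i => a (i+1) with ha'
        set NA : Matrix (Fin (n'+1)) (Fin K) ℝ :=
          Matrix.of fun j m => tri a' (k j - 1) (m:ℕ) with hNA
        set BD : Matrix (Fin K) (Fin (n'+1)) ℝ :=
          Matrix.of fun m l => (if f l = (m:ℕ) + 1 then (1:ℝ) else 0)
            + (if f l = (m:ℕ) then a 0 else 0) with hBD
        have hfact : (Matrix.of fun j l => tri a (k j) (f l)) = NA * BD := by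
          funext j l
          show tri a (k j) (f l) = (NA * BD) j l
          rw [Matrix.mul_apply]
          have hsplit : ∀ m : Fin K, NA j m * BD m l
              = (if f l = (m:ℕ) + 1 then tri a' (k j - 1) (m:ℕ) else 0)
                + (if f l = (m:ℕ) then tri a' (k j - 1) (m:ℕ) * a 0 else 0) := by
            intro m
            show tri a' (k j - 1) (m:ℕ) * ((if f l = (m:ℕ) + 1 then (1:ℝ) else 0)
              + (if f l = (m:ℕ) then a 0 else 0)) = _
            by_cases h1 : f l = (m:ℕ)+1
            · by_cases h2 : f l = (m:ℕ)
              · omega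
              · simp [h1, h2]
            · by_cases h2 : f l = (m:ℕ)
              · simp [h1, h2]
              · simp [h1, h2]
          rw [Finset.sum_congr rfl (fun m _ => hsplit m), Finset.sum_add_distrib]
          have h2 : (∑ m : Fin K, if f l = (m:ℕ) then tri a' (k j - 1) (m:ℕ) * a 0 else 0)
              = tri a' (k j - 1) (f l) * a 0 := by
            rw [Finset.sum_eq_single (⟨f l, hfK l⟩ : Fin K)]
            · simp
            · intro m _ hm
              rw [if_neg]
              intro hc
              apply hm
              ext
              show (m:ℕ) = f l
              omega
            · intro h
              exact absurd (Finset.mem_univ _) h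
          rw [h2]
          rcases Nat.eq_zero_or_pos (f l) with hfl0 | hfl0
          · have h1 : (∑ m : Fin K, if f l = (m:ℕ) + 1 then tri a' (k j - 1) (m:ℕ) else 0)
                = 0 := by
              apply Finset.sum_eq_zero
              intro m _
              rw [if_neg (by omega)]
            rw [h1, hfl0, zero_add]
            obtain ⟨kj', hkj'⟩ : ∃ kj', k j = kj' + 1 := ⟨k j - 1, by have := hk1 j; omega⟩
            rw [hkj', tri_succ_left, if_pos rfl, zero_add]
            simp only [Nat.add_sub_cancel]
            ring
          · obtain ⟨q, hq⟩ : ∃ q, f l = q + 1 := ⟨f l - 1, by omega⟩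
            have hqK : q < K := by have h3 := hfK l; omega
            have h1 : (∑ m : Fin K, if f l = (m:ℕ) + 1 then tri a' (k j - 1) (m:ℕ) else 0)
                = tri a' (k j - 1) q := by
              rw [Finset.sum_eq_single (⟨q, hqK⟩ : Fin K)]
              · rw [if_pos (by simp [hq])]
              · intro m _ hm
                rw [if_neg]
                intro hc
                apply hm
                ext
                show (m:ℕ) = q
                omega
              · intro h
                exact absurd (Finset.mem_univ _) h
            rw [h1]
            obtain ⟨kj', hkj'⟩ : ∃ kj', k j = kj' + 1 := ⟨k j - 1, by have := hk1 j; omega⟩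
            rw [hkj', hq, tri_succ_left, if_neg (by omega)]
            simp only [Nat.add_sub_cancel]
            ring
        rw [hfact, cauchy_binet]
        apply Finset.sum_nonneg
        intro g hg
        simp only [Finset.mem_filter, Finset.mem_univ, true_and] at hg
        apply mul_nonneg
        · -- minor of NA
          have hsub : NA.submatrix id g = Matrix.of fun j l => tri a' (k j - 1) ((g l : ℕ)) := by
            funext j l
            rfl
          rw [hsub]
          refine IH ((n'+1) + ∑ j : Fin (n'+1), (k j - 1)) ?_ (n'+1) a' (fun i => ha _) _ _
            (fun i j hij => by have := hk hij; have := hk1 i; omega)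
            (fun i j hij => by exact_mod_cast (hg hij)) (le_refl _)
          have hsum : ∑ j : Fin (n'+1), (k j - 1) + ∑ j : Fin (n'+1), 1
              = ∑ j : Fin (n'+1), k j := by
            rw [← Finset.sum_add_distrib]
            exact Finset.sum_congr rfl fun j _ => by have := hk1 j; omega
          have hcard : (∑ j : Fin (n'+1), (1:ℕ)) = n' + 1 := by simp
          omega
        · -- minor of BD
          rw [← Matrix.det_transpose]
          have hsub : (BD.submatrix g id)ᵀ = Matrix.of fun l m =>
              (if f l = ((g m : ℕ)) + 1 then (1:ℝ) else 0)
              + (if f l = ((g m : ℕ)) then a 0 else 0) := by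
            funext l m
            rfl
          rw [hsub]
          exact bidiag_det_nonneg (n'+1) (a 0) (ha 0) f (fun m => (g m : ℕ)) hf
            (fun i j hij => by exact_mod_cast (hg hij))

/-- positivity of the "rising factorial" generalized Vandermonde determinant -/
lemma rf_pos (n : ℕ) (x : Fin n → ℝ) (k : Fin n → ℕ) (hx : StrictMono x)
    (hpos : ∀ i, 0 < x i) (hk : StrictMono k) :
    0 < (Matrix.of fun i j => ∏ m ∈ Finset.range (k j), (x i + (m:ℝ))).det := by
  cases n with
  | zero => simp [Matrix.det_isEmpty]
  | succ n' =>
    set K := k (Fin.last n') + 1 with hK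
    have hkK : ∀ j, k j < K := fun j =>
      lt_of_le_of_lt (hk.monotone (Fin.le_last j)) (by omega)
    set aN : ℕ → ℝ := fun i => (i : ℝ) with haN
    set A : Matrix (Fin (n'+1)) (Fin K) ℝ := Matrix.of fun i m => x i ^ (m:ℕ) with hA
    set B : Matrix (Fin K) (Fin (n'+1)) ℝ := Matrix.of fun m j => tri aN (k j) (m:ℕ) with hB
    have hfact : (Matrix.of fun i j => ∏ m ∈ Finset.range (k j), (x i + (m:ℝ))) = A * B := by
      funext i j
      show ∏ m ∈ Finset.range (k j), (x i + (m:ℝ)) = (A * B) i j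
      rw [Matrix.mul_apply]
      have hP : (∏ t ∈ Finset.range (k j), (Polynomial.X + Polynomial.C (aN t))).eval (x i)
          = ∏ m ∈ Finset.range (k j), (x i + (m:ℝ)) := by
        rw [Polynomial.eval_prod]
        refine Finset.prod_congr rfl fun t _ => ?_
        simp [haN]
      have hdeg : (∏ t ∈ Finset.range (k j), (Polynomial.X + Polynomial.C (aN t))).natDegree
          < K := by rw [tri_natDegree]; exact hkK j
      rw [← hP, Polynomial.eval_eq_sum_range' hdeg]
      have hstep : ∀ m : Fin K, A i m * B m j = x i ^ (m:ℕ) * tri aN (k j) (m:ℕ) :=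
        fun _ => rfl
      rw [Finset.sum_congr rfl (fun m (_ : m ∈ Finset.univ) => hstep m)]
      rw [Fin.sum_univ_eq_sum_range (fun mm => x i ^ mm * tri aN (k j) mm) K]
      refine Finset.sum_congr rfl fun m _ => ?_
      rw [mul_comm]
      rfl
    rw [hfact, cauchy_binet]
    have hterm_nonneg : ∀ g ∈ Finset.univ.filter
        (fun g : Fin (n'+1) → Fin K => StrictMono g),
        0 ≤ (A.submatrix id g).det * (B.submatrix g id).det := by
      intro g hg
      simp only [Finset.mem_filter, Finset.mem_univ, true_and] at hg
      apply mul_nonneg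
      · have hsub : A.submatrix id g = Matrix.of fun i l => x i ^ ((g l : ℕ)) := rfl
        rw [hsub]
        exact le_of_lt (gv_pos _ x (fun l => (g l : ℕ)) hx hpos
          (fun i j hij => by exact_mod_cast (hg hij)))
      · rw [← Matrix.det_transpose]
        have hsub : (B.submatrix g id)ᵀ = Matrix.of fun j m => tri aN (k j) ((g m : ℕ)) := rfl
        rw [hsub]
        exact tri_det_nonneg_aux ((n'+1) + ∑ j, k j) (n'+1) aN
          (fun i => Nat.cast_nonneg i) k (fun m => (g m : ℕ)) hk
          (fun i j hij => by exact_mod_cast (hg hij)) (le_refl _)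
    apply Finset.sum_pos'
    · exact hterm_nonneg
    · refine ⟨fun j => (⟨k j, hkK j⟩ : Fin K), ?_, ?_⟩
      · simp only [Finset.mem_filter, Finset.mem_univ, true_and]
        intro i j hij
        rw [Fin.lt_def]
        exact hk hij
      · have h1 : 0 < (A.submatrix id (fun j => (⟨k j, hkK j⟩ : Fin K))).det := by
          have hsub : A.submatrix id (fun j => (⟨k j, hkK j⟩ : Fin K))
              = Matrix.of fun i l => x i ^ (k l) := rfl
          rw [hsub]
          exact gv_pos _ x k hx hpos hk
        have h2 : (B.submatrix (fun j => (⟨k j, hkK j⟩ : Fin K)) id).det = 1 := by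
          have htri : (B.submatrix (fun j => (⟨k j, hkK j⟩ : Fin K)) id).BlockTriangular id := by
            intro m j hmj
            show tri aN (k j) (k m) = 0
            exact tri_eq_zero _ (hk hmj)
          rw [Matrix.det_of_upperTriangular htri]
          have : ∀ j : Fin (n'+1),
              (B.submatrix (fun j => (⟨k j, hkK j⟩ : Fin K)) id) j j = 1 := by
            intro j
            show tri aN (k j) (k j) = 1
            exact tri_diag _ _
          rw [Finset.prod_congr rfl (fun j _ => this j)]
          simp
        rw [h2, mul_one]
        exact h1

/-- In the zero-free case, `det F(A,B) = Δ(X) · S_λ(X,Y) / ∏_k (a_k)_{b_n}`,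
where `λ_j = b_n - b_j + j - n` (so `λ_j + n - j = b_n - b_j`), `x_i = a_i - b_n + 1`,
`y_j = 1 - j`, and the double Schur function is
`S_λ(X,Y) = det((x_i|Y)_{λ_j+n-j}) / Δ(X)`.  In particular the determinant is positive. -/
theorem stmt9 (n : ℕ) (a : Fin (n + 1) → ℝ) (b : Fin (n + 1) → ℕ)
    (ha : StrictAnti a) (hb : StrictMono b) (hbpos : ∀ j, 0 < b j)
    (hab : ∀ i, ((b (Fin.last n) : ℝ)) - 1 < a i) :
    (Matrix.of fun i j : Fin (n + 1) => (ffact (a i) (b j))⁻¹).det =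
      vand (fun i => a i - (b (Fin.last n) : ℝ) + 1) *
        ((Matrix.of fun i j : Fin (n + 1) =>
            pochY (a i - (b (Fin.last n) : ℝ) + 1) (fun m => 1 - (m : ℝ))
              (b (Fin.last n) - b j)).det /
          vand (fun i => a i - (b (Fin.last n) : ℝ) + 1)) /
        (∏ k : Fin (n + 1), ffact (a k) (b (Fin.last n))) ∧
    0 < (Matrix.of fun i j : Fin (n + 1) => (ffact (a i) (b j))⁻¹).det := by
  set bl := b (Fin.last n) with hbl
  set X : Fin (n+1) → ℝ := fun i => a i - (bl : ℝ) + 1 with hX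
  set k : Fin (n+1) → ℕ := fun j => bl - b j with hkdef
  have hXpos : ∀ i, 0 < X i := by
    intro i; rw [hX]; have := hab i; simp only; linarith
  have hXanti : StrictAnti X := by
    intro i j hij
    simp only [hX]
    have := ha hij
    linarith
  have hble : ∀ j, b j ≤ bl := fun j => hb.monotone (Fin.le_last j)
  -- the pochY matrix is the rising factorial matrix
  have hMrw : (Matrix.of fun i j : Fin (n+1) =>
      pochY (a i - (bl : ℝ) + 1) (fun m => 1 - (m : ℝ)) (bl - b j))
      = Matrix.of fun i j => ∏ m ∈ Finset.range (k j), (X i + (m:ℝ)) := by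
    funext i j
    show pochY (a i - (bl:ℝ) + 1) (fun m => 1 - (m:ℝ)) (bl - b j) = _
    unfold pochY
    refine Finset.prod_congr rfl fun m _ => ?_
    show a i - (bl:ℝ) + 1 - (1 - ((m+1 : ℕ) : ℝ)) = X i + (m:ℝ)
    rw [hX]
    push_cast
    ring
  set M : Matrix (Fin (n+1)) (Fin (n+1)) ℝ :=
    Matrix.of fun i j => ∏ m ∈ Finset.range (k j), (X i + (m:ℝ)) with hM
  have hMdet_pos : 0 < M.det := by
    have hrev := Matrix.det_submatrix_equiv_self (Fin.revPerm : Equiv.Perm (Fin (n+1))) M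
    rw [← hrev]
    have heq : M.submatrix (Fin.revPerm : Equiv.Perm (Fin (n+1))) Fin.revPerm
        = Matrix.of fun i j => ∏ m ∈ Finset.range ((fun j => k (Fin.rev j)) j),
          ((fun i => X (Fin.rev i)) i + (m:ℝ)) := rfl
    rw [heq]
    apply rf_pos
    · intro i j hij
      exact hXanti (by rwa [Fin.rev_lt_rev])
    · intro i; exact hXpos _
    · intro i j hij
      have h1 : Fin.rev j < Fin.rev i := by rwa [Fin.rev_lt_rev]
      have h2 : b (Fin.rev j) < b (Fin.rev i) := hb h1
      have h3 := hble (Fin.rev i)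
      simp only [hkdef]
      omega
  -- entrywise factorization
  have hkey : ∀ i j, ffact (a i) bl
      = ffact (a i) (b j) * (∏ m ∈ Finset.range (k j), (X i + (m:ℝ))) := by
    intro i j
    unfold ffact
    rw [← Finset.prod_range_mul_prod_Ico (fun t => a i - (t:ℝ)) (hble j)]
    congr 1
    have hkj : k j = bl - b j := rfl
    refine Finset.prod_nbij' (fun t => bl - 1 - t) (fun m => bl - 1 - m) ?_ ?_ ?_ ?_ ?_
    · intro t ht
      rw [Finset.mem_Ico] at ht
      show bl - 1 - t ∈ Finset.range (k j)
      rw [Finset.mem_range, hkj]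
      have := hbpos (Fin.last n)
      omega
    · intro m hm
      rw [Finset.mem_range, hkj] at hm
      show bl - 1 - m ∈ Finset.Ico (b j) bl
      rw [Finset.mem_Ico]
      have := hbpos (Fin.last n)
      omega
    · intro t ht
      rw [Finset.mem_Ico] at ht
      show bl - 1 - (bl - 1 - t) = t
      have := hbpos (Fin.last n)
      omega
    · intro m hm
      rw [Finset.mem_range, hkj] at hm
      show bl - 1 - (bl - 1 - m) = m
      have := hbpos (Fin.last n)
      omega
    · intro t ht
      rw [Finset.mem_Ico] at ht
      show a i - (t:ℝ) = X i + ((bl - 1 - t : ℕ) : ℝ)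
      rw [hX]
      have hblpos := hbpos (Fin.last n)
      have hcast : ((bl - 1 - t : ℕ) : ℝ) = (bl:ℝ) - 1 - (t:ℝ) := by
        push_cast [Nat.cast_sub (by omega : t ≤ bl - 1), Nat.cast_sub (by omega : 1 ≤ bl)]
        ring
      rw [hcast]
      simp only
      ring
  have hffact_pos : ∀ i (c : ℕ), c ≤ bl → 0 < ffact (a i) c := by
    intro i c hc
    unfold ffact
    apply Finset.prod_pos
    intro t ht
    rw [Finset.mem_range] at ht
    have h1 : (t:ℝ) ≤ (bl:ℝ) - 1 := by
      have : (t:ℝ) + 1 ≤ (bl:ℝ) := by exact_mod_cast Nat.succ_le_of_lt (lt_of_lt_of_le ht hc)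
      linarith
    have := hab i
    linarith
  have hprod_pos : 0 < ∏ i : Fin (n+1), ffact (a i) bl :=
    Finset.prod_pos fun i _ => hffact_pos i bl (le_refl _)
  -- F = diagonal * M
  have hFdiag : (Matrix.of fun i j : Fin (n+1) => (ffact (a i) (b j))⁻¹)
      = Matrix.diagonal (fun i => (ffact (a i) bl)⁻¹) * M := by
    funext i j
    rw [Matrix.diagonal_mul]
    show (ffact (a i) (b j))⁻¹ = (ffact (a i) bl)⁻¹ * (∏ m ∈ Finset.range (k j), (X i + (m:ℝ)))
    have h1 := hkey i j
    have h2 : ffact (a i) (b j) ≠ 0 := ne_of_gt (hffact_pos i (b j) (hble j))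
    have h3 : ffact (a i) bl ≠ 0 := ne_of_gt (hffact_pos i bl (le_refl _))
    field_simp
    rw [h1]
  have hFdet : (Matrix.of fun i j : Fin (n+1) => (ffact (a i) (b j))⁻¹).det
      = (∏ i : Fin (n+1), ffact (a i) bl)⁻¹ * M.det := by
    rw [hFdiag, Matrix.det_mul, Matrix.det_diagonal, ← Finset.prod_inv_distrib]
  constructor
  · rw [hFdet, hMrw]
    have hvne : vand X ≠ 0 := by
      unfold vand
      rw [Finset.prod_ne_zero_iff]
      intro p hp
      rw [Finset.mem_filter] at hp
      have := hXanti hp.2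
      intro hcontra
      linarith
    rw [mul_comm (vand fun i => a i - (bl:ℝ) + 1), div_mul_cancel₀ _ (by rwa [← hX] : (vand fun i => a i - (bl:ℝ) + 1) ≠ 0)]
    rw [inv_mul_eq_div]
  · rw [hFdet]
    exact mul_pos (inv_pos.mpr hprod_pos) hMdet_pos
end

section
/- For a nonempty border strip θ of length ℓ = τ(q) + 1 - τ(p) (where p, q are its lower-left and upper-right squares) with r rows, the principal specialization of its skew Schur function satisfies: the value of t^{-1} s_θ(1^t) at t = 0 equals (-1)^{r-1} / ℓ. Equivalently, s_θ(1^t) = (-1)^{r-1} t/ℓ + O(t^2) as a polynomial in t. -/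
open Finset Polynomial

lemma hock (j : ℕ) : ∀ v : ℕ, ∑ w ∈ Finset.range (v+1), ((w+j).choose j) = (v+j+1).choose (j+1) := by
  intro v
  induction v with
  | zero => simp
  | succ v ih =>
    rw [Finset.sum_range_succ, ih]
    have h1 : v + 1 + j = v + j + 1 := by omega
    rw [h1, Nat.choose_succ_succ (v+j+1) j]
    simp only [Nat.succ_eq_add_one]
    omega

lemma prod_asc (j t : ℕ) : ∏ i ∈ Finset.range (j+1), (t + i) = t.ascFactorial (j+1) := by
  induction j with
  | zero => simp [Nat.ascFactorial]
  | succ j ih =>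
    rw [Finset.prod_range_succ, ih, mul_comm]
    exact (Nat.ascFactorial_succ).symm

noncomputable def binp (j : ℕ) : Polynomial ℚ :=
  Polynomial.C (((Nat.factorial (j+1) : ℚ))⁻¹) * ∏ i ∈ Finset.range (j+1), (Polynomial.X + Polynomial.C (i:ℚ))

lemma binp_eval_nat (j t : ℕ) : (binp j).eval (t:ℚ) = ((t+j).choose (j+1) : ℚ) := by
  have hnat : ∏ i ∈ Finset.range (j+1), (t + i) = Nat.factorial (j+1) * (t+j).choose (j+1) := by
    rw [prod_asc, Nat.ascFactorial_eq_factorial_mul_choose']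
    norm_num
  have h1 : (binp j).eval (t:ℚ) = ((Nat.factorial (j+1):ℚ))⁻¹ * ∏ i ∈ Finset.range (j+1), ((t:ℚ) + i) := by
    simp [binp, Polynomial.eval_prod]
  have h2 : ((∏ i ∈ Finset.range (j+1), (t + i) : ℕ) : ℚ) = ∏ i ∈ Finset.range (j+1), ((t:ℚ) + i) := by
    push_cast
    rfl
  rw [h1, ← h2, hnat]
  push_cast
  rw [inv_mul_cancel_left₀]
  positivity

lemma binp_eval_zero (j : ℕ) : (binp j).eval 0 = 0 := by
  have := binp_eval_nat j 0
  simpa using this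

lemma binp_coeff_one (j : ℕ) : (binp j).coeff 1 = ((j:ℚ)+1)⁻¹ := by
  have hsplit : ∏ i ∈ Finset.range (j+1), (Polynomial.X + Polynomial.C (i:ℚ))
      = Polynomial.X * ∏ i ∈ Finset.range j, (Polynomial.X + Polynomial.C ((i+1:ℕ):ℚ)) := by
    rw [Finset.prod_range_succ']
    simp [mul_comm]
  rw [binp, hsplit, Polynomial.coeff_C_mul]
  rw [show (1:ℕ) = 0 + 1 from rfl, Polynomial.coeff_X_mul]
  rw [Polynomial.coeff_zero_eq_eval_zero, Polynomial.eval_prod]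
  have : ∏ i ∈ Finset.range j, ((Polynomial.X + Polynomial.C ((i+1:ℕ):ℚ)).eval 0) = (Nat.factorial j : ℚ) := by
    simp only [Polynomial.eval_add, Polynomial.eval_X, Polynomial.eval_C, zero_add]
    rw [← Nat.cast_prod]
    congr 1
    exact Finset.prod_range_add_one_eq_factorial j
  rw [this, Nat.factorial_succ]
  have h0 : ((j:ℚ)+1) ≠ 0 := by positivity
  have h1 : ((Nat.factorial j : ℚ)) ≠ 0 := by positivity
  field_simp
  push_cast
  ring


def SValid {n t : ℕ} (up : Fin n → Bool) (T : Fin (n+1) → Fin t) : Prop :=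
  ∀ j : Fin n, if up j then T j.succ < T j.castSucc else T j.castSucc ≤ T j.succ

instance {n t : ℕ} (up : Fin n → Bool) : DecidablePred (fun T : Fin (n+1) → Fin t => SValid up T) := by
  intro T
  unfold SValid
  infer_instance

-- decomposition of validity
lemma svalid_succ {n t : ℕ} (up : Fin (n+1) → Bool) (T : Fin (n+2) → Fin t) :
    SValid up T ↔
    (SValid (fun j => up j.castSucc) (fun j => T j.castSucc) ∧
     (if up (Fin.last n) then T (Fin.last (n+1)) < T ((Fin.last n).castSucc)
      else T ((Fin.last n).castSucc) ≤ T (Fin.last (n+1)))) := by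
  constructor
  · intro h
    refine ⟨fun j => ?_, ?_⟩
    · have := h j.castSucc
      simp only [Fin.succ_castSucc] at this
      simpa using this
    · have := h (Fin.last n)
      simpa [Fin.succ_last] using this
  · rintro ⟨h1, h2⟩ j
    refine Fin.lastCases ?_ ?_ j
    · simpa [Fin.succ_last] using h2
    · intro i
      have := h1 i
      simp only [Fin.succ_castSucc] at this ⊢
      simpa using this

lemma card_fiber {n t : ℕ} (up : Fin (n+1) → Bool) (v w : Fin t) :
    (Finset.univ.filter (fun T : Fin (n+2) → Fin t =>
        (SValid up T ∧ T (Fin.last (n+1)) = v) ∧ T ((Fin.last n).castSucc) = w)).card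
    = if (if up (Fin.last n) then v < w else w ≤ v) then
        (Finset.univ.filter (fun U : Fin (n+1) → Fin t =>
          SValid (fun j => up j.castSucc) U ∧ U (Fin.last n) = w)).card
      else 0 := by
  by_cases hrel : (if up (Fin.last n) then v < w else w ≤ v)
  · rw [if_pos hrel]
    apply Finset.card_bij' (fun T _ => (fun j => T j.castSucc))
      (fun U _ => Fin.snoc U v)
    · -- left inverse
      intro T hT
      simp only [Finset.mem_filter, Finset.mem_univ, true_and] at hT
      obtain ⟨⟨hval, hlast⟩, hw⟩ := hT
      funext i
      refine Fin.lastCases ?_ ?_ i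
      · rw [Fin.snoc_last, hlast]
      · intro i; rw [Fin.snoc_castSucc]
    · -- right inverse
      intro U hU
      funext i
      simp [Fin.snoc_castSucc]
    · -- maps into small filter
      intro T hT
      simp only [Finset.mem_filter, Finset.mem_univ, true_and] at hT ⊢
      obtain ⟨⟨hval, hlast⟩, hw⟩ := hT
      rw [svalid_succ] at hval
      exact ⟨hval.1, hw⟩
    · -- snoc maps into big filter
      intro U hU
      simp only [Finset.mem_filter, Finset.mem_univ, true_and] at hU ⊢
      obtain ⟨hval, hlast⟩ := hU
      have hsc : ∀ i : Fin (n+1), (Fin.snoc U v : Fin (n+2) → Fin t) i.castSucc = U i := by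
        intro i
        simp [Fin.snoc_castSucc]
      have hl : (Fin.snoc U v : Fin (n+2) → Fin t) (Fin.last (n+1)) = v := by
        simp [Fin.snoc_last]
      refine ⟨⟨?_, hl⟩, ?_⟩
      · rw [svalid_succ]
        constructor
        · have heq : (fun j : Fin (n+1) => (Fin.snoc U v : Fin (n+2) → Fin t) j.castSucc) = U := by
            funext i; exact hsc i
          rw [heq]; exact hval
        · rw [hl, hsc (Fin.last n), hlast]
          exact hrel
      · rw [hsc (Fin.last n)]; exact hlast
  · rw [if_neg hrel, Finset.card_eq_zero, Finset.eq_empty_iff_forall_notMem]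
    intro T hT
    simp only [Finset.mem_filter, Finset.mem_univ, true_and] at hT
    obtain ⟨⟨hval, hlast⟩, hw⟩ := hT
    rw [svalid_succ] at hval
    apply hrel
    have := hval.2
    rw [hlast, hw] at this
    exact this

lemma ref (n : ℕ) (up : Fin n → Bool) :
    ∃ a : ℕ → Polynomial ℚ,
      (∀ (t : ℕ) (v : Fin t),
        ((Finset.univ.filter (fun T : Fin (n+1) → Fin t =>
          SValid up T ∧ T (Fin.last n) = v)).card : ℚ)
        = ∑ j ∈ Finset.range (n+1), (a j).eval (t:ℚ) * (((v:ℕ) + j).choose j : ℚ)) ∧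
      (a n).eval 0 = (-1 : ℚ) ^ (Finset.univ.filter (fun j : Fin n => up j = true)).card ∧
      (∀ j < n, (a j).eval 0 = 0) := by
  induction n with
  | zero =>
    refine ⟨fun j => if j = 0 then 1 else 0, ?_, ?_, ?_⟩
    · intro t v
      rw [Finset.sum_range_one]
      have hone : (Finset.univ.filter (fun T : Fin 1 → Fin t =>
          SValid up T ∧ T (Fin.last 0) = v)) = {fun _ => v} := by
        ext T
        simp only [Finset.mem_filter, Finset.mem_univ, true_and, Finset.mem_singleton]
        constructor
        · rintro ⟨-, h⟩
          funext i
          rw [Subsingleton.elim i (Fin.last 0)]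
          exact h
        · rintro rfl
          exact ⟨fun j => j.elim0, rfl⟩
      rw [hone]
      simp
    · simp
    · intro j hj
      exact absurd hj (Nat.not_lt_zero j)
  | succ n ih =>
    obtain ⟨a, ha1, ha2, ha3⟩ := ih (fun j => up j.castSucc)
    refine ⟨fun j => match j with
      | 0 => if up (Fin.last n) then ∑ i ∈ Finset.range (n+1), a i * binp i else 0
      | (i+1) => (if up (Fin.last n) then -1 else 1) * a i, ?_, ?_, ?_⟩
    · intro t v
      have htpos : 0 < t := v.pos
      -- fiberwise decomposition
      have hfib : (Finset.univ.filter (fun T : Fin (n+1+1) → Fin t =>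
            SValid up T ∧ T (Fin.last (n+1)) = v)).card
          = ∑ w : Fin t, (if (if up (Fin.last n) then v < w else w ≤ v) then
              (Finset.univ.filter (fun U : Fin (n+1) → Fin t =>
                SValid (fun j => up j.castSucc) U ∧ U (Fin.last n) = w)).card else 0) := by
        rw [Finset.card_eq_sum_card_fiberwise
          (f := fun T : Fin (n+1+1) → Fin t => T ((Fin.last n).castSucc))
          (t := Finset.univ) (fun _ _ => Finset.mem_univ _)]
        apply Finset.sum_congr rfl
        intro w _
        rw [Finset.filter_filter]
        exact card_fiber up v w
      have hcast : ((Finset.univ.filter (fun T : Fin (n+1+1) → Fin t =>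
            SValid up T ∧ T (Fin.last (n+1)) = v)).card : ℚ)
          = ∑ w : Fin t, (if (if up (Fin.last n) then v < w else w ≤ v) then
              ((Finset.univ.filter (fun U : Fin (n+1) → Fin t =>
                SValid (fun j => up j.castSucc) U ∧ U (Fin.last n) = w)).card : ℚ) else 0) := by
        rw [hfib]
        push_cast
        rfl
      rw [hcast]
      -- substitute induction hypothesis
      have hsub : ∀ w : Fin t, ((Finset.univ.filter (fun U : Fin (n+1) → Fin t =>
            SValid (fun j => up j.castSucc) U ∧ U (Fin.last n) = w)).card : ℚ)
          = ∑ j ∈ Finset.range (n+1), (a j).eval (t:ℚ) * (((w:ℕ) + j).choose j : ℚ) :=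
        fun w => ha1 t w
      calc ∑ w : Fin t, (if (if up (Fin.last n) then v < w else w ≤ v) then
              ((Finset.univ.filter (fun U : Fin (n+1) → Fin t =>
                SValid (fun j => up j.castSucc) U ∧ U (Fin.last n) = w)).card : ℚ) else 0)
          = ∑ w : Fin t, ∑ j ∈ Finset.range (n+1), (if (if up (Fin.last n) then v < w else w ≤ v) then
              (a j).eval (t:ℚ) * (((w:ℕ) + j).choose j : ℚ) else 0) := by
            apply Finset.sum_congr rfl
            intro w _
            rw [hsub w]
            split_ifs with h <;> simp
        _ = ∑ j ∈ Finset.range (n+1), (a j).eval (t:ℚ) *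
              (∑ w : Fin t, (if (if up (Fin.last n) then v < w else w ≤ v) then
                (((w:ℕ) + j).choose j : ℚ) else 0)) := by
            rw [Finset.sum_comm]
            apply Finset.sum_congr rfl
            intro j _
            rw [Finset.mul_sum]
            apply Finset.sum_congr rfl
            intro w _
            rw [mul_ite, mul_zero]
        _ = ∑ j ∈ Finset.range (n+1+1),
              ((fun j => match j with
                | 0 => if up (Fin.last n) then ∑ i ∈ Finset.range (n+1), a i * binp i else 0
                | (i+1) => (if up (Fin.last n) then -1 else 1) * a i) j).eval (t:ℚ)
              * (((v:ℕ) + j).choose j : ℚ) := by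
            have hSle : ∀ j : ℕ, (∑ w : Fin t, (if w ≤ v then (((w:ℕ) + j).choose j : ℚ) else 0))
                = (((v:ℕ) + j + 1).choose (j+1) : ℚ) := by
              intro j
              have h1 : (∑ w : Fin t, (if w ≤ v then (((w:ℕ) + j).choose j : ℚ) else 0))
                  = ∑ w ∈ Finset.range t, (if w ≤ (v:ℕ) then ((w + j).choose j : ℚ) else 0) := by
                rw [← Fin.sum_univ_eq_sum_range (fun w => if w ≤ (v:ℕ) then ((w + j).choose j : ℚ) else 0) t]
                refine Finset.sum_congr rfl fun w _ => ?_
                congr 1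
              have hss : Finset.range ((v:ℕ)+1) ⊆ Finset.range t :=
                Finset.range_subset_range.mpr v.isLt
              have hzero : ∀ x ∈ Finset.range t, x ∉ Finset.range ((v:ℕ)+1) →
                  (if x ≤ (v:ℕ) then ((x + j).choose j : ℚ) else 0) = 0 := by
                intro x hx hnx
                simp only [Finset.mem_range] at hnx
                rw [if_neg (fun h => hnx (Nat.lt_succ_of_le h))]
              have h2 : ∑ w ∈ Finset.range ((v:ℕ)+1), (if w ≤ (v:ℕ) then ((w + j).choose j : ℚ) else 0)
                  = ∑ w ∈ Finset.range ((v:ℕ)+1), ((w + j).choose j : ℚ) := by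
                apply Finset.sum_congr rfl
                intro w hw
                simp only [Finset.mem_range] at hw
                rw [if_pos (Nat.lt_succ_iff.mp hw)]
              rw [h1, ← Finset.sum_subset hss hzero, h2, ← Nat.cast_sum, hock j (v:ℕ)]
            have hSall : ∀ j : ℕ, (∑ w : Fin t, (((w:ℕ) + j).choose j : ℚ)) = ((t + j).choose (j+1) : ℚ) := by
              intro j
              rw [Fin.sum_univ_eq_sum_range (fun w => ((w + j).choose j : ℚ)) t, ← Nat.cast_sum]
              congr 1
              obtain ⟨t2, ht2⟩ : ∃ k, t = k + 1 := ⟨t - 1, (Nat.succ_pred_eq_of_pos htpos).symm⟩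
              subst ht2
              rw [hock j t2]
              congr 1
              exact Nat.add_right_comm t2 j 1
            cases hb : up (Fin.last n) with
            | false =>
              simp only [hb, Bool.false_eq_true, if_false]
              conv_rhs => rw [Finset.sum_range_succ']
              simp only [Polynomial.eval_mul, Polynomial.eval_one, Polynomial.eval_zero,
                zero_mul, one_mul, add_zero]
              apply Finset.sum_congr rfl
              intro j _
              rw [hSle j]
              simp only [Nat.add_assoc]
            | true =>
              have hpt : ∀ (w : Fin t) (X : ℚ), (if v < w then X else 0) = X - (if w ≤ v then X else 0) := by
                intro w X
                rcases le_or_gt w v with h | h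
                · rw [if_neg (not_lt.mpr h), if_pos h]; ring
                · rw [if_pos h, if_neg (not_le.mpr h)]; ring
              have hsum : ∀ j : ℕ, (∑ w : Fin t, (if v < w then (((w:ℕ)+j).choose j : ℚ) else 0))
                  = ((t + j).choose (j+1) : ℚ) - (((v:ℕ) + j + 1).choose (j+1) : ℚ) := by
                intro j
                have hptj : ∑ w : Fin t, (if v < w then (((w:ℕ)+j).choose j : ℚ) else 0)
                    = ∑ w : Fin t, ((((w:ℕ)+j).choose j : ℚ) - (if w ≤ v then (((w:ℕ)+j).choose j : ℚ) else 0)) := by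
                  apply Finset.sum_congr rfl
                  intro w _
                  exact hpt w _
                rw [hptj, Finset.sum_sub_distrib, hSall j, hSle j]
              have hR2 : (∑ i ∈ Finset.range (n+1), a i * binp i).eval (t:ℚ)
                  = ∑ i ∈ Finset.range (n+1), (a i).eval (t:ℚ) * ((t+i).choose (i+1) : ℚ) := by
                rw [Polynomial.eval_finset_sum]
                exact Finset.sum_congr rfl (fun i _ => by rw [Polynomial.eval_mul, binp_eval_nat])
              have hL : ∑ j ∈ Finset.range (n+1), (a j).eval (t:ℚ) *
                    (∑ w : Fin t, (if v < w then (((w:ℕ)+j).choose j : ℚ) else 0))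
                  = (∑ j ∈ Finset.range (n+1), (a j).eval (t:ℚ) * ((t+j).choose (j+1) : ℚ))
                    - ∑ j ∈ Finset.range (n+1), (a j).eval (t:ℚ) * (((v:ℕ) + j + 1).choose (j+1) : ℚ) := by
                rw [← Finset.sum_sub_distrib]
                apply Finset.sum_congr rfl
                intro j _
                rw [hsum j, mul_sub]
              simp only [hb, if_true]
              conv_rhs => rw [Finset.sum_range_succ']
              rw [hL]
              simp only [Polynomial.eval_mul, Polynomial.eval_neg, Polynomial.eval_one,
                Nat.add_zero, Nat.choose_zero_right, Nat.cast_one, mul_one, hR2,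
                neg_mul, one_mul, ← Nat.add_assoc, Finset.sum_neg_distrib]
              ring
      rfl
    · -- coefficient a'_{n+1} at 0
      have hcard : (Finset.univ.filter (fun j : Fin (n+1) => up j = true)).card
          = (Finset.univ.filter (fun j : Fin n => up j.castSucc = true)).card
            + (if up (Fin.last n) then 1 else 0) := by
        rw [Finset.card_filter, Finset.card_filter, Fin.sum_univ_castSucc]
      show ((if up (Fin.last n) then (-1:Polynomial ℚ) else 1) * a n).eval 0 = _
      rw [Polynomial.eval_mul, ha2, hcard, pow_add]
      cases hb : up (Fin.last n)
      · simp [hb]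
      · simp [hb]
    · intro j hj
      cases j with
      | zero =>
        show (if up (Fin.last n) then ∑ i ∈ Finset.range (n+1), a i * binp i else 0).eval 0 = 0
        split_ifs
        · rw [Polynomial.eval_finset_sum]
          apply Finset.sum_eq_zero
          intro i _
          rw [Polynomial.eval_mul, binp_eval_zero, mul_zero]
        · simp
      | succ i =>
        show ((if up (Fin.last n) then (-1:Polynomial ℚ) else 1) * a i).eval 0 = 0
        rw [Polynomial.eval_mul, ha3 i (by omega), mul_zero]

lemma total (n : ℕ) (up : Fin n → Bool) :
    ∃ p : Polynomial ℚ,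
      (∀ t : ℕ, p.eval (t:ℚ)
        = ((Finset.univ.filter (fun T : Fin (n+1) → Fin t => SValid up T)).card : ℚ)) ∧
      p.coeff 0 = 0 ∧
      p.coeff 1 = (-1:ℚ) ^ (Finset.univ.filter (fun j : Fin n => up j = true)).card / ((n:ℚ)+1) := by
  obtain ⟨a, ha1, ha2, ha3⟩ := ref n up
  refine ⟨∑ j ∈ Finset.range (n+1), a j * binp j, ?_, ?_, ?_⟩
  · intro t
    have heval : (∑ j ∈ Finset.range (n+1), a j * binp j).eval (t:ℚ)
        = ∑ j ∈ Finset.range (n+1), (a j).eval (t:ℚ) * ((t+j).choose (j+1) : ℚ) := by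
      rw [Polynomial.eval_finset_sum]
      exact Finset.sum_congr rfl fun j _ => by rw [Polynomial.eval_mul, binp_eval_nat]
    rw [heval]
    rcases Nat.eq_zero_or_pos t with rfl | htpos
    · haveI : IsEmpty (Fin (n+1) → Fin 0) := ⟨fun T => (T 0).elim0⟩
      have hc : (Finset.univ.filter (fun T : Fin (n+1) → Fin 0 => SValid up T)).card = 0 := by
        rw [Finset.univ_eq_empty, Finset.filter_empty, Finset.card_empty]
      rw [hc]
      rw [Finset.sum_eq_zero]
      · simp
      · intro j _
        have : (0 + j).choose (j+1) = 0 := Nat.choose_eq_zero_of_lt (by omega)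
        rw [this]
        simp
    · have hfib : (Finset.univ.filter (fun T : Fin (n+1) → Fin t => SValid up T)).card
          = ∑ v : Fin t, (Finset.univ.filter (fun T : Fin (n+1) → Fin t =>
              SValid up T ∧ T (Fin.last n) = v)).card := by
        rw [Finset.card_eq_sum_card_fiberwise
          (f := fun T : Fin (n+1) → Fin t => T (Fin.last n))
          (t := Finset.univ) (fun _ _ => Finset.mem_univ _)]
        apply Finset.sum_congr rfl
        intro v _
        rw [Finset.filter_filter]
      have hsw : ((Finset.univ.filter (fun T : Fin (n+1) → Fin t => SValid up T)).card : ℚ)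
          = ∑ j ∈ Finset.range (n+1), (a j).eval (t:ℚ) * (∑ v : Fin t, (((v:ℕ) + j).choose j : ℚ)) := by
        rw [hfib]
        push_cast
        rw [Finset.sum_congr rfl (fun v _ => ha1 t v), Finset.sum_comm]
        exact Finset.sum_congr rfl fun j _ => (Finset.mul_sum _ _ _).symm
      rw [hsw]
      apply Finset.sum_congr rfl
      intro j _
      congr 1
      rw [Fin.sum_univ_eq_sum_range (fun w => ((w + j).choose j : ℚ)) t, ← Nat.cast_sum]
      congr 1
      obtain ⟨t2, ht2⟩ : ∃ k, t = k + 1 := ⟨t - 1, (Nat.succ_pred_eq_of_pos htpos).symm⟩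
      subst ht2
      rw [hock j t2]
      congr 1
      exact (Nat.add_right_comm t2 j 1).symm
  · rw [Polynomial.coeff_zero_eq_eval_zero, Polynomial.eval_finset_sum]
    apply Finset.sum_eq_zero
    intro j _
    rw [Polynomial.eval_mul, binp_eval_zero, mul_zero]
  · rw [Polynomial.finset_sum_coeff]
    have hterm : ∀ j ∈ Finset.range (n+1), (a j * binp j).coeff 1 = (a j).eval 0 * ((j:ℚ)+1)⁻¹ := by
      intro j _
      have hb0 : (binp j).coeff 0 = 0 := by
        rw [Polynomial.coeff_zero_eq_eval_zero, binp_eval_zero]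
      have ha0 : (a j).coeff 0 = (a j).eval 0 := Polynomial.coeff_zero_eq_eval_zero _
      simp [Polynomial.coeff_mul, Finset.Nat.antidiagonal_succ, hb0, ha0, binp_coeff_one,
        Prod.map, Finset.sum_pair (by norm_num : ((0:ℕ),(1:ℕ)) ≠ (1,0))]
    rw [Finset.sum_congr rfl hterm]
    rw [Finset.sum_eq_single_of_mem n (Finset.self_mem_range_succ n)
      (fun j hj hne => by rw [ha3 j (by simp only [Finset.mem_range] at hj; omega), zero_mul])]
    rw [ha2, div_eq_mul_inv]

def upOf {m : ℕ} (c : Fin (m+1) → ℕ × ℕ) : Fin m → Bool :=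
  fun j => decide ((c j.succ).2 = (c j.castSucc).2)

section Geom

variable {m : ℕ} {c : Fin (m + 1) → ℕ × ℕ}
variable (hstep : ∀ k : Fin m,
      c k.succ = ((c k.castSucc).1, (c k.castSucc).2 + 1) ∨
      (0 < (c k.castSucc).1 ∧ c k.succ = ((c k.castSucc).1 - 1, (c k.castSucc).2)))

include hstep

lemma stepfacts : ∀ k : Fin m,
    (upOf c k = true → (c k.succ).1 + 1 = (c k.castSucc).1 ∧ (c k.succ).2 = (c k.castSucc).2) ∧
    (upOf c k = false → (c k.succ).1 = (c k.castSucc).1 ∧ (c k.succ).2 = (c k.castSucc).2 + 1) := by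
  intro k
  rcases hstep k with h | ⟨hpos, h⟩
  · constructor
    · intro ht
      have hc : (c k.succ).2 = (c k.castSucc).2 := of_decide_eq_true ht
      rw [h] at hc
      simp at hc
    · intro _
      rw [h]
      exact ⟨rfl, rfl⟩
  · constructor
    · intro _
      rw [h]
      exact ⟨Nat.succ_pred_eq_of_pos hpos, rfl⟩
    · intro hf
      exfalso
      have : upOf c k = true := decide_eq_true (by rw [h])
      rw [hf] at this
      exact Bool.false_ne_true this
end Geom

def UU {m : ℕ} (c : Fin (m+1) → ℕ × ℕ) : ℕ → ℕ :=
  fun b => (Finset.univ.filter (fun j : Fin m => (j:ℕ) < b ∧ upOf c j = true)).card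

lemma UU_zero {m : ℕ} (c : Fin (m+1) → ℕ × ℕ) : UU c 0 = 0 := by
  simp [UU]

lemma UU_succ {m : ℕ} (c : Fin (m+1) → ℕ × ℕ) (i : Fin m) :
    UU c ((i:ℕ)+1) = UU c i + (if upOf c i = true then 1 else 0) := by
  unfold UU
  rw [Finset.card_filter, Finset.card_filter]
  have key : ∀ j : Fin m, (if ((j:ℕ) < (i:ℕ)+1 ∧ upOf c j = true) then 1 else 0)
      = (if ((j:ℕ) < (i:ℕ) ∧ upOf c j = true) then 1 else 0)
        + (if j = i then (if upOf c j = true then 1 else 0) else 0) := by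
    intro j
    by_cases hj : j = i
    · subst hj
      simp [Nat.lt_succ_self, Nat.lt_irrefl]
    · have hv : (j:ℕ) ≠ (i:ℕ) := fun h => hj (Fin.ext h)
      rw [if_neg hj, add_zero]
      have hiff : ((j:ℕ) < (i:ℕ)+1) ↔ ((j:ℕ) < (i:ℕ)) := by omega
      simp only [hiff]
  rw [Finset.sum_congr rfl (fun j _ => key j), Finset.sum_add_distrib]
  congr 1
  rw [Finset.sum_ite_eq' Finset.univ i (fun j => if upOf c j = true then 1 else 0)]
  simp

lemma UU_mono {m : ℕ} (c : Fin (m+1) → ℕ × ℕ) {a b : ℕ} (hab : a ≤ b) : UU c a ≤ UU c b := by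
  apply Finset.card_le_card
  intro j hj
  simp only [Finset.mem_filter, Finset.mem_univ, true_and] at hj ⊢
  exact ⟨by omega, hj.2⟩

lemma UU_bound {m : ℕ} (c : Fin (m+1) → ℕ × ℕ) {a b : ℕ} (hab : a ≤ b) :
    UU c b ≤ UU c a + (b - a) := by
  have hsub : Finset.univ.filter (fun j : Fin m => (j:ℕ) < b ∧ upOf c j = true)
      ⊆ (Finset.univ.filter (fun j : Fin m => (j:ℕ) < a ∧ upOf c j = true))
        ∪ (Finset.univ.filter (fun j : Fin m => a ≤ (j:ℕ) ∧ (j:ℕ) < b)) := by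
    intro j hj
    simp only [Finset.mem_filter, Finset.mem_univ, true_and, Finset.mem_union] at hj ⊢
    by_cases hja : (j:ℕ) < a
    · exact Or.inl ⟨hja, hj.2⟩
    · exact Or.inr ⟨by omega, hj.1⟩
  have hG : (Finset.univ.filter (fun j : Fin m => a ≤ (j:ℕ) ∧ (j:ℕ) < b)).card ≤ b - a := by
    have hinj := Finset.card_le_card_of_injOn (fun j : Fin m => (j:ℕ))
      (s := Finset.univ.filter (fun j : Fin m => a ≤ (j:ℕ) ∧ (j:ℕ) < b))
      (t := Finset.Ico a b)
      (fun j hj => by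
        simp only [Finset.mem_coe, Finset.mem_filter, Finset.mem_univ, true_and] at hj
        simp only [Finset.mem_coe, Finset.mem_Ico]
        exact hj)
      (fun x _ y _ h => Fin.val_injective h)
    simpa [Nat.card_Ico] using hinj
  have := Finset.card_le_card hsub
  have := Finset.card_union_le
    (Finset.univ.filter (fun j : Fin m => (j:ℕ) < a ∧ upOf c j = true))
    (Finset.univ.filter (fun j : Fin m => a ≤ (j:ℕ) ∧ (j:ℕ) < b))
  unfold UU
  omega

lemma UU_last {m : ℕ} (c : Fin (m+1) → ℕ × ℕ) :
    UU c m = (Finset.univ.filter (fun j : Fin m => upOf c j = true)).card := by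
  unfold UU
  congr 1
  apply Finset.filter_congr
  intro j _
  simp [j.isLt]

section Geom2

variable {m : ℕ} {c : Fin (m + 1) → ℕ × ℕ}
variable (hstep : ∀ k : Fin m,
      c k.succ = ((c k.castSucc).1, (c k.castSucc).2 + 1) ∨
      (0 < (c k.castSucc).1 ∧ c k.succ = ((c k.castSucc).1 - 1, (c k.castSucc).2)))

include hstep

lemma L1 : ∀ k : Fin (m+1), (c k).1 + UU c (k:ℕ) = (c 0).1 ∧ (c k).2 + UU c (k:ℕ) = (c 0).2 + (k:ℕ) := by
  intro k
  induction k using Fin.induction with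
  | zero => simp [UU_zero]
  | succ i ih =>
    have hs := stepfacts hstep i
    have hU : UU c ((i:ℕ)+1) = UU c (i:ℕ) + (if upOf c i = true then 1 else 0) := UU_succ c i
    have hvs : ((i.succ : Fin (m+1)) : ℕ) = (i:ℕ) + 1 := Fin.val_succ i
    have hvc : ((i.castSucc : Fin (m+1)) : ℕ) = (i:ℕ) := Fin.coe_castSucc i
    rw [hvc] at ih
    rw [hvs, hU]
    cases hu : upOf c i with
    | false =>
      obtain ⟨e1, e2⟩ := hs.2 hu
      simp only [Bool.false_eq_true, if_false, add_zero]
      omega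
    | true =>
      obtain ⟨e1, e2⟩ := hs.1 hu
      simp only [if_true]
      omega

lemma L2 {k l : Fin (m+1)} (hkl : k ≤ l) : (c l).1 ≤ (c k).1 := by
  have h1 := (L1 hstep k).1
  have h2 := (L1 hstep l).1
  have := UU_mono c (a := (k:ℕ)) (b := (l:ℕ)) hkl
  omega

lemma L3 {k l : Fin (m+1)} (hkl : k ≤ l) : (c k).2 ≤ (c l).2 := by
  have h1 := (L1 hstep k).2
  have h2 := (L1 hstep l).2
  have := UU_bound c (a := (k:ℕ)) (b := (l:ℕ)) hkl
  have hv : (k:ℕ) ≤ (l:ℕ) := hkl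
  omega

lemma L4 {k l : Fin (m+1)} (hr : (c k).1 = (c l).1) (hc2 : (c k).2 = (c l).2) : k = l := by
  have h1 := L1 hstep k
  have h2 := L1 hstep l
  apply Fin.ext
  omega

end Geom2

section Geom3

variable {m : ℕ} {c : Fin (m + 1) → ℕ × ℕ}
variable (hstep : ∀ k : Fin m,
      c k.succ = ((c k.castSucc).1, (c k.castSucc).2 + 1) ∨
      (0 < (c k.castSucc).1 ∧ c k.succ = ((c k.castSucc).1 - 1, (c k.castSucc).2)))

include hstep

lemma chain1 {t : ℕ} {T : Fin (m+1) → Fin t} (hT : SValid (upOf c) T) :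
    ∀ l k : Fin (m+1), k ≤ l → (c l).1 = (c k).1 → T k ≤ T l := by
  intro l
  induction l using Fin.induction with
  | zero =>
    intro k hk _
    have : k = 0 := Fin.le_zero_iff.mp hk
    subst this
    exact le_refl _
  | succ i ih =>
    intro k hk hrow
    by_cases hki : k = i.succ
    · subst hki; exact le_refl _
    · have hklt : (k:ℕ) < (i:ℕ) + 1 := by
        have h := lt_of_le_of_ne hk hki
        simpa [Fin.lt_def, Fin.val_succ] using h
      have hk' : k ≤ i.castSucc := by
        rw [Fin.le_def, Fin.coe_castSucc]; omega
      have hs := stepfacts hstep i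
      have hanti1 : (c i.castSucc).1 ≤ (c k).1 := L2 hstep hk'
      have hanti2 : (c i.succ).1 ≤ (c i.castSucc).1 := L2 hstep (Fin.castSucc_lt_succ : i.castSucc < i.succ).le
      cases hu : upOf c i with
      | true =>
        obtain ⟨e1, _⟩ := hs.1 hu
        exfalso; omega
      | false =>
        obtain ⟨e1, _⟩ := hs.2 hu
        have hrow' : (c i.castSucc).1 = (c k).1 := by omega
        have h1 : T k ≤ T i.castSucc := ih k hk' hrow'
        have h2 : T i.castSucc ≤ T i.succ := by simpa [hu] using hT i
        exact le_trans h1 h2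

lemma chain2 {t : ℕ} {T : Fin (m+1) → Fin t} (hT : SValid (upOf c) T) :
    ∀ l k : Fin (m+1), k ≤ l → k ≠ l → (c l).2 = (c k).2 → T l < T k := by
  intro l
  induction l using Fin.induction with
  | zero =>
    intro k hk hne _
    exact absurd (Fin.le_zero_iff.mp hk) hne
  | succ i ih =>
    intro k hk hne hcol
    have hklt : (k:ℕ) < (i:ℕ) + 1 := by
      have h := lt_of_le_of_ne hk (fun h => hne h)
      simpa [Fin.lt_def, Fin.val_succ] using h
    have hk' : k ≤ i.castSucc := by
      rw [Fin.le_def, Fin.coe_castSucc]; omega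
    have hs := stepfacts hstep i
    have hmono1 : (c k).2 ≤ (c i.castSucc).2 := L3 hstep hk'
    have hmono2 : (c i.castSucc).2 ≤ (c i.succ).2 := L3 hstep (Fin.castSucc_lt_succ : i.castSucc < i.succ).le
    cases hu : upOf c i with
    | false =>
      obtain ⟨_, e2⟩ := hs.2 hu
      exfalso; omega
    | true =>
      obtain ⟨_, e2⟩ := hs.1 hu
      have hstep2 : T i.succ < T i.castSucc := by simpa [hu] using hT i
      by_cases hki : k = i.castSucc
      · subst hki
        exact hstep2
      · have hcol' : (c i.castSucc).2 = (c k).2 := by omega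
        exact lt_trans hstep2 (ih k hk' hki hcol')

lemma pathIVT : ∀ (k : Fin (m+1)) (x : ℕ), (c k).1 ≤ x → x ≤ (c 0).1 →
    ∃ k' : Fin (m+1), (c k').1 = x := by
  intro k
  induction k using Fin.induction with
  | zero => intro x h1 h2; exact ⟨0, by omega⟩
  | succ i ih =>
    intro x h1 h2
    by_cases hx : (c i.castSucc).1 ≤ x
    · exact ih x hx h2
    · have hs := stepfacts hstep i
      cases hu : upOf c i with
      | false =>
        obtain ⟨e1, _⟩ := hs.2 hu
        exact ih x (by omega) h2
      | true =>
        obtain ⟨e1, _⟩ := hs.1 hu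
        exact ⟨i.succ, by omega⟩

end Geom3

/-- For a nonempty border strip `θ` of length `ℓ = m + 1` (encoded as a sequence of
cells going from the lower-left square to the upper-right square, each step moving
one square to the right or one square up) with `r` rows, the principal specialization
`s_θ(1^t)` (the number of semistandard tableaux of shape `θ` with entries in
`{1,…,t}`) is a polynomial in `t` with constant coefficient `0` and linear
coefficient `(-1)^(r-1) / ℓ`; i.e. `s_θ(1^t) = (-1)^(r-1) t / ℓ + O(t²)`. -/
theorem stmt15 (m : ℕ) (c : Fin (m + 1) → ℕ × ℕ)
    (hstep : ∀ k : Fin m,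
      c k.succ = ((c k.castSucc).1, (c k.castSucc).2 + 1) ∨
      (0 < (c k.castSucc).1 ∧ c k.succ = ((c k.castSucc).1 - 1, (c k.castSucc).2))) :
    ∃ p : Polynomial ℚ,
      (∀ t : ℕ, p.eval (t : ℚ) =
        ((Finset.univ.filter (fun T : Fin (m + 1) → Fin t =>
            (∀ k l, (c k).1 = (c l).1 → (c k).2 ≤ (c l).2 → T k ≤ T l) ∧
            (∀ k l, (c k).2 = (c l).2 → (c k).1 < (c l).1 → T k < T l))).card : ℚ)) ∧
      p.coeff 0 = 0 ∧
      p.coeff 1 =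
        (-1 : ℚ) ^ ((Finset.univ.image fun k => (c k).1).card - 1) / (m + 1) := by
  obtain ⟨p, hp, h0, h1⟩ := total m (upOf c)
  have hiff : ∀ (t : ℕ) (T : Fin (m+1) → Fin t),
      ((∀ k l, (c k).1 = (c l).1 → (c k).2 ≤ (c l).2 → T k ≤ T l) ∧
       (∀ k l, (c k).2 = (c l).2 → (c k).1 < (c l).1 → T k < T l))
      ↔ SValid (upOf c) T := by
    intro t T
    constructor
    · rintro ⟨hg1, hg2⟩ j
      have hs := stepfacts hstep j
      cases hu : upOf c j with
      | false =>
        obtain ⟨e1, e2⟩ := hs.2 hu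
        simp only [Bool.false_eq_true, if_false]
        exact hg1 j.castSucc j.succ e1.symm (by omega)
      | true =>
        obtain ⟨e1, e2⟩ := hs.1 hu
        simp only [if_true]
        exact hg2 j.succ j.castSucc e2 (by omega)
    · intro hv
      constructor
      · intro k l hr hc2
        rcases le_or_gt k l with hkl | hlk
        · exact chain1 hstep hv l k hkl hr.symm
        · have hc3 : (c l).2 ≤ (c k).2 := L3 hstep hlk.le
          have hkeq : k = l := L4 hstep hr (le_antisymm hc2 hc3)
          exact (congrArg T hkeq).le
      · intro k l hc2 hr
        have hlk : l < k := by
          by_contra h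
          push_neg at h
          have := L2 hstep h
          omega
        refine chain2 hstep hv k l hlk.le ?_ hc2
        intro h
        rw [h] at hr
        omega
  refine ⟨p, ?_, h0, ?_⟩
  · intro t
    have hfeq : (Finset.univ.filter (fun T : Fin (m+1) → Fin t => SValid (upOf c) T))
        = Finset.univ.filter (fun T : Fin (m + 1) → Fin t =>
            (∀ k l, (c k).1 = (c l).1 → (c k).2 ≤ (c l).2 → T k ≤ T l) ∧
            (∀ k l, (c k).2 = (c l).2 → (c k).1 < (c l).1 → T k < T l)) :=
      Finset.filter_congr (fun T _ => (hiff t T).symm)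
    rw [hp t, hfeq]
  · rw [h1]
    have himg : (Finset.univ.image fun k => (c k).1).card
        = (Finset.univ.filter (fun j : Fin m => upOf c j = true)).card + 1 := by
      have hicc : (Finset.univ.image fun k => (c k).1)
          = Finset.Icc ((c (Fin.last m)).1) ((c 0).1) := by
        ext x
        simp only [Finset.mem_image, Finset.mem_univ, true_and, Finset.mem_Icc]
        constructor
        · rintro ⟨k, rfl⟩
          exact ⟨L2 hstep (Fin.le_last k), L2 hstep (Fin.zero_le k)⟩
        · rintro ⟨hx1, hx2⟩
          exact pathIVT hstep (Fin.last m) x hx1 hx2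
      rw [hicc, Nat.card_Icc]
      have h1' := (L1 hstep (Fin.last m)).1
      have h2' := UU_last c
      have hlastval : ((Fin.last m : Fin (m+1)) : ℕ) = m := rfl
      rw [hlastval] at h1'
      omega
    rw [himg]
    norm_num
end
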